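/- arXiv:1901.03564 — 8 statements merged into one kernel-verified Lean document; each statement's English description precedes it below -/
import Mathlib

section
/- Let (Y,d) be a complete metric space, p ≥ 1, and γ : [0,T] → Y an absolutely continuous curve admitting an L^p upper bound, i.e. there is f ∈ L^p((0,T)) with d(γ_s, γ_t) ≤ ∫_t^s f(r) dr for all t ≤ s. Then for almost every t ∈ [0,T] the limit |γ'_t| := lim_{h→0} d(γ_{t+h}, γ_t)/|h| exists, defines a function in L^p((0,T)), and is the a.e.-least function f for which the above integral bound holds. -/
open MeasureTheory Filter Set Topology

lemma lebesgue_pt {g : ℝ → ℝ} (hg : Integrable g) :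
    ∀ᵐ x, Tendsto (fun h : ℝ => (∫ t in x..(x+h), g t) / h) (𝓝[≠] (0:ℝ)) (𝓝 (g x)) := by
  filter_upwards [IsUnifLocDoublingMeasure.ae_tendsto_average (μ := (volume : Measure ℝ))
    hg.locallyIntegrable 1] with x hx
  have δlim : Tendsto (fun h : ℝ => |h| / 2) (𝓝[≠] (0:ℝ)) (𝓝[>] 0) := by
    apply tendsto_nhdsWithin_of_tendsto_nhds_of_eventually_within
    · have : Tendsto (fun h : ℝ => |h| / 2) (𝓝 0) (𝓝 0) := by
        simpa using ((continuous_abs.tendsto (0:ℝ)).div_const 2)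
      exact this.mono_left nhdsWithin_le_nhds
    · filter_upwards [self_mem_nhdsWithin] with h (hh : h ≠ 0)
      exact mem_Ioi.2 (by positivity)
  have xmem : ∀ᶠ h : ℝ in 𝓝[≠] 0, x ∈ Metric.closedBall (x + h/2) (1 * (|h|/2)) := by
    filter_upwards with h
    simp [Real.dist_eq, abs_div, abs_sub_comm]
  have T := hx (fun h : ℝ => x + h/2) (fun h => |h|/2) δlim xmem
  apply T.congr'
  filter_upwards [self_mem_nhdsWithin] with h (hh : h ≠ 0)
  rw [Real.closedBall_eq_Icc, setAverage_eq]
  rcases lt_or_gt_of_ne hh with h0 | h0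
  · have habs : |h| = -h := abs_of_neg h0
    have hIcc : x + h/2 - |h|/2 = x + h ∧ x + h/2 + |h|/2 = x := by constructor <;> (rw [habs]; ring)
    rw [hIcc.1, hIcc.2]
    rw [Real.volume_real_Icc_of_le (by linarith), intervalIntegral.integral_symm,
      intervalIntegral.integral_of_le (by linarith), ← integral_Icc_eq_integral_Ioc]
    have : x - (x + h) = -h := by ring
    rw [this]
    simp only [smul_eq_mul]
    rw [inv_neg]; ring
  · have habs : |h| = h := abs_of_pos h0
    have h1 : x + h/2 - |h|/2 = x := by rw [habs]; ring
    have h2 : x + h/2 + |h|/2 = x + h := by rw [habs]; ring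
    rw [h1, h2, Real.volume_real_Icc_of_le (by linarith), intervalIntegral.integral_of_le (by linarith),
      ← integral_Icc_eq_integral_Ioc]
    have : x + h - x = h := by ring
    rw [this]
    simp [div_eq_inv_mul]

lemma lebesgue_pt' {g : ℝ → ℝ} (hg : Integrable g) (a : ℝ) :
    ∀ᵐ x, HasDerivAt (fun y => ∫ t in a..y, g t) (g x) x := by
  filter_upwards [lebesgue_pt hg] with x hx
  rw [hasDerivAt_iff_tendsto_slope]
  have hmap : Tendsto (fun y : ℝ => y - x) (𝓝[≠] x) (𝓝[≠] 0) := by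
    apply tendsto_nhdsWithin_of_tendsto_nhds_of_eventually_within
    · have : Tendsto (fun y : ℝ => y - x) (𝓝 x) (𝓝 (x - x)) :=
        (continuous_id.sub continuous_const).tendsto x
      simpa using this.mono_left nhdsWithin_le_nhds
    · filter_upwards [self_mem_nhdsWithin] with y (hy : y ≠ x)
      simpa [sub_eq_zero] using hy
  have := hx.comp hmap
  apply this.congr
  intro y
  simp only [Function.comp, slope_def_field]
  have hii : ∀ u v : ℝ, IntervalIntegrable g volume u v := fun u v => hg.intervalIntegrable
  rw [show x + (y - x) = y by ring, ← intervalIntegral.integral_add_adjacent_intervals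
    (hii a x) (hii x y)]
  simp [div_eq_inv_mul]

lemma mono_ideriv {m : ℝ → ℝ} (hm : Monotone m) (hc : Continuous m) {a b : ℝ} (hab : a ≤ b) :
    IntegrableOn (deriv m) (Ioc a b) ∧ ∫ x in Ioc a b, deriv m x ≤ m b - m a := by
  set μ := hm.stieltjesFunction.measure with hμ
  have hst : ∀ x, hm.stieltjesFunction x = m x := by
    intro x
    rw [hm.stieltjesFunction_eq, rightLim_eq_of_tendsto
      ((hc.tendsto x).mono_left nhdsWithin_le_nhds)]
  have hder : ∀ᵐ x, deriv m x = (μ.rnDeriv volume x).toReal := by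
    filter_upwards [hm.ae_hasDerivAt] with x hx using hx.deriv
  have hmeas : μ (Ioc a b) = ENNReal.ofReal (m b - m a) := by
    rw [hμ, StieltjesFunction.measure_Ioc, hst, hst]
  have hlint : ∫⁻ x in Ioc a b, μ.rnDeriv volume x ≤ ENNReal.ofReal (m b - m a) := by
    rw [← hmeas]; exact μ.setLIntegral_rnDeriv_le _
  have hint : IntegrableOn (fun x => (μ.rnDeriv volume x).toReal) (Ioc a b) := by
    exact integrable_toReal_of_lintegral_ne_top (μ.measurable_rnDeriv volume).aemeasurable.restrict
      (hlint.trans_lt ENNReal.ofReal_lt_top).ne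
  have heq : (deriv m) =ᵐ[volume.restrict (Ioc a b)] fun x => (μ.rnDeriv volume x).toReal :=
    ae_restrict_of_ae hder
  constructor
  · exact hint.congr heq.symm
  · rw [integral_congr_ae heq]
    calc ∫ x in Ioc a b, (μ.rnDeriv volume x).toReal
        = (∫⁻ x in Ioc a b, μ.rnDeriv volume x).toReal := by
          rw [integral_toReal (μ.measurable_rnDeriv volume).aemeasurable.restrict]
          exact ae_restrict_of_ae (Measure.rnDeriv_lt_top μ volume)
      _ ≤ m b - m a := by
          rcases le_or_gt (m b - m a) 0 with h | h
          · calc _ ≤ (ENNReal.ofReal (m b - m a)).toReal := ENNReal.toReal_mono ENNReal.ofReal_ne_top hlint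
              _ = 0 := by simp [ENNReal.ofReal_eq_zero.2 h]
              _ ≤ _ := by linarith [hm hab]
          · rw [← ENNReal.toReal_ofReal h.le]
            exact ENNReal.toReal_mono ENNReal.ofReal_ne_top hlint

lemma tendsto_slope_zero {g : ℝ → ℝ} {d x : ℝ} (hg : HasDerivAt g d x) :
    Tendsto (fun h : ℝ => (g (x+h) - g x)/h) (𝓝[≠] 0) (𝓝 d) := by
  have hmap : Tendsto (fun h : ℝ => x + h) (𝓝[≠] (0:ℝ)) (𝓝[≠] x) := by
    apply tendsto_nhdsWithin_of_tendsto_nhds_of_eventually_within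
    · have : Tendsto (fun h : ℝ => x + h) (𝓝 0) (𝓝 (x + 0)) :=
        (continuous_const.add continuous_id).tendsto 0
      simpa using this.mono_left nhdsWithin_le_nhds
    · filter_upwards [self_mem_nhdsWithin] with h (hh : h ≠ 0)
      simpa using hh
  have := (hasDerivAt_iff_tendsto_slope.1 hg).comp hmap
  apply this.congr
  intro h
  simp [Function.comp, slope_def_field]

lemma tendsto_slope_zero_abs {g : ℝ → ℝ} {d x : ℝ} (hg : HasDerivAt g d x) :
    Tendsto (fun h : ℝ => |g (x+h) - g x|/|h|) (𝓝[≠] 0) (𝓝 |d|) := by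
  have := (tendsto_slope_zero hg).abs
  apply this.congr
  intro h
  rw [abs_div]











lemma mydiv_le {a b c : ℝ} (h : a ≤ b) (hc : 0 ≤ c) : a / c ≤ b / c := by
  exact div_le_div_of_nonneg_right h hc

/-- **Metric speed of an absolutely continuous curve.**
If `γ : [0,T] → Y` is absolutely continuous with an `L^p` upper bound `f`
(i.e. `dist (γ s) (γ t) ≤ ∫_t^s f` for all `t ≤ s`), then for a.e. `t` the
limit `|γ'_t| = lim_{h→0} dist (γ (t+h)) (γ t) / |h|` exists, defines a
function in `L^p((0,T))`, and is the a.e.-least admissible `f`. -/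
theorem metric_speed_exists {Y : Type*} [MetricSpace Y] [CompleteSpace Y]
    (p : ℝ) (hp : 1 ≤ p) (T : ℝ) (hT : 0 < T) (γ : ℝ → Y) (f : ℝ → ℝ)
    (hf : MemLp f (ENNReal.ofReal p) (volume.restrict (Set.Ioo 0 T)))
    (hbound : ∀ t s, 0 ≤ t → t ≤ s → s ≤ T → dist (γ s) (γ t) ≤ ∫ r in t..s, f r) :
    ∃ ms : ℝ → ℝ,
      (∀ᵐ t ∂(volume.restrict (Set.Ioo 0 T)),
        Tendsto (fun h : ℝ => dist (γ (t + h)) (γ t) / |h|) (𝓝[≠] 0) (𝓝 (ms t))) ∧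
      MemLp ms (ENNReal.ofReal p) (volume.restrict (Set.Ioo 0 T)) ∧
      (∀ t s, 0 ≤ t → t ≤ s → s ≤ T → dist (γ s) (γ t) ≤ ∫ r in t..s, ms r) ∧
      (∀ g : ℝ → ℝ, IntegrableOn g (Set.Ioo 0 T) →
        (∀ t s, 0 ≤ t → t ≤ s → s ≤ T → dist (γ s) (γ t) ≤ ∫ r in t..s, g r) →
        ∀ᵐ t ∂(volume.restrict (Set.Ioo 0 T)), ms t ≤ g t) := by
  haveI hfin : IsFiniteMeasure (volume.restrict (Ioo (0:ℝ) T)) := by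
    constructor
    rw [Measure.restrict_apply_univ, Real.volume_Ioo]
    exact ENNReal.ofReal_lt_top
  -- integrability of f
  have hfint : IntegrableOn f (Ioo 0 T) := by
    have := hf.mono_exponent (p := 1) (ENNReal.one_le_ofReal.2 hp)
    exact memLp_one_iff_integrable.1 this
  -- the nonneg extension f₀
  set f₀ : ℝ → ℝ := (Ioo 0 T).indicator (fun r => |f r|) with hf₀def
  have hf₀0 : ∀ r, 0 ≤ f₀ r := fun r => by
    rw [hf₀def]; exact indicator_nonneg (fun x _ => abs_nonneg _) r
  have hf₀int : Integrable f₀ := by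
    rw [hf₀def]
    exact IntegrableOn.integrable_indicator hfint.abs measurableSet_Ioo
  -- the primitive F
  set F : ℝ → ℝ := fun y => ∫ r in (0:ℝ)..y, f₀ r with hFdef
  have hii : ∀ u v : ℝ, IntervalIntegrable f₀ volume u v := fun u v => hf₀int.intervalIntegrable
  have hFc : Continuous F := intervalIntegral.continuous_primitive hii 0
  have hFadd : ∀ t s : ℝ, F s - F t = ∫ r in t..s, f₀ r := by
    intro t s
    rw [hFdef]
    simp only
    rw [← intervalIntegral.integral_add_adjacent_intervals (hii 0 t) (hii t s)]
    ring
  have hFmono : Monotone F := by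
    intro t s hts
    have h0 : 0 ≤ ∫ r in t..s, f₀ r := intervalIntegral.integral_nonneg hts (fun u _ => hf₀0 u)
    have := hFadd t s
    linarith
  -- F vanishes left of 0 and is constant right of T
  have hFzero : ∀ t : ℝ, t ≤ 0 → F t = 0 := by
    intro t ht
    have hz : (∫ r in t..(0:ℝ), f₀ r) = 0 := by
      have he : EqOn f₀ 0 (uIcc t 0) := by
        intro x hx
        rw [uIcc_of_le ht] at hx
        have hnot : x ∉ Ioo 0 T := fun hc => absurd hx.2 (not_le.2 hc.1)
        simp [hf₀def, indicator_of_notMem hnot]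
      rw [intervalIntegral.integral_congr he]
      simp
    have h1 := hFadd t 0
    have hF0 : F 0 = 0 := by rw [hFdef]; simp
    linarith
  have hFconst : ∀ t : ℝ, T ≤ t → F t = F T := by
    intro t ht
    have : F t - F T = ∫ r in T..t, f₀ r := hFadd T t
    have hz : (∫ r in T..t, f₀ r) = 0 := by
      have he : EqOn f₀ 0 (uIcc T t) := by
        intro x hx
        rw [uIcc_of_le ht] at hx
        have : x ∉ Ioo 0 T := fun hc => absurd hx.1 (not_le.2 hc.2)
        simp [hf₀def, indicator_of_notMem this]
      rw [intervalIntegral.integral_congr he]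
      simp
    linarith
  -- the projection and extended curve
  set pr : ℝ → ℝ := fun t => max 0 (min t T) with hprdef
  set γ' : ℝ → Y := fun t => γ (pr t) with hγ'def
  have hpr_mem : ∀ t, pr t ∈ Icc 0 T := fun t =>
    ⟨le_max_left _ _, max_le (le_of_lt hT) (min_le_right _ _)⟩
  have hpr_mono : Monotone pr := fun a b hab =>
    max_le_max le_rfl (min_le_min hab le_rfl)
  have hpr_eq : ∀ t, t ∈ Icc 0 T → pr t = t := by
    intro t ht
    rw [hprdef]
    simp only
    rw [min_eq_left ht.2, max_eq_right ht.1]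
  have hγ'eq : ∀ t, t ∈ Icc 0 T → γ' t = γ t := fun t ht => by
    rw [hγ'def]; simp only [hpr_eq t ht]
  have hFpr : ∀ t, F (pr t) = F t := by
    intro t
    rcases le_or_gt t 0 with h | h
    · have hpt : pr t = 0 := by
        rw [hprdef]; simp only; rw [min_eq_left (h.trans hT.le), max_eq_left h]
      rw [hpt, hFzero t h, hFzero 0 le_rfl]
    · rcases le_or_gt t T with h2 | h2
      · rw [hpr_eq t ⟨h.le, h2⟩]
      · have hpt : pr t = T := by
          rw [hprdef]; simp only; rw [min_eq_right h2.le, max_eq_right hT.le]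
        rw [hpt, hFconst t h2.le]
  -- the global bound for γ'
  have hbb : ∀ t s : ℝ, t ≤ s → dist (γ' s) (γ' t) ≤ F s - F t := by
    intro t s hts
    have h1 : 0 ≤ pr t := (hpr_mem t).1
    have h2 : pr t ≤ pr s := hpr_mono hts
    have h3 : pr s ≤ T := (hpr_mem s).2
    have hb := hbound (pr t) (pr s) h1 h2 h3
    have hTne : ∀ᵐ x : ℝ, x ≠ T := by
      refine ae_iff.2 ?_
      have : {x : ℝ | ¬ x ≠ T} = {T} := by ext x; simp
      rw [this]
      simp
    have hsub : IntegrableOn f (Ioc (pr t) (pr s)) := by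
      apply hfint.mono_set_ae
      filter_upwards [hTne] with x hx (hmem : x ∈ Ioc (pr t) (pr s))
      exact ⟨lt_of_le_of_lt h1 hmem.1, lt_of_le_of_ne (hmem.2.trans h3) hx⟩
    have hmono : (∫ r in (pr t)..(pr s), f r) ≤ ∫ r in (pr t)..(pr s), f₀ r := by
      apply intervalIntegral.integral_mono_ae_restrict h2
        (by rw [intervalIntegrable_iff_integrableOn_Ioc_of_le h2]; exact hsub)
        (hii _ _)
      have : (Icc (pr t) (pr s) : Set ℝ) =ᵐ[volume] Ioc (pr t) (pr s) := by
        exact (Ioc_ae_eq_Icc (α := ℝ)).symm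
      rw [Measure.restrict_congr_set this]
      rw [Filter.EventuallyLE, ae_restrict_iff' measurableSet_Ioc]
      filter_upwards [hTne] with x hx hmem
      have hxm : x ∈ Ioo 0 T := ⟨lt_of_le_of_lt h1 hmem.1, lt_of_le_of_ne (hmem.2.trans h3) hx⟩
      rw [hf₀def]
      rw [indicator_of_mem hxm]
      exact le_abs_self _
    calc dist (γ' s) (γ' t) = dist (γ (pr s)) (γ (pr t)) := by rw [hγ'def]
      _ ≤ ∫ r in (pr t)..(pr s), f r := hb
      _ ≤ ∫ r in (pr t)..(pr s), f₀ r := hmono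
      _ = F (pr s) - F (pr t) := (hFadd _ _).symm
      _ = F s - F t := by rw [hFpr, hFpr]
  -- distance functions to rational points
  set g_ : ℚ → ℝ → ℝ := fun q y => dist (γ' y) (γ' (q:ℝ)) with hg_def
  have habs : ∀ (q : ℚ) (t s : ℝ), t ≤ s → |g_ q s - g_ q t| ≤ F s - F t := by
    intro q t s hts
    calc |g_ q s - g_ q t| ≤ dist (γ' s) (γ' t) := abs_dist_sub_le _ _ _
      _ ≤ F s - F t := hbb t s hts
  set m_ : ℚ → ℝ → ℝ := fun q y => F y - g_ q y with hm_def
  set n_ : ℚ → ℝ → ℝ := fun q y => F y + g_ q y with hn_def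
  have hm_mono : ∀ q, Monotone (m_ q) := by
    intro q a b hab
    have h1 := (abs_le.1 (habs q a b hab)).2
    simp only [hm_def]
    linarith
  have hn_mono : ∀ q, Monotone (n_ q) := by
    intro q a b hab
    have h1 := (abs_le.1 (habs q a b hab)).1
    simp only [hn_def]
    linarith
  have hγ'dist : ∀ a b : ℝ, dist (γ' a) (γ' b) ≤ |F a - F b| := by
    intro a b
    rcases le_total a b with h | h
    · rw [dist_comm]
      calc dist (γ' b) (γ' a) ≤ F b - F a := hbb a b h
        _ ≤ |F a - F b| := by rw [abs_sub_comm]; exact le_abs_self _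
    · calc dist (γ' a) (γ' b) ≤ F a - F b := hbb b a h
        _ ≤ |F a - F b| := le_abs_self _
  have hγ'cont : Continuous γ' := by
    rw [continuous_iff_continuousAt]
    intro a
    rw [ContinuousAt, tendsto_iff_dist_tendsto_zero]
    apply squeeze_zero (fun x => dist_nonneg) (fun x => hγ'dist x a)
    have : Tendsto (fun x => |F x - F a|) (𝓝 a) (𝓝 |F a - F a|) :=
      ((hFc.sub continuous_const).abs).tendsto a
    simpa using this
  have hg_cont : ∀ q, Continuous (g_ q) := fun q => hγ'cont.dist continuous_const
  -- the a.e. differentiability set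
  have hE : ∀ᵐ x, HasDerivAt F (f₀ x) x ∧ ∀ q : ℚ,
      HasDerivAt (g_ q) (deriv (g_ q) x) x ∧ |deriv (g_ q) x| ≤ f₀ x := by
    have hF' : ∀ᵐ x, HasDerivAt F (f₀ x) x := lebesgue_pt' hf₀int 0
    have hq : ∀ q : ℚ, ∀ᵐ x, (HasDerivAt (m_ q) (deriv (m_ q) x) x ∧ 0 ≤ deriv (m_ q) x)
        ∧ (HasDerivAt (n_ q) (deriv (n_ q) x) x ∧ 0 ≤ deriv (n_ q) x) := by
      intro q
      filter_upwards [(hm_mono q).ae_hasDerivAt, (hn_mono q).ae_hasDerivAt] with x h1 h2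
      refine ⟨⟨?_, ?_⟩, ?_, ?_⟩
      · rw [h1.deriv]; exact h1
      · rw [h1.deriv]; exact ENNReal.toReal_nonneg
      · rw [h2.deriv]; exact h2
      · rw [h2.deriv]; exact ENNReal.toReal_nonneg
    filter_upwards [hF', ae_all_iff.2 hq] with x hFx hqx
    refine ⟨hFx, fun q => ?_⟩
    obtain ⟨⟨hm1, hm2⟩, hn1, hn2⟩ := hqx q
    have hg1 : HasDerivAt (g_ q) (f₀ x - deriv (m_ q) x) x := by
      have h := hFx.sub hm1
      have heq : (fun y => F y - m_ q y) = g_ q := by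
        funext y; simp only [hm_def]; ring
      rw [← heq]; exact h
    have hgderiv : deriv (g_ q) x = f₀ x - deriv (m_ q) x := hg1.deriv
    have hn1' : HasDerivAt (n_ q) (f₀ x + (f₀ x - deriv (m_ q) x)) x := by
      have h := hFx.add hg1
      have heq : (fun y => F y + g_ q y) = n_ q := by funext y; simp only [hn_def]
      rw [← heq]; exact h
    have hnder : deriv (n_ q) x = f₀ x + (f₀ x - deriv (m_ q) x) := hn1'.deriv
    constructor
    · rw [hgderiv]; exact hg1
    · rw [hgderiv, abs_le]
      constructor <;> [linarith [hn2, hnder.symm.trans_le (le_of_eq rfl)]; linarith]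
  -- the metric speed
  classical
  set ms : ℝ → ℝ := fun x => (⨆ q : ℚ, ENNReal.ofReal |deriv (g_ q) x|).toReal with hmsdef
  have hms_meas : Measurable ms := by
    apply Measurable.ennreal_toReal
    exact Measurable.iSup (fun q => ((measurable_deriv (g_ q)).abs).ennreal_ofReal)
  have hms0 : ∀ x, 0 ≤ ms x := fun x => ENNReal.toReal_nonneg
  have key : ∀ x, (∀ q : ℚ, |deriv (g_ q) x| ≤ f₀ x) →
      ms x ≤ f₀ x ∧ (∀ q : ℚ, |deriv (g_ q) x| ≤ ms x) ∧
      ENNReal.ofReal (ms x) = ⨆ q : ℚ, ENNReal.ofReal |deriv (g_ q) x| := by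
    intro x hx
    have hsup_le : (⨆ q : ℚ, ENNReal.ofReal |deriv (g_ q) x|) ≤ ENNReal.ofReal (f₀ x) :=
      iSup_le fun q => ENNReal.ofReal_le_ofReal (hx q)
    have hne : (⨆ q : ℚ, ENNReal.ofReal |deriv (g_ q) x|) ≠ ⊤ :=
      (lt_of_le_of_lt hsup_le ENNReal.ofReal_lt_top).ne
    refine ⟨?_, ?_, ?_⟩
    · rw [hmsdef]
      exact ENNReal.toReal_le_of_le_ofReal (hf₀0 x) hsup_le
    · intro q
      rw [hmsdef]
      calc |deriv (g_ q) x| = (ENNReal.ofReal |deriv (g_ q) x|).toReal :=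
            (ENNReal.toReal_ofReal (abs_nonneg _)).symm
        _ ≤ _ := ENNReal.toReal_mono hne (le_iSup (fun q : ℚ => ENNReal.ofReal |deriv (g_ q) x|) q)
    · rw [hmsdef]
      exact ENNReal.ofReal_toReal hne
  have hms_int : Integrable ms := by
    apply Integrable.mono' hf₀int hms_meas.aestronglyMeasurable
    filter_upwards [hE] with x hx
    rw [Real.norm_eq_abs, abs_of_nonneg (hms0 x)]
    exact (key x (fun q => (hx.2 q).2)).1
  -- admissibility for each rational
  have hadmq : ∀ (q : ℚ) (t s : ℝ), t ≤ s → |g_ q s - g_ q t| ≤ ∫ r in t..s, ms r := by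
    intro q t s hts
    have hmd := mono_ideriv (hm_mono q) (hFc.sub (hg_cont q)) hts
    have hnd := mono_ideriv (hn_mono q) (hFc.add (hg_cont q)) hts
    have hmsIoc : IntegrableOn ms (Ioc t s) := hms_int.integrableOn
    have hf₀Ioc : IntegrableOn f₀ (Ioc t s) := hf₀int.integrableOn
    have hFeq : F s - F t = ∫ x in Ioc t s, f₀ x := by
      rw [hFadd t s, intervalIntegral.integral_of_le hts]
    have hintms : (∫ r in t..s, ms r) = ∫ x in Ioc t s, ms x :=
      intervalIntegral.integral_of_le hts
    have hmrel : ∀ᵐ x, f₀ x - deriv (m_ q) x ≤ ms x ∧ f₀ x - deriv (n_ q) x ≤ ms x := by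
      filter_upwards [hE] with x hx
      have hkx := key x (fun q' => (hx.2 q').2)
      have hFx := hx.1
      have hgx := (hx.2 q).1
      have hmx : deriv (m_ q) x = f₀ x - deriv (g_ q) x := by
        have h := hFx.sub hgx
        have heq : (fun y => F y - g_ q y) = m_ q := by funext y; simp only [hm_def]
        rw [← heq]
        exact h.deriv
      have hnx : deriv (n_ q) x = f₀ x + deriv (g_ q) x := by
        have h := hFx.add hgx
        have heq : (fun y => F y + g_ q y) = n_ q := by funext y; simp only [hn_def]
        rw [← heq]
        exact h.deriv
      have habsq := hkx.2.1 q
      constructor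
      · rw [hmx]
        have : deriv (g_ q) x ≤ |deriv (g_ q) x| := le_abs_self _
        linarith [habsq]
      · rw [hnx]
        have : -deriv (g_ q) x ≤ |deriv (g_ q) x| := neg_le_abs _
        linarith [habsq]
    have side1 : g_ q s - g_ q t ≤ ∫ x in Ioc t s, ms x := by
      have hg_split : g_ q s - g_ q t = (F s - F t) - (m_ q s - m_ q t) := by
        simp only [hm_def]; ring
      have h2 : (∫ x in Ioc t s, f₀ x) - (∫ x in Ioc t s, deriv (m_ q) x)
          = ∫ x in Ioc t s, (f₀ x - deriv (m_ q) x) := (integral_sub hf₀Ioc hmd.1).symm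
      have h3 : (∫ x in Ioc t s, (f₀ x - deriv (m_ q) x)) ≤ ∫ x in Ioc t s, ms x := by
        apply integral_mono_ae (hf₀Ioc.sub hmd.1) hmsIoc
        apply ae_restrict_of_ae
        filter_upwards [hmrel] with x hx using hx.1
      linarith [hmd.2, hFeq ▸ le_refl (F s - F t), h2, h3, hFeq]
    have side2 : g_ q t - g_ q s ≤ ∫ x in Ioc t s, ms x := by
      have hg_split : g_ q t - g_ q s = (F s - F t) - (n_ q s - n_ q t) := by
        simp only [hn_def]; ring
      have h2 : (∫ x in Ioc t s, f₀ x) - (∫ x in Ioc t s, deriv (n_ q) x)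
          = ∫ x in Ioc t s, (f₀ x - deriv (n_ q) x) := (integral_sub hf₀Ioc hnd.1).symm
      have h3 : (∫ x in Ioc t s, (f₀ x - deriv (n_ q) x)) ≤ ∫ x in Ioc t s, ms x := by
        apply integral_mono_ae (hf₀Ioc.sub hnd.1) hmsIoc
        apply ae_restrict_of_ae
        filter_upwards [hmrel] with x hx using hx.2
      linarith [hnd.2, h2, h3, hFeq]
    rw [hintms, abs_le]
    exact ⟨by linarith, side1⟩
  -- global admissibility
  have hadm : ∀ t s : ℝ, t ≤ s → dist (γ' s) (γ' t) ≤ ∫ r in t..s, ms r := by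
    intro t s hts
    apply le_of_forall_pos_le_add
    intro ε hε
    rcases Metric.continuousAt_iff.1 (hFc.continuousAt (x := s)) (ε/4) (by positivity)
      with ⟨δ, hδ, hball⟩
    obtain ⟨q, hq1, hq2⟩ := exists_rat_btwn (show s - δ < s by linarith)
    have hqs : dist (q : ℝ) s < δ := by
      rw [Real.dist_eq, abs_lt]; constructor <;> linarith
    have hFq : |F s - F (q:ℝ)| < ε / 4 := by
      have := hball hqs
      rw [Real.dist_eq] at this
      rw [abs_sub_comm]
      exact this
    have hdq : dist (γ' s) (γ' (q:ℝ)) < ε/4 := lt_of_le_of_lt (hγ'dist s q) hFq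
    calc dist (γ' s) (γ' t) ≤ dist (γ' s) (γ' (q:ℝ)) + dist (γ' (q:ℝ)) (γ' t) :=
          dist_triangle _ _ _
      _ = dist (γ' s) (γ' (q:ℝ)) + g_ q t := by rw [dist_comm (γ' (q:ℝ))]
      _ ≤ dist (γ' s) (γ' (q:ℝ)) + (|g_ q s - g_ q t| + g_ q s) := by
          have : g_ q t ≤ |g_ q s - g_ q t| + g_ q s := by
            have := neg_abs_le (g_ q s - g_ q t)
            linarith
          linarith
      _ ≤ (∫ r in t..s, ms r) + 2 * dist (γ' s) (γ' (q:ℝ)) := by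
          have h1 := hadmq q t s hts
          have h2 : g_ q s = dist (γ' s) (γ' (q:ℝ)) := rfl
          linarith [h1, h2.le]
      _ ≤ (∫ r in t..s, ms r) + ε := by linarith
  -- the primitive of ms
  set M : ℝ → ℝ := fun y => ∫ r in (0:ℝ)..y, ms r with hMdef
  have hMadd : ∀ a b : ℝ, M b - M a = ∫ r in a..b, ms r := by
    intro a b
    rw [hMdef]
    simp only
    rw [← intervalIntegral.integral_add_adjacent_intervals
      (hms_int.intervalIntegrable) (hms_int.intervalIntegrable)]
    ring
  have hM : ∀ᵐ x, HasDerivAt M (ms x) x := lebesgue_pt' hms_int 0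
  -- the tendsto statement for γ'
  have hTen' : ∀ᵐ t ∂(volume.restrict (Set.Ioo 0 T)),
      Tendsto (fun h : ℝ => dist (γ' (t + h)) (γ' t) / |h|) (𝓝[≠] 0) (𝓝 (ms t)) := by
    filter_upwards [ae_restrict_mem measurableSet_Ioo, ae_restrict_of_ae hM,
      ae_restrict_of_ae hE] with t ht hMt hEt
    have hkey := key t (fun q => (hEt.2 q).2)
    rw [Metric.tendsto_nhds]
    intro ε hε
    have hU : Tendsto (fun h : ℝ => |M (t+h) - M t|/|h|) (𝓝[≠] 0) (𝓝 |ms t|) :=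
      tendsto_slope_zero_abs hMt
    rw [abs_of_nonneg (hms0 t)] at hU
    have hUev : ∀ᶠ h : ℝ in 𝓝[≠] (0:ℝ), |M (t+h) - M t|/|h| < ms t + ε :=
      hU.eventually (gt_mem_nhds (by linarith))
    have hquotle : ∀ h : ℝ, dist (γ' (t+h)) (γ' t) / |h| ≤ |M (t+h) - M t| / |h| := by
      intro h
      apply mydiv_le _ (abs_nonneg h)
      rcases le_total 0 h with h0 | h0
      · calc dist (γ' (t+h)) (γ' t) ≤ ∫ r in t..(t+h), ms r := hadm t (t+h) (by linarith)
          _ = M (t+h) - M t := (hMadd t (t+h)).symm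
          _ ≤ |M (t+h) - M t| := le_abs_self _
      · rw [dist_comm]
        calc dist (γ' t) (γ' (t+h)) ≤ ∫ r in (t+h)..t, ms r := hadm (t+h) t (by linarith)
          _ = M t - M (t+h) := (hMadd (t+h) t).symm
          _ ≤ |M (t+h) - M t| := by rw [abs_sub_comm]; exact le_abs_self _
    have hLev : ∀ᶠ h : ℝ in 𝓝[≠] (0:ℝ), ms t - ε < dist (γ' (t+h)) (γ' t) / |h| := by
      rcases lt_or_ge (ms t - ε) 0 with hneg | hpos
      · filter_upwards with h
        exact lt_of_lt_of_le hneg (div_nonneg dist_nonneg (abs_nonneg _))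
      · have hmspos : 0 < ms t := by linarith
        have h1 : ENNReal.ofReal (ms t - ε) < ⨆ q : ℚ, ENNReal.ofReal |deriv (g_ q) t| := by
          rw [← hkey.2.2]
          exact (ENNReal.ofReal_lt_ofReal_iff hmspos).2 (by linarith)
        rw [lt_iSup_iff] at h1
        obtain ⟨q, hq⟩ := h1
        have hq' : ms t - ε < |deriv (g_ q) t| :=
          (ENNReal.ofReal_lt_ofReal_iff_of_nonneg hpos).1 hq
        have hS : Tendsto (fun h : ℝ => |g_ q (t+h) - g_ q t|/|h|) (𝓝[≠] 0)
            (𝓝 |deriv (g_ q) t|) := tendsto_slope_zero_abs (hEt.2 q).1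
        filter_upwards [hS.eventually (lt_mem_nhds hq')] with h hh
        calc ms t - ε < |g_ q (t+h) - g_ q t|/|h| := hh
          _ ≤ dist (γ' (t+h)) (γ' t) / |h| := mydiv_le (abs_dist_sub_le _ _ _) (abs_nonneg _)
    filter_upwards [hUev, hLev] with h h1 h2
    rw [Real.dist_eq, abs_sub_lt_iff]
    have := (hquotle h).trans_lt h1
    constructor <;> linarith
  refine ⟨ms, ?_, ?_, ?_, ?_⟩
  · -- the tendsto statement for γ
    filter_upwards [hTen', ae_restrict_mem measurableSet_Ioo] with t hten ht
    apply hten.congr'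
    have hδ : 0 < min t (T - t) := lt_min ht.1 (sub_pos.2 ht.2)
    have hev : ∀ᶠ h : ℝ in 𝓝 (0:ℝ), |h| < min t (T - t) := by
      have habs : Tendsto (fun h : ℝ => |h|) (𝓝 0) (𝓝 |(0:ℝ)|) := continuous_abs.tendsto 0
      rw [abs_zero] at habs
      exact habs.eventually (gt_mem_nhds hδ)
    filter_upwards [hev.filter_mono nhdsWithin_le_nhds] with h hh
    have hh1 : |h| < t := lt_of_lt_of_le hh (min_le_left _ _)
    have hh2 : |h| < T - t := lt_of_lt_of_le hh (min_le_right _ _)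
    have ha1 := abs_lt.1 hh1
    have ha2 := abs_lt.1 hh2
    have hmem : t + h ∈ Icc (0:ℝ) T := ⟨by linarith, by linarith⟩
    rw [hγ'eq (t+h) hmem, hγ'eq t ⟨ht.1.le, ht.2.le⟩]
  · -- Memℒp
    apply MemLp.of_le hf hms_meas.aestronglyMeasurable
    filter_upwards [ae_restrict_mem measurableSet_Ioo, ae_restrict_of_ae hE] with x hx hEx
    rw [Real.norm_eq_abs, Real.norm_eq_abs, abs_of_nonneg (hms0 x)]
    calc ms x ≤ f₀ x := (key x fun q => (hEx.2 q).2).1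
      _ = |f x| := by rw [hf₀def]; exact indicator_of_mem hx _
  · -- admissibility
    intro t s h0 hts hsT
    rw [← hγ'eq s ⟨h0.trans hts, hsT⟩, ← hγ'eq t ⟨h0, hts.trans hsT⟩]
    exact hadm t s hts
  · -- minimality
    intro g hgint hgb
    set g₁ : ℝ → ℝ := (Ioo 0 T).indicator g with hg₁def
    have hg₁int : Integrable g₁ := IntegrableOn.integrable_indicator hgint measurableSet_Ioo
    filter_upwards [ae_restrict_mem measurableSet_Ioo,
      ae_restrict_of_ae (lebesgue_pt hg₁int), hTen'] with t ht hL hQ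
    have hmono : 𝓝[>] (0:ℝ) ≤ 𝓝[≠] 0 :=
      nhdsWithin_mono 0 (fun h hh => ne_of_gt hh)
    have hA : Tendsto (fun h : ℝ => dist (γ' (t+h)) (γ' t) / |h|) (𝓝[>] 0) (𝓝 (ms t)) :=
      hQ.mono_left hmono
    have hB : Tendsto (fun h : ℝ => (∫ r in t..(t+h), g₁ r)/h) (𝓝[>] 0) (𝓝 (g₁ t)) :=
      hL.mono_left hmono
    have hg₁t : g₁ t = g t := indicator_of_mem ht g
    rw [hg₁t] at hB
    have hev : ∀ᶠ h : ℝ in 𝓝[>] (0:ℝ),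
        dist (γ' (t+h)) (γ' t)/|h| ≤ (∫ r in t..(t+h), g₁ r)/h := by
      have hev2 : ∀ᶠ h : ℝ in 𝓝[>] (0:ℝ), h < T - t :=
        eventually_nhdsWithin_of_eventually_nhds (gt_mem_nhds (sub_pos.2 ht.2))
      filter_upwards [hev2, self_mem_nhdsWithin] with h hh (h0 : h ∈ Ioi 0)
      have h0' : (0:ℝ) < h := h0
      have htT : t + h ≤ T := by linarith
      have heq : (∫ r in t..(t+h), g r) = ∫ r in t..(t+h), g₁ r := by
        apply intervalIntegral.integral_congr
        intro x hx
        rw [uIcc_of_le (by linarith)] at hx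
        have hxm : x ∈ Ioo 0 T := ⟨lt_of_lt_of_le ht.1 hx.1, lt_of_le_of_lt hx.2 (by linarith)⟩
        rw [hg₁def]
        exact (indicator_of_mem hxm g).symm
      rw [abs_of_pos h0', hγ'eq (t+h) ⟨by linarith [ht.1], htT⟩, hγ'eq t ⟨ht.1.le, ht.2.le⟩]
      apply mydiv_le _ h0'.le
      rw [← heq]
      exact hgb t (t+h) ht.1.le (by linarith) htT
    exact le_of_tendsto_of_tendsto hA hB hev
end

section
/- Let (Y,d) be a complete metric space, p ∈ (1,∞), T > 0 and γ ∈ L^p([0,T],Y). For ε ∈ (0,T) define E_{p,ε}(γ) := ∫_0^{T-ε} d(γ_{t+ε},γ_t)^p / ε^p dt. Then lim_{ε↓0} ε · (E_{p,ε}(γ))^{1/p} = 0. -/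
open MeasureTheory Filter Set Topology
open scoped ENNReal NNReal

/-- The `ε`-approximate `p`-energy of a curve `γ : [0,T] → Y`:
`E_{p,ε}(γ) = ∫_0^{T-ε} dist (γ (t+ε)) (γ t) ^ p / ε ^ p dt`. -/
noncomputable def dirEnergy {Y : Type*} [PseudoMetricSpace Y] (p T ε : ℝ) (γ : ℝ → Y) : ℝ :=
  ∫ t in Set.Ioc 0 (T - ε), dist (γ (t + ε)) (γ t) ^ p / ε ^ p

/-- For `γ ∈ L^p([0,T],Y)` (Borel essentially separably valued with
`∫ dist (γ t, y0)^p dt < ∞`), one has `ε · E_{p,ε}(γ)^{1/p} → 0` as `ε ↓ 0`. -/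
theorem eps_energy_to_zero {Y : Type*} [MetricSpace Y] [CompleteSpace Y]
    (p : ℝ) (hp : 1 < p) (T : ℝ) (hT : 0 < T) (γ : ℝ → Y) (y0 : Y)
    (hmeas : AEStronglyMeasurable γ (volume.restrict (Set.Icc 0 T)))
    (hLp : IntegrableOn (fun t => dist (γ t) y0 ^ p) (Set.Icc 0 T)) :
    Tendsto (fun ε : ℝ => ε * (dirEnergy p T ε γ) ^ (1 / p))
      (𝓝[Set.Ioo 0 T] 0) (𝓝 0) := by
  borelize Y
  have hp0 : (0:ℝ) < p := lt_trans one_pos hp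
  set p' : ℝ≥0∞ := ENNReal.ofReal p with hp'def
  haveI : Fact (1 ≤ p') := ⟨by simpa [hp'def] using ENNReal.one_le_ofReal.mpr hp.le⟩
  have hp'top : p' ≠ ∞ := ENNReal.ofReal_ne_top
  have hp'0 : p' ≠ 0 := by simp [hp'def, hp0]
  -- measurable version of γ
  set g : ℝ → Y := hmeas.mk γ with hg_def
  have hg : StronglyMeasurable g := hmeas.stronglyMeasurable_mk
  have hγg : ∀ᵐ t ∂(volume.restrict (Set.Icc 0 T)), γ t = g t := hmeas.ae_eq_mk
  -- the Kuratowski embedding of the (separable) essential range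
  set S := (range g ∪ {y0} : Set Y) with hS_def
  haveI : TopologicalSpace.SeparableSpace S := hg.separableSpace_range_union_singleton
  set g₀ : ℝ → S := fun t => ⟨g t, Or.inl (mem_range_self t)⟩ with hg₀_def
  set y₁ : S := ⟨y0, Or.inr rfl⟩ with hy₁_def
  have hg₀ : StronglyMeasurable g₀ := by
    rw [stronglyMeasurable_iff_measurable_separable]
    refine ⟨hg.measurable.subtype_mk, ?_⟩
    exact (TopologicalSpace.IsSeparable.of_separableSpace (univ : Set ↑S)).mono (subset_univ _)
  set K : S → lp (fun _ : ℕ => ℝ) ∞ := kuratowskiEmbedding S with hK_def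
  have hK : Isometry K := kuratowskiEmbedding.isometry S
  set F : ℝ → lp (fun _ : ℕ => ℝ) ∞ :=
    (Set.Icc 0 T).indicator (fun t => K (g₀ t) - K y₁) with hF_def
  have hFmeas : StronglyMeasurable F :=
    ((hK.continuous.comp_stronglyMeasurable hg₀).sub stronglyMeasurable_const).indicator
      measurableSet_Icc
  -- norms of F and of differences of F
  have hFdist : ∀ s t : ℝ, s ∈ Set.Icc 0 T → t ∈ Set.Icc 0 T →
      ‖F s - F t‖ = dist (g s) (g t) := by
    intro s t hs ht
    rw [hF_def]
    simp only [indicator_of_mem hs, indicator_of_mem ht, sub_sub_sub_cancel_right]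
    rw [← dist_eq_norm, hK.dist_eq, Subtype.dist_eq]
  have hFnorm : ∀ t : ℝ, (‖F t‖₊ : ℝ≥0∞) ^ p
      = (Set.Icc 0 T).indicator (fun t => ENNReal.ofReal (dist (g t) y0 ^ p)) t := by
    intro t
    by_cases ht : t ∈ Set.Icc 0 T
    · rw [indicator_of_mem ht]
      have h1 : ‖F t‖ = dist (g t) y0 := by
        rw [hF_def]
        simp only [indicator_of_mem ht]
        rw [← dist_eq_norm, hK.dist_eq, Subtype.dist_eq]
      rw [← enorm_eq_nnnorm, ← ofReal_norm, h1,
        ENNReal.ofReal_rpow_of_nonneg dist_nonneg hp0.le]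
    · rw [indicator_of_notMem ht, hF_def, indicator_of_notMem ht]
      simp [ENNReal.zero_rpow_of_pos hp0]
  -- F is in L^p
  have hFmem : MemLp F p' volume := by
    refine ⟨hFmeas.aestronglyMeasurable, ?_⟩
    rw [eLpNorm_eq_lintegral_rpow_enorm_toReal hp'0 hp'top, ENNReal.toReal_ofReal hp0.le]
    refine ENNReal.rpow_lt_top_of_nonneg (by positivity) ?_
    rw [← lt_top_iff_ne_top]
    calc ∫⁻ t, (‖F t‖₊ : ℝ≥0∞) ^ p
        = ∫⁻ t in Set.Icc 0 T, ENNReal.ofReal (dist (g t) y0 ^ p) := by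
          simp_rw [hFnorm]
          exact lintegral_indicator measurableSet_Icc _
      _ = ∫⁻ t in Set.Icc 0 T, ENNReal.ofReal (dist (γ t) y0 ^ p) := by
          refine lintegral_congr_ae ?_
          filter_upwards [hγg] with t ht
          rw [ht]
      _ < ∞ := by
          have := hLp.2
          refine lt_of_le_of_lt (lintegral_mono_ae ?_) this
          filter_upwards with t
          rw [← ofReal_norm]
          exact ENNReal.ofReal_le_ofReal (le_abs_self _)
  set FLp : Lp (lp (fun _ : ℕ => ℝ) ∞) p' volume := hFmem.toLp F with hFLp_def
  have hFLp_coe : ⇑FLp =ᵐ[volume] F := hFmem.coeFn_toLp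
  -- translations as continuous measure-preserving maps
  set τ : ℝ → C(ℝ, ℝ) := fun ε => ⟨fun x => x + ε, continuous_id.add continuous_const⟩ with hτ_def
  have hτmp : ∀ ε : ℝ, MeasurePreserving (τ ε) volume volume := fun ε =>
    measurePreserving_add_right volume ε
  have hτcont : Continuous τ := by
    apply ContinuousMap.continuous_of_continuous_uncurry
    exact continuous_snd.add continuous_fst
  set comp : ℝ → Lp (lp (fun _ : ℕ => ℝ) ∞) p' volume :=
    fun ε => Lp.compMeasurePreserving (τ ε) (hτmp ε) FLp with hcomp_def
  have hcomp0 : comp 0 = FLp := by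
    refine Lp.ext ?_
    refine (Lp.coeFn_compMeasurePreserving FLp (hτmp 0)).trans ?_
    have : ⇑FLp ∘ ⇑(τ 0) = ⇑FLp := by
      funext x
      simp [hτ_def]
    rw [this]
  have hcomp_tendsto : Tendsto comp (𝓝[Set.Ioo 0 T] 0) (𝓝 FLp) := by
    rw [← hcomp0]
    exact Tendsto.compMeasurePreservingLp tendsto_const_nhds
      ((hτcont.tendsto 0).mono_left nhdsWithin_le_nhds) hτmp (hτmp 0) hp'top
  have hD : Tendsto (fun ε => dist (comp ε) FLp) (𝓝[Set.Ioo 0 T] 0) (𝓝 0) := by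
    have := hcomp_tendsto.dist (tendsto_const_nhds (x := FLp))
    simpa using this
  -- the shifted p-energy without the ε-normalisation
  set G : ℝ → ℝ := fun ε => ∫ t in Set.Ioc 0 (T - ε), dist (γ (t + ε)) (γ t) ^ p with hG_def
  have hG_nonneg : ∀ ε, 0 ≤ G ε := fun ε =>
    integral_nonneg fun t => Real.rpow_nonneg dist_nonneg p
  have key : ∀ ε ∈ Set.Ioo 0 T, G ε ≤ dist (comp ε) FLp ^ p := by
    intro ε hε
    have hsub : Set.Ioc 0 (T - ε) ⊆ Set.Icc 0 T := fun t ht =>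
      ⟨ht.1.le, ht.2.trans (by linarith [hε.1])⟩
    have hae1 : ∀ᵐ t ∂(volume.restrict (Set.Ioc 0 (T - ε))), γ t = g t :=
      ae_restrict_of_ae_restrict_of_subset hsub hγg
    have hae2 : ∀ᵐ t ∂(volume.restrict (Set.Ioc 0 (T - ε))), γ (t + ε) = g (t + ε) := by
      have hZ : volume ({t | ¬ γ t = g t} ∩ Set.Icc 0 T) = 0 := by
        have h' := hγg
        rw [ae_iff, Measure.restrict_apply' measurableSet_Icc] at h'
        exact h'
      have hZ'0 : volume (toMeasurable volume ({t | ¬ γ t = g t} ∩ Set.Icc 0 T)) = 0 := by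
        rw [measure_toMeasurable]; exact hZ
      have hpre : volume ((fun t => t + ε) ⁻¹'
          toMeasurable volume ({t | ¬ γ t = g t} ∩ Set.Icc 0 T)) = 0 := by
        rw [(measurePreserving_add_right volume ε).measure_preimage
          (measurableSet_toMeasurable _ _).nullMeasurableSet]
        exact hZ'0
      have hglob : ∀ᵐ t ∂volume,
          t + ε ∉ toMeasurable volume ({t | ¬ γ t = g t} ∩ Set.Icc 0 T) := by
        rw [ae_iff]
        have hset : {a : ℝ | ¬ a + ε ∉ toMeasurable volume ({t | ¬ γ t = g t} ∩ Set.Icc 0 T)}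
            = (fun t => t + ε) ⁻¹' toMeasurable volume ({t | ¬ γ t = g t} ∩ Set.Icc 0 T) := by
          ext a; simp [Set.mem_preimage]
        rw [hset]; exact hpre
      filter_upwards [ae_restrict_of_ae hglob, ae_restrict_mem measurableSet_Ioc]
        with t ht htmem
      by_contra hne
      exact ht (subset_toMeasurable _ _
        ⟨hne, ⟨by linarith [htmem.1, hε.1], by linarith [htmem.2]⟩⟩)
    set h : ℝ → lp (fun _ : ℕ => ℝ) ∞ := fun t => F (t + ε) - F t with hh_def
    have hhmeas : StronglyMeasurable h :=
      (hFmeas.comp_measurable (measurable_add_const ε)).sub hFmeas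
    have hGF : G ε = ∫ t in Set.Ioc 0 (T - ε), ‖h t‖ ^ p := by
      refine integral_congr_ae ?_
      filter_upwards [hae1, hae2, ae_restrict_mem measurableSet_Ioc] with t h1 h2 ht
      rw [h1, h2, ← hFdist (t + ε) t ⟨by linarith [ht.1, hε.1], by linarith [ht.2]⟩ (hsub ht)]
    have hC : ∫ t in Set.Ioc 0 (T - ε), ‖h t‖ ^ p
        = (∫⁻ t in Set.Ioc 0 (T - ε), (‖h t‖₊ : ℝ≥0∞) ^ p).toReal := by
      rw [integral_eq_lintegral_of_nonneg_ae
        (Eventually.of_forall fun t => Real.rpow_nonneg (norm_nonneg _) p)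
        ((hhmeas.norm.measurable.pow_const p).aestronglyMeasurable)]
      congr 1
      refine lintegral_congr fun t => ?_
      rw [← enorm_eq_nnnorm, ← ofReal_norm, ENNReal.ofReal_rpow_of_nonneg (norm_nonneg _) hp0.le]
    have hcoe : ⇑(comp ε) - ⇑FLp =ᵐ[volume] h := by
      have h1 : ⇑(comp ε) =ᵐ[volume] ⇑FLp ∘ ⇑(τ ε) := Lp.coeFn_compMeasurePreserving FLp (hτmp ε)
      have h2 : ⇑FLp ∘ ⇑(τ ε) =ᵐ[volume] F ∘ ⇑(τ ε) :=
        (hτmp ε).quasiMeasurePreserving.ae_eq_comp hFLp_coe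
      filter_upwards [h1, h2, hFLp_coe] with t ht1 ht2 ht3
      show (⇑(comp ε)) t - (⇑FLp) t = F (t + ε) - F t
      rw [ht1, ht3]
      exact congrArg (fun z => z - F t) ht2
    have hBfin : eLpNorm h p' volume ≠ ∞ := by
      rw [eLpNorm_congr_ae hcoe.symm, ← eLpNorm_congr_ae (Lp.coeFn_sub (comp ε) FLp)]
      exact Lp.eLpNorm_ne_top _
    have hB : (∫⁻ t, (‖h t‖₊ : ℝ≥0∞) ^ p) = eLpNorm h p' volume ^ p := by
      rw [eLpNorm_eq_lintegral_rpow_enorm_toReal hp'0 hp'top, ENNReal.toReal_ofReal hp0.le,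
        ← ENNReal.rpow_mul, one_div, inv_mul_cancel₀ hp0.ne', ENNReal.rpow_one]
      rfl
    calc G ε = (∫⁻ t in Set.Ioc 0 (T - ε), (‖h t‖₊ : ℝ≥0∞) ^ p).toReal := by rw [hGF, hC]
      _ ≤ ((eLpNorm h p' volume) ^ p).toReal := by
          refine ENNReal.toReal_mono (ENNReal.rpow_ne_top_of_nonneg hp0.le hBfin) ?_
          rw [← hB]
          exact setLIntegral_le_lintegral _ _
      _ = (eLpNorm h p' volume).toReal ^ p := ENNReal.toReal_rpow _ _ |>.symm
      _ = dist (comp ε) FLp ^ p := by rw [Lp.dist_def, eLpNorm_congr_ae hcoe]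
  -- conclude
  have hGtendsto : Tendsto G (𝓝[Set.Ioo 0 T] 0) (𝓝 0) := by
    have hDp : Tendsto (fun ε => dist (comp ε) FLp ^ p) (𝓝[Set.Ioo 0 T] 0) (𝓝 0) := by
      simpa [Real.zero_rpow hp0.ne'] using hD.rpow_const (Or.inr hp0.le)
    refine squeeze_zero' (Eventually.of_forall hG_nonneg) ?_ hDp
    exact eventually_mem_nhdsWithin.mono key
  have hfinal : Tendsto (fun ε => (G ε) ^ (1 / p)) (𝓝[Set.Ioo 0 T] 0) (𝓝 0) := by
    have h1p : (0:ℝ) ≤ 1 / p := by positivity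
    have := hGtendsto.rpow_const (p := 1 / p) (Or.inr h1p)
    rwa [Real.zero_rpow (by positivity : (1:ℝ)/p ≠ 0)] at this
  refine Tendsto.congr' ?_ hfinal
  filter_upwards [eventually_mem_nhdsWithin] with ε hε
  have hεpos : 0 < ε := hε.1
  have hεp : (0:ℝ) < ε ^ p := Real.rpow_pos_of_pos hεpos p
  have hdir : dirEnergy p T ε γ = G ε / ε ^ p := by
    rw [dirEnergy, hG_def, integral_div]
  have hpow : (ε ^ p) ^ (1 / p) = ε := by
    rw [← Real.rpow_mul hεpos.le, mul_one_div_cancel hp0.ne', Real.rpow_one]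
  rw [hdir, Real.div_rpow (hG_nonneg ε) hεp.le, hpow, mul_comm,
    div_mul_cancel₀ _ hεpos.ne']
end

section
/- Let (Y,d) be a complete metric space, p ∈ (1,∞), T > 0, γ ∈ L^p([0,T],Y), ε ∈ (0,T), n ∈ ℕ, and λ_1,…,λ_n ∈ [0,1] with ∑_i λ_i = 1. Then (E_{p,ε}(γ))^{1/p} ≤ ∑_{i=1}^n λ_i (E_{p,λ_i ε}(γ))^{1/p}, where E_{p,ε}(γ) := ∫_0^{T-ε} d(γ_{t+ε},γ_t)^p / ε^p dt. -/
open MeasureTheory Filter Set Topology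
open scoped ENNReal NNReal

open ENNReal in
/-- Minkowski inequality for finite sums of `ℝ≥0∞`-valued functions. -/
private theorem lintegral_Lp_sum_le {α : Type*} {m : MeasurableSpace α} {μ : Measure α}
    (s : Finset ℕ) (f : ℕ → α → ℝ≥0∞) (hf : ∀ i ∈ s, AEMeasurable (f i) μ)
    {p : ℝ} (hp : 1 ≤ p) :
    (∫⁻ a, (∑ i ∈ s, f i a) ^ p ∂μ) ^ (1/p) ≤ ∑ i ∈ s, (∫⁻ a, f i a ^ p ∂μ) ^ (1/p) := by
  classical
  induction s using Finset.cons_induction with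
  | empty =>
      simp only [Finset.sum_empty]
      rw [ENNReal.zero_rpow_of_pos (by linarith), lintegral_zero,
        ENNReal.zero_rpow_of_pos (by positivity)]
  | cons i s hi ih =>
      simp only [Finset.sum_cons]
      calc (∫⁻ a, (f i a + ∑ j ∈ s, f j a) ^ p ∂μ) ^ (1/p)
          ≤ (∫⁻ a, f i a ^ p ∂μ) ^ (1/p) + (∫⁻ a, (∑ j ∈ s, f j a) ^ p ∂μ) ^ (1/p) :=
            ENNReal.lintegral_Lp_add_le (hf i (Finset.mem_cons_self i s))
              (Finset.aemeasurable_fun_sum s fun j hj => hf j (Finset.mem_cons_of_mem hj)) hp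
        _ ≤ _ := by
            gcongr
            exact ih fun j hj => hf j (Finset.mem_cons_of_mem hj)

/-- A shift of an a.e. strongly measurable function is a.e. strongly measurable. -/
private theorem aesm_shift {Y : Type*} [MetricSpace Y] {γ : ℝ → Y} {B : Set ℝ}
    (hB : MeasurableSet B) (h : AEStronglyMeasurable γ (volume.restrict B))
    (c : ℝ) {A : Set ℝ} (hAB : A ⊆ (fun t => t + c) ⁻¹' B) :
    AEStronglyMeasurable (fun t => γ (t + c)) (volume.restrict A) := by
  have hmp : MeasurePreserving (fun t : ℝ => t + c) volume volume :=
    measurePreserving_add_right volume c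
  have h2 := h.comp_measurePreserving (hmp.restrict_preimage hB)
  exact h2.mono_measure (Measure.restrict_mono hAB le_rfl)

/-- Translation change of variables for a set lintegral over `Ioc`. -/
private theorem lintegral_shift (g : ℝ → ℝ≥0∞) (c a b : ℝ) :
    ∫⁻ t in Set.Ioc a b, g (t + c) = ∫⁻ u in Set.Ioc (a + c) (b + c), g u := by
  rw [← Set.image_add_const_Ioc (a := c) (b := a) (c := b)]
  exact (measurePreserving_add_right volume c).setLIntegral_comp_emb
    (measurableEmbedding_addRight c) g _

set_option maxHeartbeats 1600000 in
/-- Subpartition inequality for the approximate energies: for convex coefficients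
`λ₁,…,λ_n` one has `E_{p,ε}(γ)^{1/p} ≤ ∑ᵢ λᵢ E_{p,λᵢε}(γ)^{1/p}`. -/
theorem energy_subpartition {Y : Type*} [MetricSpace Y] [CompleteSpace Y]
    (p : ℝ) (hp : 1 < p) (T : ℝ) (hT : 0 < T) (γ : ℝ → Y) (y0 : Y)
    (hmeas : AEStronglyMeasurable γ (volume.restrict (Set.Icc 0 T)))
    (hLp : IntegrableOn (fun t => dist (γ t) y0 ^ p) (Set.Icc 0 T))
    (ε : ℝ) (hε : ε ∈ Set.Ioo 0 T) (n : ℕ) (l : Fin n → ℝ)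
    (hl : ∀ i, l i ∈ Set.Icc (0:ℝ) 1) (hsum : ∑ i, l i = 1) :
    (dirEnergy p T ε γ) ^ (1 / p) ≤ ∑ i, l i * (dirEnergy p T (l i * ε) γ) ^ (1 / p) := by
  obtain ⟨hε0, hεT⟩ := hε
  have hp0 : (0:ℝ) < p := by linarith
  have hp1 : (1:ℝ) ≤ p := hp.le
  have hip : (0:ℝ) < 1/p := by positivity
  -- the `ℝ≥0∞`-valued (unnormalized) energy
  set L : ℝ → ℝ≥0∞ := fun δ => ∫⁻ t in Set.Ioc 0 (T - δ), edist (γ (t + δ)) (γ t) ^ p with hLdef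
  -- shifted curves are a.e. strongly measurable
  have hshift : ∀ c A, 0 ≤ c → A ⊆ Set.Ioc 0 (T - c) →
      AEStronglyMeasurable (fun t => γ (t + c)) (volume.restrict A) := by
    intro c A hc hA
    refine aesm_shift measurableSet_Icc hmeas c fun t ht => ?_
    obtain ⟨h1, h2⟩ := hA ht
    simp only [Set.mem_preimage, Set.mem_Icc]
    constructor <;> linarith
  -- a.e. measurability of shifted distance functions
  have hedist : ∀ c c' A, 0 ≤ c → 0 ≤ c' → A ⊆ Set.Ioc 0 (T - c) → A ⊆ Set.Ioc 0 (T - c') →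
      AEMeasurable (fun t => edist (γ (t + c)) (γ (t + c'))) (volume.restrict A) := by
    intro c c' A hc hc' hA hA'
    have h1 := (hshift c A hc hA).dist (hshift c' A hc' hA')
    have := ENNReal.measurable_ofReal.comp_aemeasurable h1.aemeasurable
    simpa [edist_dist, Function.comp_def] using this
  -- a.e. measurability of shifted distance-to-basepoint functions
  have hedist1 : ∀ c A, 0 ≤ c → A ⊆ Set.Ioc 0 (T - c) →
      AEMeasurable (fun t => edist (γ (t + c)) y0 ^ p) (volume.restrict A) := by
    intro c A hc hA
    have h1 := (hshift c A hc hA).dist (aestronglyMeasurable_const (b := y0))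
    have h2 : AEMeasurable (fun t => edist (γ (t + c)) y0) (volume.restrict A) := by
      have := ENNReal.measurable_ofReal.comp_aemeasurable h1.aemeasurable
      simpa [edist_dist, Function.comp_def] using this
    exact h2.pow aemeasurable_const
  -- finiteness of the energies
  have hfin : ∀ δ, 0 ≤ δ → δ ≤ T → L δ ≠ ∞ := by
    intro δ hδ0 hδT
    have hM : (∫⁻ t in Set.Icc 0 T, edist (γ t) y0 ^ p) < ∞ := by
      have h1 : (∫⁻ t in Set.Icc 0 T, (‖dist (γ t) y0 ^ p‖₊ : ℝ≥0∞)) < ⊤ := hLp.2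
      refine lt_of_le_of_lt (le_of_eq ?_) h1
      refine lintegral_congr fun t => ?_
      rw [edist_dist, ENNReal.ofReal_rpow_of_nonneg dist_nonneg hp0.le,
        ← Real.enorm_eq_ofReal (Real.rpow_nonneg dist_nonneg p), enorm_eq_nnnorm]
    have hpt : ∀ t, edist (γ (t + δ)) (γ t) ^ p ≤
        (2:ℝ≥0∞) ^ (p - 1) * (edist (γ (t + δ)) y0 ^ p + edist (γ t) y0 ^ p) := by
      intro t
      calc edist (γ (t + δ)) (γ t) ^ p
          ≤ (edist (γ (t + δ)) y0 + edist (γ t) y0) ^ p := by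
            gcongr
            exact edist_triangle_right _ _ _
        _ ≤ (2:ℝ≥0∞) ^ (p - 1) * (edist (γ (t + δ)) y0 ^ p + edist (γ t) y0 ^ p) :=
            ENNReal.rpow_add_le_mul_rpow_add_rpow _ _ hp1
    have hb1 : (∫⁻ t in Set.Ioc 0 (T - δ), edist (γ (t + δ)) y0 ^ p) < ∞ := by
      have := lintegral_shift (fun u => edist (γ u) y0 ^ p) δ 0 (T - δ)
      rw [this]
      refine lt_of_le_of_lt (lintegral_mono_set ?_) hM
      intro u hu
      obtain ⟨hu1, hu2⟩ := hu
      exact ⟨by linarith, by linarith⟩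
    have hb2 : (∫⁻ t in Set.Ioc 0 (T - δ), edist (γ t) y0 ^ p) < ∞ := by
      refine lt_of_le_of_lt (lintegral_mono_set ?_) hM
      intro u hu
      obtain ⟨hu1, hu2⟩ := hu
      exact ⟨by linarith, by linarith⟩
    have : L δ ≤ (2:ℝ≥0∞) ^ (p - 1) *
        ((∫⁻ t in Set.Ioc 0 (T - δ), edist (γ (t + δ)) y0 ^ p) +
         (∫⁻ t in Set.Ioc 0 (T - δ), edist (γ t) y0 ^ p)) := by
      rw [hLdef]
      calc (∫⁻ t in Set.Ioc 0 (T - δ), edist (γ (t + δ)) (γ t) ^ p)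
          ≤ ∫⁻ t in Set.Ioc 0 (T - δ),
              (2:ℝ≥0∞) ^ (p - 1) * (edist (γ (t + δ)) y0 ^ p + edist (γ t) y0 ^ p) :=
            lintegral_mono fun t => hpt t
        _ = (2:ℝ≥0∞) ^ (p - 1) * ∫⁻ t in Set.Ioc 0 (T - δ),
              (edist (γ (t + δ)) y0 ^ p + edist (γ t) y0 ^ p) := by
            rw [lintegral_const_mul']
            exact ENNReal.rpow_ne_top_of_nonneg (by linarith) (by norm_num)
        _ ≤ _ := by
            gcongr
            rw [lintegral_add_left']
            exact hedist1 δ _ hδ0 subset_rfl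
    refine (lt_of_le_of_lt this ?_).ne
    apply ENNReal.mul_lt_top
    · exact ENNReal.rpow_lt_top_of_nonneg (by linarith) (by norm_num)
    · exact ENNReal.add_lt_top.2 ⟨hb1, hb2⟩
  classical
  -- the partition points
  set a : ℕ → ℝ := fun i => if h : i < n then l ⟨i, h⟩ else 0 with hadef
  have ha0 : ∀ i, 0 ≤ a i := by
    intro i
    rw [hadef]; dsimp only
    split
    · exact (hl _).1
    · exact le_rfl
  have ha_eq : ∀ i : Fin n, a ↑i = l i := fun i => by simp [hadef, i.isLt]
  set S : ℕ → ℝ := fun k => (∑ j ∈ Finset.range k, a j) * ε with hSdef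
  have hS0 : S 0 = 0 := by simp [hSdef]
  have hsum' : ∑ j ∈ Finset.range n, a j = 1 := by
    rw [← Fin.sum_univ_eq_sum_range a n, ← hsum]
    exact Finset.sum_congr rfl fun i _ => ha_eq i
  have hSn : S n = ε := by rw [hSdef]; dsimp only; rw [hsum', one_mul]
  have hS_nonneg : ∀ k, 0 ≤ S k :=
    fun k => mul_nonneg (Finset.sum_nonneg fun j _ => ha0 j) hε0.le
  have hS_le : ∀ k, k ≤ n → S k ≤ ε := by
    intro k hk
    rw [hSdef]; dsimp only
    calc (∑ j ∈ Finset.range k, a j) * ε ≤ (∑ j ∈ Finset.range n, a j) * ε :=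
          mul_le_mul_of_nonneg_right (Finset.sum_le_sum_of_subset_of_nonneg
            (Finset.range_subset_range.2 hk) (fun j _ _ => ha0 j)) hε0.le
      _ = ε := by rw [hsum', one_mul]
  have hSsucc : ∀ i, S (i + 1) = S i + a i * ε := by
    intro i
    rw [hSdef]; dsimp only
    rw [Finset.sum_range_succ, add_mul]
  set f : ℕ → ℝ → ℝ≥0∞ := fun i t => edist (γ (t + S (i + 1))) (γ (t + S i)) with hfdef
  -- the triangle inequality through the partition points
  have htri : ∀ t, edist (γ (t + ε)) (γ t) ≤ ∑ i ∈ Finset.range n, f i t := by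
    intro t
    have h := edist_le_range_sum_edist (fun k => γ (t + S k)) n
    simp only [hS0, hSn, add_zero] at h
    calc edist (γ (t + ε)) (γ t) = edist (γ t) (γ (t + ε)) := edist_comm _ _
      _ ≤ ∑ i ∈ Finset.range n, edist (γ (t + S i)) (γ (t + S (i + 1))) := h
      _ = ∑ i ∈ Finset.range n, f i t :=
          Finset.sum_congr rfl fun i _ => edist_comm _ _
  -- measurability of the pieces
  have hfm : ∀ i ∈ Finset.range n, AEMeasurable (fun t => f i t)
      (volume.restrict (Set.Ioc 0 (T - ε))) := by
    intro i hi
    have hin : i + 1 ≤ n := Finset.mem_range.1 hi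
    refine hedist (S (i + 1)) (S i) _ (hS_nonneg _) (hS_nonneg _) ?_ ?_
    · exact Set.Ioc_subset_Ioc_right (by linarith [hS_le (i + 1) hin])
    · exact Set.Ioc_subset_Ioc_right (by linarith [hS_le i (by omega)])
  -- each piece is bounded by the corresponding energy
  have hpiece : ∀ i ∈ Finset.range n,
      (∫⁻ t in Set.Ioc 0 (T - ε), f i t ^ p) ≤ L (a i * ε) := by
    intro i hi
    have hin : i + 1 ≤ n := Finset.mem_range.1 hi
    have he1 : (∫⁻ t in Set.Ioc 0 (T - ε), f i t ^ p) =
        ∫⁻ t in Set.Ioc 0 (T - ε),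
          (fun u => edist (γ (u + a i * ε)) (γ u) ^ p) (t + S i) := by
      refine lintegral_congr fun t => ?_
      rw [hfdef]; dsimp only
      rw [show t + S (i + 1) = t + S i + a i * ε by rw [hSsucc]; ring]
    rw [he1, lintegral_shift (fun u => edist (γ (u + a i * ε)) (γ u) ^ p) (S i) 0 (T - ε)]
    rw [hLdef]
    refine lintegral_mono_set ?_
    have h1 : 0 ≤ S i := hS_nonneg i
    have h2 : S i + a i * ε ≤ ε := by rw [← hSsucc]; exact hS_le _ hin
    intro u hu
    obtain ⟨hu1, hu2⟩ := hu
    exact ⟨by linarith, by linarith⟩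
  -- the core inequality, in `ℝ≥0∞`
  have core : (L ε) ^ (1/p) ≤ ∑ i ∈ Finset.range n, (L (a i * ε)) ^ (1/p) := by
    calc (L ε) ^ (1/p)
        ≤ (∫⁻ t in Set.Ioc 0 (T - ε), (∑ i ∈ Finset.range n, f i t) ^ p) ^ (1/p) := by
          rw [hLdef]
          exact ENNReal.rpow_le_rpow
            (lintegral_mono fun t => ENNReal.rpow_le_rpow (htri t) hp0.le) hip.le
      _ ≤ ∑ i ∈ Finset.range n, (∫⁻ t in Set.Ioc 0 (T - ε), f i t ^ p) ^ (1/p) :=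
          lintegral_Lp_sum_le _ _ hfm hp1
      _ ≤ ∑ i ∈ Finset.range n, (L (a i * ε)) ^ (1/p) := by
          gcongr with i hi
          exact hpiece i hi
  have coreF : (L ε) ^ (1/p) ≤ ∑ i : Fin n, (L (l i * ε)) ^ (1/p) := by
    refine core.trans (le_of_eq ?_)
    rw [← Fin.sum_univ_eq_sum_range (fun j => (L (a j * ε)) ^ (1/p)) n]
    exact Finset.sum_congr rfl fun i _ => by rw [ha_eq i]
  -- identification of the real integrals with the `ℝ≥0∞` ones
  have hInt : ∀ δ, 0 ≤ δ → δ ≤ ε →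
      (∫ t in Set.Ioc 0 (T - δ), dist (γ (t + δ)) (γ t) ^ p) = (L δ).toReal := by
    intro δ h0 h1
    have hsub : Set.Ioc 0 (T - δ) ⊆ Set.Icc 0 T := fun t ht => ⟨ht.1.le, by
      have := ht.2; simp only [Set.mem_Ioc] at *; linarith⟩
    have hγ : AEStronglyMeasurable γ (volume.restrict (Set.Ioc 0 (T - δ))) :=
      hmeas.mono_measure (Measure.restrict_mono hsub le_rfl)
    have hsm : AEStronglyMeasurable (fun t => dist (γ (t + δ)) (γ t) ^ p)
        (volume.restrict (Set.Ioc 0 (T - δ))) := by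
      have hd := (hshift δ _ h0 subset_rfl).dist hγ
      exact (hd.aemeasurable.pow aemeasurable_const).aestronglyMeasurable
    rw [MeasureTheory.integral_eq_lintegral_of_nonneg_ae
      (Filter.Eventually.of_forall fun t => Real.rpow_nonneg dist_nonneg p) hsm, hLdef]
    congr 1
    refine lintegral_congr fun t => ?_
    rw [edist_dist, ENNReal.ofReal_rpow_of_nonneg dist_nonneg hp0.le]
  -- expressing the energies in terms of `L`
  have hdir : ∀ δ, 0 < δ → δ ≤ ε →
      (dirEnergy p T δ γ) ^ (1/p) = (L δ).toReal ^ (1/p) / δ := by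
    intro δ h0 h1
    have hde : dirEnergy p T δ γ = (L δ).toReal / δ ^ p := by
      rw [dirEnergy, ← hInt δ h0.le h1, integral_div]
    rw [hde, Real.div_rpow ENNReal.toReal_nonneg (by positivity), ← Real.rpow_mul h0.le,
      mul_one_div, div_self (ne_of_gt hp0), Real.rpow_one]
  have hterm : ∀ i : Fin n, l i * (dirEnergy p T (l i * ε) γ) ^ (1/p)
      = (L (l i * ε)).toReal ^ (1/p) / ε := by
    intro i
    rcases eq_or_lt_of_le (hl i).1 with h0 | h0
    · have hli : l i = 0 := h0.symm
      have hL0 : L 0 = 0 := by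
        rw [hLdef]
        have hz : ∀ t : ℝ, edist (γ (t + 0)) (γ t) ^ p = 0 := by
          intro t
          rw [add_zero, edist_self, ENNReal.zero_rpow_of_pos hp0]
        calc (∫⁻ t in Set.Ioc 0 (T - 0), edist (γ (t + 0)) (γ t) ^ p)
            = ∫⁻ (_ : ℝ) in Set.Ioc 0 (T - 0), 0 := lintegral_congr hz
          _ = 0 := lintegral_zero
      rw [hli, zero_mul, zero_mul, hL0, ENNReal.toReal_zero,
        Real.zero_rpow (ne_of_gt hip), zero_div]
    · have hle : l i * ε ≤ ε := by nlinarith [(hl i).2]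
      rw [hdir (l i * ε) (by positivity) hle]
      field_simp
  -- conclusion
  have hfinI : ∀ i : Fin n, L (l i * ε) ≠ ∞ := fun i =>
    hfin _ (mul_nonneg (hl i).1 hε0.le)
      (le_trans (by nlinarith [(hl i).2]) hεT.le)
  rw [hdir ε hε0 le_rfl]
  rw [show (∑ i, l i * (dirEnergy p T (l i * ε) γ) ^ (1/p))
      = ∑ i : Fin n, (L (l i * ε)).toReal ^ (1/p) / ε from
    Finset.sum_congr rfl fun i _ => hterm i, ← Finset.sum_div]
  gcongr ?_ / ε
  calc (L ε).toReal ^ (1/p) = ((L ε) ^ (1/p)).toReal := ENNReal.toReal_rpow _ _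
    _ ≤ (∑ i : Fin n, (L (l i * ε)) ^ (1/p)).toReal := by
        refine ENNReal.toReal_mono ?_ coreF
        refine (ENNReal.sum_lt_top.2 fun i _ =>
          (ENNReal.rpow_lt_top_of_nonneg hip.le (hfinI i))).ne
    _ = ∑ i : Fin n, ((L (l i * ε)) ^ (1/p)).toReal :=
        ENNReal.toReal_sum fun i _ => (ENNReal.rpow_lt_top_of_nonneg hip.le (hfinI i)).ne
    _ = ∑ i : Fin n, (L (l i * ε)).toReal ^ (1/p) :=
        Finset.sum_congr rfl fun i _ => (ENNReal.toReal_rpow _ _).symm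
end

section
/- Let T > 0 and f : (0,T) → [0,∞) satisfy: (a) lim_{ε↓0} ε f(ε) = 0, and (b) f(ε) ≤ ∑_{i=1}^n λ_i f(λ_i ε) for every ε ∈ (0,T), every n ∈ ℕ, and every λ_1,…,λ_n ∈ [0,1] with ∑_i λ_i = 1. Then the limit lim_{ε↓0} f(ε) exists (possibly +∞) and f(ε) ≤ lim_{ε'↓0} f(ε') for every ε ∈ (0,T). -/
open Filter Set Topology ENNReal

/-- If `f : (0,T) → [0,∞)` satisfies `ε f(ε) → 0` as `ε ↓ 0` and the subpartition
inequality `f(ε) ≤ ∑ᵢ λᵢ f(λᵢ ε)` for all convex coefficients, then `f` has a limit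
(possibly `+∞`) as `ε ↓ 0` and `f(ε)` is bounded by that limit for every `ε ∈ (0,T)`. -/
theorem limit_exists_of_subpartition (T : ℝ) (hT : 0 < T) (f : ℝ → ℝ)
    (hnonneg : ∀ ε ∈ Set.Ioo 0 T, 0 ≤ f ε)
    (ha : Tendsto (fun ε => ε * f ε) (𝓝[Set.Ioo 0 T] 0) (𝓝 0))
    (hb : ∀ ε ∈ Set.Ioo 0 T, ∀ (n : ℕ) (l : Fin n → ℝ),
      (∀ i, l i ∈ Set.Icc (0:ℝ) 1) → ∑ i, l i = 1 →
      f ε ≤ ∑ i, l i * f (l i * ε)) :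
    ∃ L : ℝ≥0∞,
      Tendsto (fun ε => ENNReal.ofReal (f ε)) (𝓝[Set.Ioo 0 T] 0) (𝓝 L) ∧
      ∀ ε ∈ Set.Ioo 0 T, ENNReal.ofReal (f ε) ≤ L := by
  have hne : (𝓝[Set.Ioo 0 T] (0:ℝ)).NeBot := by
    refine mem_closure_iff_nhdsWithin_neBot.mp ?_
    rw [closure_Ioo hT.ne]
    exact ⟨le_refl 0, hT.le⟩
  -- key claim: for any a < f ε, eventually a ≤ f ε'
  have key : ∀ ε ∈ Set.Ioo 0 T, ∀ a : ℝ, a < f ε →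
      ∀ᶠ ε' in 𝓝[Set.Ioo 0 T] (0:ℝ), a ≤ f ε' := by
    intro ε hε a haf
    obtain ⟨hε0, hεT⟩ := hε
    set η := ε * (f ε - a) with hηdef
    have hηpos : 0 < η := mul_pos hε0 (sub_pos.mpr haf)
    have hev : ∀ᶠ x in 𝓝[Set.Ioo 0 T] (0:ℝ), x * f x < η :=
      ha.eventually_lt_const hηpos
    obtain ⟨δ, hδpos, hδball⟩ := Metric.mem_nhdsWithin_iff.mp hev
    have hδ : ∀ x, x ∈ Set.Ioo 0 T → |x| < δ → x * f x < η := by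
      intro x hx hxδ
      exact hδball ⟨by simpa [Real.dist_eq] using hxδ, hx⟩
    rw [eventually_nhdsWithin_iff]
    filter_upwards [eventually_abs_sub_lt 0 (lt_min hε0 hδpos)] with ε' habs hε'mem
    rw [sub_zero] at habs
    obtain ⟨hε'0, hε'T⟩ := hε'mem
    have habs' : ε' < min ε δ := (le_abs_self ε').trans_lt habs
    have hε'ε : ε' < ε := habs'.trans_le (min_le_left _ _)
    have hε'δ : ε' < δ := habs'.trans_le (min_le_right _ _)
    set k := ⌊ε / ε'⌋₊ with hkdef
    have hdiv1 : (1:ℝ) ≤ ε / ε' := (one_le_div hε'0).mpr hε'ε.le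
    have hk1 : 1 ≤ k := (Nat.one_le_floor_iff _).mpr hdiv1
    have hkle : (k : ℝ) * ε' ≤ ε := by
      have := Nat.floor_le (by positivity : (0:ℝ) ≤ ε / ε')
      calc (k:ℝ) * ε' ≤ (ε / ε') * ε' := by
            exact mul_le_mul_of_nonneg_right this hε'0.le
        _ = ε := div_mul_cancel₀ ε hε'0.ne'
    have hklt : ε < ((k : ℝ) + 1) * ε' := by
      have := Nat.lt_floor_add_one (ε / ε')
      calc ε = (ε / ε') * ε' := (div_mul_cancel₀ ε hε'0.ne').symm
        _ < ((k:ℝ) + 1) * ε' := by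
            exact mul_lt_mul_of_pos_right (by exact_mod_cast this) hε'0
    set μ := 1 - (k : ℝ) * ε' / ε with hμdef
    have hμ0 : 0 ≤ μ := by
      have : (k:ℝ) * ε' / ε ≤ 1 := (div_le_one hε0).mpr hkle
      rw [hμdef]; linarith
    have hμ1 : μ ≤ 1 := by
      have : 0 ≤ (k:ℝ) * ε' / ε := by positivity
      rw [hμdef]; linarith
    have hμε : μ * ε = ε - (k:ℝ) * ε' := by
      rw [hμdef]
      field_simp
    have hμεlt : μ * ε < ε' := by
      rw [hμε]; nlinarith
    -- the coefficients
    set lam : Fin (k + 1) → ℝ := fun i => if (i : ℕ) < k then ε' / ε else μ with hlam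
    have hIcc : ∀ i, lam i ∈ Set.Icc (0:ℝ) 1 := by
      intro i
      by_cases h : (i : ℕ) < k
      · simp only [hlam, h, if_true]
        constructor
        · positivity
        · exact le_of_lt ((div_lt_one hε0).mpr hε'ε)
      · simp only [hlam, h, if_false]
        exact ⟨hμ0, hμ1⟩
    have hsum : ∑ i, lam i = 1 := by
      rw [Fin.sum_univ_castSucc]
      have h1 : ∀ i : Fin k, lam i.castSucc = ε' / ε := by
        intro i
        simp only [hlam, Fin.coe_castSucc, i.is_lt, if_true]
      have h2 : lam (Fin.last k) = μ := by
        simp only [hlam, Fin.val_last, lt_self_iff_false, if_false]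
      rw [h2, Finset.sum_congr rfl (fun i _ => h1 i), Finset.sum_const,
        Finset.card_univ, Fintype.card_fin, nsmul_eq_mul, hμdef]
      field_simp
      ring
    have hineq := hb ε ⟨hε0, hεT⟩ (k + 1) lam hIcc hsum
    have hsum2 : ∑ i, lam i * f (lam i * ε) =
        (k : ℝ) * ((ε' / ε) * f ε') + μ * f (μ * ε) := by
      rw [Fin.sum_univ_castSucc]
      have h1 : ∀ i : Fin k, lam i.castSucc * f (lam i.castSucc * ε)
          = (ε' / ε) * f ε' := by
        intro i
        simp only [hlam, Fin.coe_castSucc, i.is_lt, if_true,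
          div_mul_cancel₀ ε' hε0.ne']
      have h2 : lam (Fin.last k) = μ := by
        simp only [hlam, Fin.val_last, lt_self_iff_false, if_false]
      rw [h2, Finset.sum_congr rfl (fun i _ => h1 i), Finset.sum_const,
        Finset.card_univ, Fintype.card_fin, nsmul_eq_mul]
    rw [hsum2] at hineq
    -- bound the remainder term
    have hrem : μ * f (μ * ε) ≤ η / ε := by
      rcases eq_or_lt_of_le hμ0 with h0 | h0
      · rw [← h0, zero_mul]
        positivity
      · have hμεpos : 0 < μ * ε := mul_pos h0 hε0
        have hμεT : μ * ε < T := hμεlt.trans (hε'ε.trans hεT)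
        have habsμε : |μ * ε| < δ := by
          rw [abs_of_pos hμεpos]; exact hμεlt.trans hε'δ
        have h1 := hδ (μ * ε) ⟨hμεpos, hμεT⟩ habsμε
        have h2 : μ * f (μ * ε) < η / ε := by
          rw [lt_div_iff₀ hε0]
          calc μ * f (μ * ε) * ε = μ * ε * f (μ * ε) := by ring
            _ < η := h1
        exact h2.le
    -- bound the main term
    have hmain : (k : ℝ) * ((ε' / ε) * f ε') ≤ f ε' := by
      have hco : (k : ℝ) * (ε' / ε) ≤ 1 := by
        rw [← mul_div_assoc]
        exact (div_le_one hε0).mpr hkle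
      have hf' : 0 ≤ f ε' := hnonneg ε' ⟨hε'0, hε'T⟩
      calc (k : ℝ) * ((ε' / ε) * f ε') = ((k : ℝ) * (ε' / ε)) * f ε' := by ring
        _ ≤ 1 * f ε' := mul_le_mul_of_nonneg_right hco hf'
        _ = f ε' := one_mul _
    have hηε : η / ε = f ε - a := by
      rw [hηdef, mul_comm, mul_div_assoc, div_self hε0.ne', mul_one]
    linarith
  -- define L as the liminf
  set L := Filter.liminf (fun ε => ENNReal.ofReal (f ε)) (𝓝[Set.Ioo 0 T] (0:ℝ))
    with hLdef
  have hbound : ∀ ε ∈ Set.Ioo 0 T, ENNReal.ofReal (f ε) ≤ L := by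
    intro ε hε
    refine ENNReal.le_of_forall_nnreal_lt ?_
    intro r hr
    have hrf : (r : ℝ) < f ε := by
      have hf : 0 ≤ f ε := hnonneg ε hε
      have := (ENNReal.lt_ofReal_iff_toReal_lt ENNReal.coe_ne_top).mp hr
      simpa using this
    have hev := key ε hε r hrf
    refine Filter.le_liminf_of_le (by isBoundedDefault) ?_
    filter_upwards [hev] with ε' h
    calc (r : ℝ≥0∞) = ENNReal.ofReal (r : ℝ) := by simp
      _ ≤ ENNReal.ofReal (f ε') := ENNReal.ofReal_le_ofReal h
  have hlimsup : Filter.limsup (fun ε => ENNReal.ofReal (f ε))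
      (𝓝[Set.Ioo 0 T] (0:ℝ)) ≤ L := by
    refine Filter.limsup_le_of_le (by isBoundedDefault) ?_
    filter_upwards [self_mem_nhdsWithin] with ε' hε'
    exact hbound ε' hε'
  have heq : Filter.limsup (fun ε => ENNReal.ofReal (f ε)) (𝓝[Set.Ioo 0 T] (0:ℝ))
      = L := le_antisymm hlimsup (Filter.liminf_le_limsup)
  refine ⟨L, ?_, hbound⟩
  exact tendsto_of_liminf_eq_limsup rfl heq
end

section
/- Let p ∈ (1,∞), (X,d_X) and (Y,d_Y) metric spaces, γ ∈ AC^p([0,1],X) and φ : X → Y Lipschitz. Then φ∘γ ∈ AC^p([0,1],Y) and its metric speed satisfies |(φ∘γ)'_t| ≤ lip φ(γ_t) · |γ'_t| for a.e. t ∈ [0,1], where lip φ(x) := limsup_{y→x} |d_Y(φ(y),φ(x))|/d_X(x,y) is the local Lipschitz constant (set to 0 at isolated points). -/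
open MeasureTheory Filter Set Topology
open scoped Classical

/-- The local Lipschitz constant `lip φ (x) = limsup_{y→x} dist (φ y) (φ x) / dist y x`,
set to `0` at isolated points. -/
noncomputable def locLip {X Y : Type*} [MetricSpace X] [PseudoMetricSpace Y]
    (φ : X → Y) (x : X) : ℝ :=
  if (𝓝[≠] x).NeBot then
    Filter.limsup (fun y => dist (φ y) (φ x) / dist y x) (𝓝[≠] x)
  else 0

theorem aux_tendsto_add_punctured (t : ℝ) :
    Tendsto (fun h : ℝ => t + h) (𝓝[≠] 0) (𝓝[≠] t) := by
  apply tendsto_nhdsWithin_iff.2 ⟨?_, ?_⟩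
  · have : Tendsto (fun h : ℝ => t + h) (𝓝 0) (𝓝 t) := by
      simpa using (continuous_add_left t).tendsto (0:ℝ)
    exact this.mono_left nhdsWithin_le_nhds
  · filter_upwards [self_mem_nhdsWithin] with h hh
    simpa using hh

theorem aux_tendsto_sub_punctured (t : ℝ) :
    Tendsto (fun y : ℝ => y - t) (𝓝[≠] t) (𝓝[≠] 0) := by
  apply tendsto_nhdsWithin_iff.2 ⟨?_, ?_⟩
  · have : Tendsto (fun y : ℝ => y - t) (𝓝 t) (𝓝 (t - t)) :=
      (continuous_id.sub continuous_const).tendsto t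
    simpa using this.mono_left nhdsWithin_le_nhds
  · filter_upwards [self_mem_nhdsWithin] with y hy
    simpa [sub_eq_zero] using hy

theorem aux_hasDerivAt_iff_ratio {F : ℝ → ℝ} {t d : ℝ} :
    HasDerivAt F d t ↔ Tendsto (fun h : ℝ => (F (t + h) - F t) / h) (𝓝[≠] 0) (𝓝 d) := by
  rw [hasDerivAt_iff_tendsto_slope]
  constructor
  · intro H
    refine (H.comp (aux_tendsto_add_punctured t)).congr fun h => ?_
    simp [Function.comp, slope_def_field]
  · intro H
    refine (H.comp (aux_tendsto_sub_punctured t)).congr fun y => ?_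
    simp [Function.comp, slope_def_field]

theorem aux_mono_deriv_nonneg {u : ℝ → ℝ} (hu : Monotone u) {x d : ℝ}
    (hd : HasDerivAt u d x) : 0 ≤ d := by
  rw [hasDerivAt_iff_tendsto_slope] at hd
  refine ge_of_tendsto hd ?_
  filter_upwards [self_mem_nhdsWithin] with y hy
  rw [slope_def_field]
  rcases lt_or_gt_of_ne (hy : y ≠ x) with h | h
  · exact div_nonneg_of_nonpos (by simpa [sub_nonpos] using hu h.le) (by linarith)
  · exact div_nonneg (by simpa [sub_nonneg] using hu h.le) (by linarith)

/-- For a continuous monotone function, the integral of the derivative is at most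
the increment. -/
theorem aux_mono_integral_deriv_le {u : ℝ → ℝ} (hu : Monotone u) (hc : Continuous u)
    {t s : ℝ} (hts : t ≤ s) : ∫ x in t..s, deriv u x ≤ u s - u t := by
  have hae := hu.ae_hasDerivAt
  have hder : (fun x => deriv u x) =ᵐ[volume]
      (fun x => (Measure.rnDeriv hu.stieltjesFunction.measure volume x).toReal) := by
    filter_upwards [hae] with x hx using hx.deriv
  have hmeas : AEMeasurable (Measure.rnDeriv hu.stieltjesFunction.measure volume) volume :=
    (Measure.measurable_rnDeriv _ _).aemeasurable
  have hlt : ∀ᵐ x ∂volume, Measure.rnDeriv hu.stieltjesFunction.measure volume x < ⊤ :=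
    Measure.rnDeriv_lt_top _ _
  have h1 : ∫ x in t..s, deriv u x
      = ∫ x in Ioc t s, (Measure.rnDeriv hu.stieltjesFunction.measure volume x).toReal := by
    rw [intervalIntegral.integral_of_le hts]
    exact setIntegral_congr_ae measurableSet_Ioc (hder.mono fun x hx _ => hx)
  rw [h1]
  have h2 : ∫ x in Ioc t s, (Measure.rnDeriv hu.stieltjesFunction.measure volume x).toReal
      = (∫⁻ x in Ioc t s, Measure.rnDeriv hu.stieltjesFunction.measure volume x).toReal :=
    integral_toReal (hmeas.restrict) (ae_restrict_of_ae hlt)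
  rw [h2]
  have h3 : (∫⁻ x in Ioc t s, Measure.rnDeriv hu.stieltjesFunction.measure volume x)
      ≤ hu.stieltjesFunction.measure (Ioc t s) :=
    Measure.setLIntegral_rnDeriv_le _
  have h4 : hu.stieltjesFunction.measure (Ioc t s) = ENNReal.ofReal (u s - u t) := by
    have key : ∀ x, hu.stieltjesFunction x = u x := fun x => by
      rw [hu.stieltjesFunction_eq]
      exact rightLim_eq_of_tendsto
        ((hc.tendsto x).mono_left nhdsWithin_le_nhds)
    rw [StieltjesFunction.measure_Ioc, key, key]
  calc (∫⁻ x in Ioc t s, Measure.rnDeriv hu.stieltjesFunction.measure volume x).toReal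
      ≤ (ENNReal.ofReal (u s - u t)).toReal := ENNReal.toReal_mono (by simp) (h4 ▸ h3)
    _ = u s - u t := ENNReal.toReal_ofReal (sub_nonneg.mpr (hu hts))

/-- Lebesgue differentiation theorem for primitives. -/
theorem aux_ldt {f : ℝ → ℝ} (hf : Integrable f volume) :
    ∀ᵐ x ∂(volume : Measure ℝ),
      Tendsto (fun h : ℝ => (∫ r in x..(x+h), f r) / h) (𝓝[≠] (0:ℝ)) (𝓝 (f x)) := by
  have hloc : LocallyIntegrable f volume := hf.locallyIntegrable
  filter_upwards [IsUnifLocDoublingMeasure.ae_tendsto_average_norm_sub (volume : Measure ℝ)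
    hloc 1] with x hx
  have hδ : Tendsto (fun h : ℝ => |h|) (𝓝[≠] (0:ℝ)) (𝓝[>] 0) := by
    apply tendsto_nhdsWithin_iff.2
      ⟨(continuous_abs.tendsto' 0 0 abs_zero).mono_left nhdsWithin_le_nhds, ?_⟩
    filter_upwards [self_mem_nhdsWithin] with h hh
    exact abs_pos.2 hh
  have hmem : ∀ᶠ h : ℝ in 𝓝[≠] 0, x ∈ Metric.closedBall x (1 * |h|) := by
    filter_upwards [self_mem_nhdsWithin] with h hh
    simp [abs_nonneg]
  have A := hx (fun _ => x) (fun h => |h|) hδ hmem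
  rw [tendsto_iff_dist_tendsto_zero]
  apply squeeze_zero' (Filter.Eventually.of_forall fun h => dist_nonneg)
    (g := fun h => 2 * ⨍ y in Metric.closedBall x |h|, ‖f y - f x‖)
  · filter_upwards [self_mem_nhdsWithin] with h hh
    · have hIoc : Set.uIoc x (x + h) ⊆ Metric.closedBall x |h| := by
        intro y hy
        rw [Metric.mem_closedBall, Real.dist_eq]
        rcases le_total x (x+h) with hle | hle
        · rw [Set.uIoc_of_le hle] at hy
          rw [abs_le]; constructor
          · linarith [abs_nonneg h, hy.1]
          · have : y - x ≤ h := by linarith [hy.2]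
            exact this.trans (le_abs_self h)
        · rw [Set.uIoc_of_ge hle] at hy
          rw [abs_le]
          constructor
          · have : x + h ≤ y := le_of_lt hy.1
            have := neg_abs_le h; linarith
          · linarith [hy.2, abs_nonneg h]
      have hsub : (∫ r in x..(x+h), f r) / h - f x
          = (∫ r in x..(x+h), (f r - f x)) / h := by
        rw [intervalIntegral.integral_sub hf.intervalIntegrable intervalIntegrable_const,
          intervalIntegral.integral_const]
        have hh' : h ≠ 0 := hh
        field_simp
        simp only [add_sub_cancel_left, smul_eq_mul]
      rw [Real.dist_eq, hsub, abs_div]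
      have h1 : |∫ r in x..(x+h), (f r - f x)| ≤ ∫ y in Set.uIoc x (x+h), ‖f y - f x‖ := by
        simpa [Real.norm_eq_abs] using intervalIntegral.norm_integral_le_integral_norm_uIoc
          (f := fun r => f r - f x) (a := x) (b := x + h) (μ := volume)
      have h2 : ∫ y in Set.uIoc x (x+h), ‖f y - f x‖
          ≤ ∫ y in Metric.closedBall x |h|, ‖f y - f x‖ := by
        apply setIntegral_mono_set
        · exact ((hf.integrableOn.sub
            (integrableOn_const measure_closedBall_lt_top.ne)).norm)
        · exact Filter.Eventually.of_forall (fun y => norm_nonneg _)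
        · exact Filter.Eventually.of_forall hIoc
      have h3 : ∫ y in Metric.closedBall x |h|, ‖f y - f x‖
          = (2 * |h|) * ⨍ y in Metric.closedBall x |h|, ‖f y - f x‖ := by
        rw [setAverage_eq, measureReal_def, Real.volume_closedBall, smul_eq_mul,
          ENNReal.toReal_ofReal (by positivity)]
        rw [← mul_assoc, mul_inv_cancel₀ (by have : h ≠ 0 := hh; positivity), one_mul]
      calc |∫ r in x..(x+h), (f r - f x)| / |h|
          ≤ ((2 * |h|) * ⨍ y in Metric.closedBall x |h|, ‖f y - f x‖) / |h| := by
            gcongr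
            exact (h1.trans h2).trans_eq h3
        _ = 2 * ⨍ y in Metric.closedBall x |h|, ‖f y - f x‖ := by
            have habs : |h| ≠ 0 := by simpa using (hh : h ≠ 0)
            field_simp
  · simpa using (tendsto_const_nhds (x := (2:ℝ))).mul A

/-- **Chain rule for metric speeds.** If `γ ∈ AC^p([0,1],X)` with metric speed `ms`
and `φ : X → Y` is Lipschitz, then `φ ∘ γ ∈ AC^p([0,1],Y)` and its metric speed is
a.e. bounded by `lip φ (γ t) · ms t`. -/
theorem chain_rule_metric_speed {X Y : Type*} [MetricSpace X] [MetricSpace Y]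
    (p : ℝ) (hp : 1 < p) (γ : ℝ → X) (ms : ℝ → ℝ) (K : NNReal) (φ : X → Y)
    (hms_nonneg : ∀ t, 0 ≤ ms t)
    (hms_Lp : IntegrableOn (fun t => ms t ^ p) (Set.Ioc 0 1))
    (hbound : ∀ t s, 0 ≤ t → t ≤ s → s ≤ 1 → dist (γ s) (γ t) ≤ ∫ r in t..s, ms r)
    (hms_speed : ∀ᵐ t ∂(volume.restrict (Set.Ioo 0 1)),
      Tendsto (fun h : ℝ => dist (γ (t + h)) (γ t) / |h|) (𝓝[≠] 0) (𝓝 (ms t)))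
    (hφ : LipschitzWith K φ) :
    ∃ msc : ℝ → ℝ,
      (∀ t, 0 ≤ msc t) ∧
      IntegrableOn (fun t => msc t ^ p) (Set.Ioc 0 1) ∧
      (∀ t s, 0 ≤ t → t ≤ s → s ≤ 1 →
        dist (φ (γ s)) (φ (γ t)) ≤ ∫ r in t..s, msc r) ∧
      (∀ᵐ t ∂(volume.restrict (Set.Ioo 0 1)),
        Tendsto (fun h : ℝ => dist (φ (γ (t + h))) (φ (γ t)) / |h|) (𝓝[≠] 0)
          (𝓝 (msc t))) ∧
      (∀ᵐ t ∂(volume.restrict (Set.Ioo 0 1)), msc t ≤ locLip φ (γ t) * ms t) := by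
  classical
  have hp0 : (0:ℝ) < p := lt_trans one_pos hp
  -- measurable version of ms
  obtain ⟨q, hq_meas, hq_eq⟩ : ∃ q : ℝ → ℝ, StronglyMeasurable q ∧
      (fun t => ms t ^ p) =ᵐ[volume.restrict (Set.Ioc 0 1)] q :=
    ⟨hms_Lp.1.mk _, hms_Lp.1.stronglyMeasurable_mk, hms_Lp.1.ae_eq_mk⟩
  set msm : ℝ → ℝ := fun t => (max (q t) 0) ^ (p⁻¹) with hmsm_def
  have hmsm_meas : Measurable msm :=
    (Real.continuous_rpow_const (inv_nonneg.2 hp0.le)).measurable.comp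
      (hq_meas.measurable.max measurable_const)
  have hmsm_nonneg : ∀ t, 0 ≤ msm t := fun t => Real.rpow_nonneg (le_max_right _ _) _
  have hmsm_eq : msm =ᵐ[volume.restrict (Set.Ioc 0 1)] ms := by
    filter_upwards [hq_eq] with t ht
    rw [hmsm_def]
    simp only [← ht]
    rw [max_eq_left (Real.rpow_nonneg (hms_nonneg t) p), Real.rpow_rpow_inv (hms_nonneg t) hp0.ne']
  -- ms is integrable on (0,1]
  have hms_int : IntegrableOn ms (Set.Ioc 0 1) := by
    apply Integrable.mono' (g := fun t => 1 + ms t ^ p)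
    · exact (integrableOn_const measure_Ioc_lt_top.ne).add hms_Lp
    · exact hmsm_meas.aestronglyMeasurable.congr hmsm_eq
    · refine Eventually.of_forall fun t => ?_
      rw [Real.norm_eq_abs, abs_of_nonneg (hms_nonneg t)]
      rcases le_or_gt (ms t) 1 with h1 | h1
      · have : 0 ≤ ms t ^ p := Real.rpow_nonneg (hms_nonneg t) p
        linarith
      · have h2 : ms t ^ (1:ℝ) ≤ ms t ^ p :=
          Real.rpow_le_rpow_of_exponent_le h1.le hp.le
        rw [Real.rpow_one] at h2
        linarith
  have hmsm_int : IntegrableOn msm (Set.Ioc 0 1) := hms_int.congr hmsm_eq.symm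
  -- the dominating function g
  set g : ℝ → ℝ := Set.indicator (Set.Ioc (0:ℝ) 1) (fun t => (K:ℝ) * msm t) with hg_def
  have hg_meas : Measurable g := (measurable_const.mul hmsm_meas).indicator measurableSet_Ioc
  have hg_nonneg : ∀ t, 0 ≤ g t := fun t =>
    Set.indicator_nonneg (fun s _ => mul_nonneg K.coe_nonneg (hmsm_nonneg s)) t
  have hg_int : Integrable g volume :=
    (integrable_indicator_iff measurableSet_Ioc).2 (hmsm_int.const_mul _)
  -- the primitive G
  set G : ℝ → ℝ := fun t => ∫ r in (0:ℝ)..t, g r with hG_def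
  have hG_cont : Continuous G := hg_int.continuous_primitive 0
  have hG_diff : ∀ t s : ℝ, G s - G t = ∫ r in t..s, g r := by
    intro t s
    have := intervalIntegral.integral_add_adjacent_intervals (a := (0:ℝ)) (b := t) (c := s)
      hg_int.intervalIntegrable hg_int.intervalIntegrable
    rw [hG_def]
    dsimp only
    linarith
  have hG_mono : Monotone G := by
    intro t s hts
    have h1 := hG_diff t s
    have h2 : 0 ≤ ∫ r in t..s, g r :=
      intervalIntegral.integral_nonneg hts (fun u _ => hg_nonneg u)
    linarith
  have hG_deriv : ∀ᵐ x ∂(volume : Measure ℝ), HasDerivAt G (g x) x := by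
    filter_upwards [aux_ldt hg_int] with x hx
    rw [aux_hasDerivAt_iff_ratio]
    refine hx.congr fun h => ?_
    rw [← hG_diff x (x+h)]
  -- clamp
  set c : ℝ → ℝ := fun t => max 0 (min t 1) with hc_def
  have hc_mem : ∀ t, c t ∈ Set.Icc (0:ℝ) 1 := fun t =>
    ⟨le_max_left _ _, max_le (by norm_num) (min_le_right _ _)⟩
  have hc_eq : ∀ t, 0 ≤ t → t ≤ 1 → c t = t := fun t h0 h1 => by
    rw [hc_def]; dsimp only; rw [min_eq_left h1, max_eq_right h0]
  have hc_mono : Monotone c := fun a b hab =>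
    max_le_max le_rfl (min_le_min hab le_rfl)
  set σ : ℝ → Y := fun t => φ (γ (c t)) with hσ_def
  -- g = K * ms a.e. globally on Ioc 0 1 (as a global statement)
  have hg_eq_glob : ∀ᵐ r ∂(volume : Measure ℝ), r ∈ Set.Ioc (0:ℝ) 1 → g r = (K:ℝ) * ms r := by
    have := (ae_restrict_iff' measurableSet_Ioc).1 hmsm_eq
    filter_upwards [this] with r hr hrm
    rw [hg_def, Set.indicator_of_mem hrm, hr hrm]
  have hG_clamp : ∀ t, G (c t) = G t := by
    intro t
    rcases le_total t 0 with h0 | h0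
    · have hct : c t = 0 := by
        rw [hc_def]; dsimp only
        rw [min_eq_left (h0.trans (by norm_num)), max_eq_left h0]
      rw [hct]
      have hG0 : G 0 = 0 := intervalIntegral.integral_same
      have hGt : G t = 0 := by
        rw [hG_def]
        dsimp only
        rw [intervalIntegral.integral_symm, intervalIntegral.integral_of_le h0]
        rw [setIntegral_eq_zero_of_forall_eq_zero, neg_zero]
        intro x hx
        exact Set.indicator_of_notMem (fun hmem => absurd hmem.1 (not_lt.2 hx.2)) _
      rw [hG0, hGt]
    · rcases le_total t 1 with h1 | h1
      · rw [hc_eq t h0 h1]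
      · have hct : c t = 1 := by
          rw [hc_def]; dsimp only
          rw [min_eq_right h1, max_eq_right (by norm_num)]
        rw [hct]
        have : G t - G 1 = 0 := by
          rw [hG_diff 1 t, intervalIntegral.integral_of_le h1]
          apply setIntegral_eq_zero_of_forall_eq_zero
          intro x hx
          exact Set.indicator_of_notMem (fun hmem => absurd hmem.2 (not_le.2 hx.1)) _
        linarith
  -- σ is G-Lipschitz-like
  have hσ_lip : ∀ t s, t ≤ s → dist (σ s) (σ t) ≤ G s - G t := by
    intro t s hts
    have hcts : c t ≤ c s := hc_mono hts
    have h1 : dist (σ s) (σ t) ≤ (K:ℝ) * dist (γ (c s)) (γ (c t)) := hφ.dist_le_mul _ _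
    have h2 : dist (γ (c s)) (γ (c t)) ≤ ∫ r in (c t)..(c s), ms r :=
      hbound _ _ (hc_mem t).1 hcts (hc_mem s).2
    have h3 : (K:ℝ) * ∫ r in (c t)..(c s), ms r = ∫ r in (c t)..(c s), (K:ℝ) * ms r :=
      (intervalIntegral.integral_const_mul _ _).symm
    have h4 : ∫ r in (c t)..(c s), (K:ℝ) * ms r = ∫ r in (c t)..(c s), g r := by
      apply intervalIntegral.integral_congr_ae
      filter_upwards [hg_eq_glob] with r hr hrmem
      rw [Set.uIoc_of_le hcts] at hrmem
      have hrm : r ∈ Set.Ioc (0:ℝ) 1 :=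
        ⟨lt_of_le_of_lt (hc_mem t).1 hrmem.1, hrmem.2.trans (hc_mem s).2⟩
      exact (hr hrm).symm
    have h5 : ∫ r in (c t)..(c s), g r = G s - G t := by
      rw [← hG_diff (c t) (c s), hG_clamp t, hG_clamp s]
    calc dist (σ s) (σ t) ≤ (K:ℝ) * dist (γ (c s)) (γ (c t)) := h1
      _ ≤ (K:ℝ) * ∫ r in (c t)..(c s), ms r :=
          mul_le_mul_of_nonneg_left h2 K.coe_nonneg
      _ = ∫ r in (c t)..(c s), g r := by rw [h3, h4]
      _ = G s - G t := h5
  have hσ_dist : ∀ t s : ℝ, dist (σ s) (σ t) ≤ |G s - G t| := by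
    intro t s
    rcases le_total t s with h | h
    · exact (hσ_lip t s h).trans (le_abs_self _)
    · rw [dist_comm, abs_sub_comm]
      exact (hσ_lip s t h).trans (le_abs_self _)
  have hσ_cont : Continuous σ := by
    refine continuous_iff_continuousAt.2 fun t => ?_
    rw [ContinuousAt, tendsto_iff_dist_tendsto_zero]
    apply squeeze_zero (fun s => dist_nonneg) (fun s => hσ_dist t s)
    have : Tendsto (fun s => |G s - G t|) (𝓝 t) (𝓝 |G t - G t|) :=
      (((hG_cont.tendsto t).sub tendsto_const_nhds).abs)
    simpa using this
  -- dense sequence in the image of σ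
  obtain ⟨y, hy⟩ : ∃ y : ℕ → Y, ∀ t : ℝ, ∀ ε > 0, ∃ n, dist (σ t) (y n) < ε := by
    set e := (Denumerable.eqv ℚ).symm with he_def
    refine ⟨fun n => σ ((e n : ℚ) : ℝ), fun t ε hε => ?_⟩
    have hrange : Set.range (fun n : ℕ => ((e n : ℚ) : ℝ)) = Set.range ((↑) : ℚ → ℝ) := by
      ext x
      constructor
      · rintro ⟨n, rfl⟩; exact ⟨e n, rfl⟩
      · rintro ⟨r, rfl⟩; exact ⟨e.symm r, by simp⟩
    have hdense : Dense (Set.range (fun n : ℕ => ((e n : ℚ) : ℝ))) := by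
      rw [hrange]; exact Rat.denseRange_cast
    have h1 : σ t ∈ closure (σ '' (Set.range fun n : ℕ => ((e n : ℚ) : ℝ))) := by
      have ht : t ∈ closure (Set.range fun n : ℕ => ((e n : ℚ) : ℝ)) := by
        rw [hdense.closure_eq]; trivial
      exact image_closure_subset_closure_image hσ_cont (Set.mem_image_of_mem σ ht)
    rw [Metric.mem_closure_iff] at h1
    obtain ⟨z, hz, hdz⟩ := h1 ε hε
    obtain ⟨x, ⟨n, rfl⟩, rfl⟩ := hz
    exact ⟨n, hdz⟩
  set f : ℕ → ℝ → ℝ := fun n t => dist (σ t) (y n) with hf_def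
  have hf_cont : ∀ n, Continuous (f n) := fun n => hσ_cont.dist continuous_const
  have hf_tri : ∀ n (t s : ℝ), |f n s - f n t| ≤ dist (σ s) (σ t) := fun n t s =>
    abs_dist_sub_le _ _ _
  have hmono1 : ∀ n, Monotone (fun t => f n t + G t) := by
    intro n a b hab
    have h1 := (abs_le.1 (hf_tri n a b)).1
    have h2 := (hσ_lip a b hab)
    dsimp only
    linarith
  have hmono2 : ∀ n, Monotone (fun t => G t - f n t) := by
    intro n a b hab
    have h1 := (abs_le.1 (hf_tri n a b)).2
    have h2 := (hσ_lip a b hab)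
    dsimp only
    linarith
  -- a.e. differentiability package
  have hD : ∀ᵐ x ∂(volume : Measure ℝ), HasDerivAt G (g x) x ∧
      ∀ n, HasDerivAt (f n) (deriv (f n) x) x ∧ |deriv (f n) x| ≤ g x := by
    filter_upwards [hG_deriv, ae_all_iff.2 fun n => (hmono1 n).ae_differentiableAt,
      ae_all_iff.2 fun n => (hmono2 n).ae_differentiableAt] with x hG h1 h2
    refine ⟨hG, fun n => ?_⟩
    have d1 := (h1 n).hasDerivAt
    have d2 := (h2 n).hasDerivAt
    have hfd : HasDerivAt (f n) (deriv (fun t => f n t + G t) x - g x) x := by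
      have := d1.sub hG
      have e : (fun t => f n t + G t) - G = f n := by ext t; simp only [Pi.sub_apply]; ring
      rw [e] at this; exact this
    refine ⟨hfd.differentiableAt.hasDerivAt, ?_⟩
    have e1 : deriv (f n) x = deriv (fun t => f n t + G t) x - g x := hfd.deriv
    have hfd2 : HasDerivAt (f n) (g x - deriv (fun t => G t - f n t) x) x := by
      have := hG.sub d2
      have e : (G - fun t => G t - f n t) = f n := by ext t; simp only [Pi.sub_apply]; ring
      rw [e] at this; exact this
    have e2 : deriv (f n) x = g x - deriv (fun t => G t - f n t) x := hfd2.deriv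
    have p1 : 0 ≤ deriv (fun t => f n t + G t) x := aux_mono_deriv_nonneg (hmono1 n) d1
    have p2 : 0 ≤ deriv (fun t => G t - f n t) x := aux_mono_deriv_nonneg (hmono2 n) d2
    rw [abs_le]
    constructor
    · rw [e1]; linarith
    · rw [e2]; linarith
  have hder_int : ∀ n, Integrable (deriv (f n)) volume := by
    intro n
    apply hg_int.mono' (measurable_deriv (f n)).aestronglyMeasurable
    filter_upwards [hD] with x hx
    rw [Real.norm_eq_abs]
    exact (hx.2 n).2
  -- fundamental theorem of calculus for f n
  have hftc : ∀ n (t s : ℝ), t ≤ s → f n s - f n t = ∫ x in t..s, deriv (f n) x := by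
    intro n t s hts
    have hc1 : Continuous (fun t => f n t + G t) := (hf_cont n).add hG_cont
    have hc2 : Continuous (fun t => G t - f n t) := hG_cont.sub (hf_cont n)
    have i1 := aux_mono_integral_deriv_le (hmono1 n) hc1 hts
    have i2 := aux_mono_integral_deriv_le (hmono2 n) hc2 hts
    have e1 : ∫ x in t..s, deriv (fun u => f n u + G u) x
        = (∫ x in t..s, deriv (f n) x) + ∫ x in t..s, g x := by
      rw [← intervalIntegral.integral_add ((hder_int n).intervalIntegrable)
        hg_int.intervalIntegrable]
      apply intervalIntegral.integral_congr_ae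
      filter_upwards [hD] with x hx _
      exact ((hx.2 n).1.add hx.1).deriv
    have e2 : ∫ x in t..s, deriv (fun u => G u - f n u) x
        = (∫ x in t..s, g x) - ∫ x in t..s, deriv (f n) x := by
      rw [← intervalIntegral.integral_sub hg_int.intervalIntegrable
        ((hder_int n).intervalIntegrable)]
      apply intervalIntegral.integral_congr_ae
      filter_upwards [hD] with x hx _
      exact (hx.1.sub (hx.2 n).1).deriv
    have hGint : ∫ x in t..s, g x = G s - G t := (hG_diff t s).symm
    rw [e1, hGint] at i1
    rw [e2, hGint] at i2
    linarith
  -- the candidate metric speed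
  set M : ℝ → ℝ := fun x => (⨆ n, ENNReal.ofReal |deriv (f n) x|).toReal with hM_def
  set msc : ℝ → ℝ := fun x => min (M x) (g x) with hmsc_def
  have hM_meas : Measurable M :=
    (Measurable.iSup fun n => ENNReal.measurable_ofReal.comp
      (measurable_deriv (f n)).abs).ennreal_toReal
  have hmsc_meas : Measurable msc := hM_meas.min hg_meas
  have hmsc_nonneg : ∀ t, 0 ≤ msc t := fun t => le_min ENNReal.toReal_nonneg (hg_nonneg t)
  have hmsc_le_g : ∀ t, msc t ≤ g t := fun t => min_le_right _ _
  have hmsc_int : Integrable msc volume := by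
    apply hg_int.mono' hmsc_meas.aestronglyMeasurable
    exact Eventually.of_forall fun t => by
      rw [Real.norm_eq_abs, abs_of_nonneg (hmsc_nonneg t)]; exact hmsc_le_g t
  have hB : ∀ᵐ x ∂(volume : Measure ℝ), (∀ n, |deriv (f n) x| ≤ msc x) ∧ msc x = M x ∧
      ∀ ε > 0, ∃ n, M x - ε < |deriv (f n) x| := by
    filter_upwards [hD] with x hx
    have hsup_le : (⨆ n, ENNReal.ofReal |deriv (f n) x|) ≤ ENNReal.ofReal (g x) :=
      iSup_le fun n => ENNReal.ofReal_le_ofReal (hx.2 n).2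
    have hsup_ne : (⨆ n, ENNReal.ofReal |deriv (f n) x|) ≠ ⊤ :=
      (lt_of_le_of_lt hsup_le ENNReal.ofReal_lt_top).ne
    have hMg : M x ≤ g x := by
      have := ENNReal.toReal_mono ENNReal.ofReal_ne_top hsup_le
      rwa [ENNReal.toReal_ofReal (hg_nonneg x)] at this
    have hle : ∀ n, |deriv (f n) x| ≤ M x := fun n => by
      have := ENNReal.toReal_mono hsup_ne
        (le_iSup (fun n => ENNReal.ofReal |deriv (f n) x|) n)
      rwa [ENNReal.toReal_ofReal (abs_nonneg _)] at this
    refine ⟨fun n => le_min (hle n) (hx.2 n).2, min_eq_left hMg, fun ε hε => ?_⟩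
    by_contra hcon
    push_neg at hcon
    rcases lt_or_ge (M x - ε) 0 with hneg | hpos
    · exact absurd (hcon 0) (not_le.2 (lt_of_lt_of_le hneg (abs_nonneg _)))
    · have hsle : (⨆ n, ENNReal.ofReal |deriv (f n) x|) ≤ ENNReal.ofReal (M x - ε) :=
        iSup_le fun n => ENNReal.ofReal_le_ofReal (hcon n)
      have := ENNReal.toReal_mono ENNReal.ofReal_ne_top hsle
      rw [ENNReal.toReal_ofReal hpos] at this
      have hMx : M x ≤ M x - ε := this
      linarith
  -- admissibility: the curve bound with msc
  have hadm : ∀ t s : ℝ, t ≤ s → dist (σ s) (σ t) ≤ ∫ x in t..s, msc x := by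
    intro t s hts
    refine le_of_forall_pos_le_add fun ε hε => ?_
    obtain ⟨n, hn⟩ := hy t (ε/2) (by positivity)
    have h1 : dist (σ s) (σ t) ≤ |f n s - f n t| + 2 * dist (σ t) (y n) := by
      have tri : dist (σ s) (σ t) ≤ dist (σ s) (y n) + dist (σ t) (y n) :=
        dist_triangle_right _ _ _
      have h2 : f n s ≤ f n t + |f n s - f n t| := by
        have := le_abs_self (f n s - f n t); linarith
      have e1 : dist (σ s) (y n) = f n s := rfl
      have e2 : dist (σ t) (y n) = f n t := rfl
      rw [e1, e2] at tri
      linarith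
    have h2 : |f n s - f n t| ≤ ∫ x in t..s, msc x := by
      rw [hftc n t s hts]
      calc |∫ x in t..s, deriv (f n) x| ≤ ∫ x in t..s, |deriv (f n) x| :=
            intervalIntegral.abs_integral_le_integral_abs hts
        _ ≤ ∫ x in t..s, msc x := by
            apply intervalIntegral.integral_mono_ae hts
              ((hder_int n).abs.intervalIntegrable) hmsc_int.intervalIntegrable
            filter_upwards [hB] with x hx
            exact hx.1 n
    linarith
  -- the main tendsto statement
  have hmain : ∀ᵐ t ∂(volume.restrict (Set.Ioo (0:ℝ) 1)),
      Tendsto (fun h : ℝ => dist (φ (γ (t + h))) (φ (γ t)) / |h|) (𝓝[≠] 0) (𝓝 (msc t)) := by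
    filter_upwards [ae_restrict_mem measurableSet_Ioo,
      ae_restrict_of_ae (aux_ldt hmsc_int), ae_restrict_of_ae hB,
      ae_restrict_of_ae hD] with t ht hldt hBt hDt
    have hct : c t = t := hc_eq t ht.1.le ht.2.le
    have hev_eq : ∀ᶠ h : ℝ in 𝓝[≠] 0,
        dist (σ (t+h)) (σ t) / |h| = dist (φ (γ (t + h))) (φ (γ t)) / |h| := by
      have htt : Tendsto (fun h : ℝ => t + h) (𝓝 0) (𝓝 t) := by
        simpa using (continuous_add_left t).tendsto (0:ℝ)
      have hmem : ∀ᶠ h : ℝ in 𝓝 0, t + h ∈ Set.Ioo (0:ℝ) 1 :=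
        htt (isOpen_Ioo.mem_nhds ht)
      filter_upwards [hmem.filter_mono nhdsWithin_le_nhds] with h hh
      rw [hσ_def]
      dsimp only
      rw [hc_eq (t+h) hh.1.le hh.2.le, hct]
    have key : Tendsto (fun h : ℝ => dist (σ (t+h)) (σ t) / |h|) (𝓝[≠] 0) (𝓝 (msc t)) := by
      rw [Metric.tendsto_nhds]
      intro ε hε
      -- upper bound
      have hup : ∀ᶠ h : ℝ in 𝓝[≠] 0,
          dist (σ (t+h)) (σ t) / |h| ≤ |(∫ x in t..(t+h), msc x) / h| := by
        filter_upwards [self_mem_nhdsWithin] with h hh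
        rcases lt_or_gt_of_ne (hh : h ≠ 0) with hneg | hpos
        · have h1 : dist (σ t) (σ (t+h)) ≤ ∫ x in (t+h)..t, msc x :=
            hadm (t+h) t (by linarith)
          have h2 : ∫ x in (t+h)..t, msc x = -∫ x in t..(t+h), msc x :=
            (intervalIntegral.integral_symm _ _)
          rw [dist_comm]
          have habs : |h| = -h := abs_of_neg hneg
          rw [habs]
          rw [div_le_iff₀ (by linarith)]
          calc dist (σ t) (σ (t+h)) ≤ -∫ x in t..(t+h), msc x := h2 ▸ h1
            _ = (∫ x in t..(t+h), msc x) / h * -h := by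
                have hne : h ≠ 0 := ne_of_lt hneg
                field_simp
            _ ≤ |(∫ x in t..(t+h), msc x) / h| * -h := by
                apply mul_le_mul_of_nonneg_right (le_abs_self _) (by linarith)
        · have h1 : dist (σ (t+h)) (σ t) ≤ ∫ x in t..(t+h), msc x :=
            hadm t (t+h) (by linarith)
          have habs : |h| = h := abs_of_pos hpos
          rw [habs, div_le_iff₀ hpos]
          calc dist (σ (t+h)) (σ t) ≤ ∫ x in t..(t+h), msc x := h1
            _ = (∫ x in t..(t+h), msc x) / h * h := by
                have hne : h ≠ 0 := ne_of_gt hpos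
                field_simp
            _ ≤ |(∫ x in t..(t+h), msc x) / h| * h := by
                apply mul_le_mul_of_nonneg_right (le_abs_self _) hpos.le
      have hupt : Tendsto (fun h : ℝ => |(∫ x in t..(t+h), msc x) / h|) (𝓝[≠] 0)
          (𝓝 |msc t|) := hldt.abs
      rw [abs_of_nonneg (hmsc_nonneg t)] at hupt
      have hub : ∀ᶠ h in 𝓝[≠] (0:ℝ), dist (σ (t+h)) (σ t) / |h| < msc t + ε := by
        filter_upwards [hup, hupt.eventually (gt_mem_nhds (lt_add_of_pos_right _ hε))]
          with h h1 h2
        exact lt_of_le_of_lt h1 h2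
      -- lower bound
      obtain ⟨n, hn⟩ := hBt.2.2 (ε/2) (by positivity)
      have hdn : Tendsto (fun h : ℝ => |f n (t+h) - f n t| / |h|) (𝓝[≠] 0)
          (𝓝 |deriv (f n) t|) := by
        have h0 := (aux_hasDerivAt_iff_ratio.1 (hDt.2 n).1).abs
        refine h0.congr fun h => ?_
        rw [abs_div]
      have hlb : ∀ᶠ h in 𝓝[≠] (0:ℝ), msc t - ε < dist (σ (t+h)) (σ t) / |h| := by
        have h1 : ∀ᶠ h in 𝓝[≠] (0:ℝ),
            |deriv (f n) t| - ε/2 < |f n (t+h) - f n t| / |h| :=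
          hdn.eventually (lt_mem_nhds (by linarith))
        filter_upwards [h1, self_mem_nhdsWithin] with h hh hne
        have tri : |f n (t+h) - f n t| ≤ dist (σ (t+h)) (σ t) := hf_tri n t (t+h)
        have hpos : (0:ℝ) < |h| := abs_pos.2 hne
        have hdiv : |f n (t+h) - f n t| / |h| ≤ dist (σ (t+h)) (σ t) / |h| := by
          gcongr
        have hmM : msc t = M t := hBt.2.1
        rw [hmM]
        linarith
      filter_upwards [hub, hlb] with h h1 h2
      rw [Real.dist_eq, abs_sub_lt_iff]
      constructor <;> linarith
    exact key.congr' (by filter_upwards [hev_eq] with h hh; exact hh)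
  -- g = K * ms a.e. on Ioo 0 1
  have hg_eq_Ioo : ∀ᵐ t ∂(volume.restrict (Set.Ioo (0:ℝ) 1)), g t = (K:ℝ) * ms t := by
    filter_upwards [ae_restrict_of_ae hg_eq_glob, ae_restrict_mem measurableSet_Ioo]
      with t h1 h2
    exact h1 ⟨h2.1, h2.2.le⟩
  -- the locLip bound
  have hfinal : ∀ᵐ t ∂(volume.restrict (Set.Ioo (0:ℝ) 1)),
      msc t ≤ locLip φ (γ t) * ms t := by
    filter_upwards [hmain, hms_speed, hg_eq_Ioo, ae_restrict_mem measurableSet_Ioo]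
      with t htm htγ htg htIoo
    rcases eq_or_lt_of_le (hms_nonneg t) with hms0 | hmspos
    · have h1 : msc t ≤ 0 := by
        have := hmsc_le_g t
        rw [htg, ← hms0, mul_zero] at this
        exact this
      rw [← hms0, mul_zero]
      exact h1
    · set L := locLip φ (γ t) with hL_def0
      have hev_pos : ∀ᶠ h in 𝓝[≠] (0:ℝ), 0 < dist (γ (t+h)) (γ t) / |h| :=
        htγ.eventually (lt_mem_nhds hmspos)
      have hev_ne : ∀ᶠ h in 𝓝[≠] (0:ℝ), γ (t+h) ≠ γ t := by
        filter_upwards [hev_pos] with h hh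
        intro hEq
        rw [hEq] at hh
        simp at hh
      have htendγ : Tendsto (fun h : ℝ => γ (t+h)) (𝓝[≠] 0) (𝓝 (γ t)) := by
        rw [tendsto_iff_dist_tendsto_zero]
        have habs : Tendsto (fun h : ℝ => |h|) (𝓝[≠] (0:ℝ)) (𝓝 0) :=
          (continuous_abs.tendsto' 0 0 abs_zero).mono_left nhdsWithin_le_nhds
        have hmul : Tendsto (fun h : ℝ => |h| * (dist (γ (t+h)) (γ t) / |h|)) (𝓝[≠] 0)
            (𝓝 (0 * ms t)) := habs.mul htγ
        rw [zero_mul] at hmul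
        refine hmul.congr' ?_
        filter_upwards [self_mem_nhdsWithin] with h hh
        rw [mul_comm, div_mul_cancel₀ _ (abs_ne_zero.2 (hh : h ≠ 0))]
      have hNB : (𝓝[≠] (γ t)).NeBot := by
        rw [← mem_closure_iff_nhdsWithin_neBot, Metric.mem_closure_iff]
        intro ε hε
        obtain ⟨h, hh1, hh2⟩ :=
          ((htendγ.eventually (Metric.ball_mem_nhds (γ t) hε)).and hev_ne).exists
        exact ⟨γ (t+h), hh2, by rw [dist_comm]; exact hh1⟩
      have hL_def : L = Filter.limsup
          (fun y => dist (φ y) (φ (γ t)) / dist y (γ t)) (𝓝[≠] (γ t)) := by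
        rw [hL_def0, locLip, if_pos hNB]
      have hQbdd : ∀ y : X, dist (φ y) (φ (γ t)) / dist y (γ t) ≤ (K:ℝ) := fun y => by
        rcases eq_or_ne (dist y (γ t)) 0 with h0 | h0
        · rw [h0, div_zero]; exact K.coe_nonneg
        · rw [div_le_iff₀ (lt_of_le_of_ne dist_nonneg (Ne.symm h0))]
          exact hφ.dist_le_mul y (γ t)
      have hbddu : IsBoundedUnder (· ≤ ·) (𝓝[≠] (γ t))
          (fun y => dist (φ y) (φ (γ t)) / dist y (γ t)) :=
        ⟨(K:ℝ), eventually_map.2 (Eventually.of_forall hQbdd)⟩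
      have key : ∀ ε > 0, msc t ≤ (L + ε) * ms t := by
        intro ε hε
        have hlt : ∀ᶠ y in 𝓝[≠] (γ t),
            dist (φ y) (φ (γ t)) / dist y (γ t) < L + ε := by
          apply Filter.eventually_lt_of_limsup_lt
          · rw [← hL_def]; linarith
          · exact hbddu
        have hγ' : Tendsto (fun h : ℝ => γ (t+h)) (𝓝[≠] 0) (𝓝[≠] (γ t)) :=
          tendsto_nhdsWithin_iff.2 ⟨htendγ, hev_ne⟩
        have hevQ := hγ'.eventually hlt
        apply le_of_tendsto_of_tendsto htm (tendsto_const_nhds.mul htγ)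
        filter_upwards [hevQ, hev_ne] with h hQ hne
        have hd0 : dist (γ (t+h)) (γ t) ≠ 0 := by
          simpa [dist_eq_zero] using hne
        have heq : dist (φ (γ (t+h))) (φ (γ t)) / |h|
            = (dist (φ (γ (t+h))) (φ (γ t)) / dist (γ (t+h)) (γ t))
              * (dist (γ (t+h)) (γ t) / |h|) := by
          field_simp
        rw [heq]
        exact mul_le_mul_of_nonneg_right hQ.le (by positivity)
      refine le_of_forall_pos_le_add fun δ hδ => ?_
      have hk := key (δ / ms t) (div_pos hδ hmspos)
      have hcalc : (L + δ / ms t) * ms t = L * ms t + δ := by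
        field_simp
      linarith
  refine ⟨msc, hmsc_nonneg, ?_, ?_, hmain, hfinal⟩
  · -- Lp integrability
    apply Integrable.mono' (g := fun t => (K:ℝ)^p * ms t ^ p) (hms_Lp.const_mul _)
    · exact ((Real.continuous_rpow_const hp0.le).measurable.comp
        hmsc_meas).aestronglyMeasurable
    · filter_upwards [ae_restrict_of_ae hg_eq_glob, ae_restrict_mem measurableSet_Ioc]
        with t h1 h2
      rw [Real.norm_eq_abs, abs_of_nonneg (Real.rpow_nonneg (hmsc_nonneg t) p)]
      have hle : msc t ≤ (K:ℝ) * ms t := by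
        have := hmsc_le_g t
        rwa [h1 h2] at this
      calc msc t ^ p ≤ ((K:ℝ) * ms t) ^ p :=
            Real.rpow_le_rpow (hmsc_nonneg t) hle hp0.le
        _ = (K:ℝ)^p * ms t ^ p := Real.mul_rpow K.coe_nonneg (hms_nonneg t)
  · -- admissibility
    intro t s h0 hts h1
    have e1 : φ (γ s) = σ s := by
      rw [hσ_def]; dsimp only; rw [hc_eq s (h0.trans hts) h1]
    have e2 : φ (γ t) = σ t := by
      rw [hσ_def]; dsimp only; rw [hc_eq t h0 (hts.trans h1)]
    rw [e1, e2]
    exact hadm t s hts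
end

section
/- Let (X,d,m) be a complete separable metric measure space with m a Radon measure finite on bounded sets, (Y,d_Y) a complete separable metric space, and T_n : X → Y Borel maps for n ∈ ℕ ∪ {∞}. Assume that for every bounded probability density ρ ∈ L^∞(m) with bounded support, the pushforward measures (T_n)_*(ρm) converge weakly to (T_∞)_*(ρm) in duality with C_b(Y). Then T_n → T_∞ locally in measure, i.e. for every bounded Borel set E ⊂ X and every ε > 0 one has m({x ∈ E : d_Y(T_n(x), T_∞(x)) ≥ ε}) → 0 as n → ∞. -/
open MeasureTheory Filter Set Topology
open scoped ENNReal

/-- A bump function equal to `1` on the ball of radius `ε/4` around `c` and vanishing at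
distance `≥ 3ε/4`, with values in `[0,1]`. -/
private lemma exists_bump {Y : Type*} [MetricSpace Y] (c : Y) (ε : ℝ) (hε : 0 < ε) :
    ∃ φ : BoundedContinuousFunction Y ℝ,
      (∀ y, 0 ≤ φ y) ∧ (∀ y, φ y ≤ 1) ∧
      (∀ y, dist y c < ε / 4 → φ y = 1) ∧ (∀ y, 3 * ε / 4 ≤ dist y c → φ y = 0) := by
  have hcont : Continuous fun y : Y => max 0 (min 1 ((3 * ε / 4 - dist y c) * (2 / ε))) := by
    fun_prop
  have hval : ∀ y : Y, 0 ≤ max 0 (min 1 ((3 * ε / 4 - dist y c) * (2 / ε))) ∧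
      max 0 (min 1 ((3 * ε / 4 - dist y c) * (2 / ε))) ≤ 1 := by
    intro y
    exact ⟨le_max_left _ _, max_le zero_le_one (min_le_left _ _)⟩
  refine ⟨BoundedContinuousFunction.ofNormedAddCommGroup _ hcont 1 (fun y => ?_), ?_, ?_, ?_, ?_⟩
  · rw [Real.norm_eq_abs, abs_le]
    exact ⟨by linarith [(hval y).1], (hval y).2⟩
  · intro y
    simpa using (hval y).1
  · intro y
    simpa using (hval y).2
  · intro y hy
    have h2ε : (0:ℝ) < 2 / ε := by positivity
    have key : (ε / 2) * (2 / ε) = 1 := by field_simp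
    have h1 : 1 ≤ (3 * ε / 4 - dist y c) * (2 / ε) := by
      rw [← key]
      exact mul_le_mul_of_nonneg_right (by linarith) h2ε.le
    rw [BoundedContinuousFunction.coe_ofNormedAddCommGroup]
    rw [min_eq_left h1, max_eq_right zero_le_one]
  · intro y hy
    have h2ε : (0:ℝ) < 2 / ε := by positivity
    have h1 : (3 * ε / 4 - dist y c) * (2 / ε) ≤ 0 :=
      mul_nonpos_of_nonpos_of_nonneg (by linarith) h2ε.le
    rw [BoundedContinuousFunction.coe_ofNormedAddCommGroup]
    rw [max_eq_left ((min_le_right _ _).trans h1)]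

/-- Main analytic step: on a bounded measurable set `S` of finite measure on which `Tinf` lands
in a ball of radius `ε/4` around `c`, the measure of the bad set tends to `0`. -/
private lemma aux_tendsto
    {X : Type*} [MetricSpace X] [MeasurableSpace X] [BorelSpace X]
    {Y : Type*} [MetricSpace Y] [MeasurableSpace Y] [BorelSpace Y]
    [SecondCountableTopology Y]
    (μ : Measure X)
    (T : ℕ → X → Y) (Tinf : X → Y)
    (hTmeas : ∀ n, Measurable (T n)) (hTinfmeas : Measurable Tinf)
    (hweak : ∀ ρ : X → ℝ, Measurable ρ → (∀ x, 0 ≤ ρ x) →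
      (∃ C : ℝ, ∀ x, ρ x ≤ C) → Bornology.IsBounded (Function.support ρ) →
      (∫ x, ρ x ∂μ) = 1 →
      ∀ φ : BoundedContinuousFunction Y ℝ,
        Tendsto (fun n => ∫ x, φ (T n x) * ρ x ∂μ) atTop
          (𝓝 (∫ x, φ (Tinf x) * ρ x ∂μ)))
    (S : Set X) (hSb : Bornology.IsBounded S) (hSm : MeasurableSet S) (hSfin : μ S ≠ ⊤)
    (c : Y) (ε : ℝ) (hε : 0 < ε) (hS : ∀ x ∈ S, dist (Tinf x) c < ε / 4) :
    Tendsto (fun n => μ {x ∈ S | ε ≤ dist (T n x) (Tinf x)}) atTop (𝓝 0) := by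
  have hSn : ∀ n, MeasurableSet {x ∈ S | ε ≤ dist (T n x) (Tinf x)} := fun n =>
    hSm.inter (measurableSet_le measurable_const ((hTmeas n).dist hTinfmeas))
  have hSnS : ∀ n, {x ∈ S | ε ≤ dist (T n x) (Tinf x)} ⊆ S := fun n x hx => hx.1
  by_cases h0 : μ S = 0
  · have hz : ∀ n, μ {x ∈ S | ε ≤ dist (T n x) (Tinf x)} = 0 := fun n =>
      measure_mono_null (hSnS n) h0
    simpa [hz] using (tendsto_const_nhds : Tendsto (fun _ : ℕ => (0 : ℝ≥0∞)) atTop (𝓝 0))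
  set m : ℝ := (μ S).toReal with hm
  have hm0 : 0 < m := ENNReal.toReal_pos h0 hSfin
  haveI : IsFiniteMeasure (μ.restrict S) :=
    ⟨by rwa [Measure.restrict_apply_univ, lt_top_iff_ne_top]⟩
  set ρ : X → ℝ := S.indicator (fun _ => m⁻¹) with hρ
  obtain ⟨φ, hφ0, hφle1, hφeq1, hφeq0⟩ := exists_bump c ε hε
  have hρmeas : Measurable ρ := measurable_const.indicator hSm
  have hρnn : ∀ x, 0 ≤ ρ x := fun x =>
    Set.indicator_nonneg (fun _ _ => by positivity) x
  have hρbd : ∃ C : ℝ, ∀ x, ρ x ≤ C := by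
    refine ⟨m⁻¹, fun x => ?_⟩
    by_cases hx : x ∈ S <;> simp [ρ, Set.indicator, hx] <;> positivity
  have hρsupp : Bornology.IsBounded (Function.support ρ) :=
    hSb.subset Set.support_indicator_subset
  have hρ1 : (∫ x, ρ x ∂μ) = 1 := by
    rw [hρ, MeasureTheory.integral_indicator_const _ hSm, smul_eq_mul, measureReal_def, ← hm,
      mul_inv_cancel₀ hm0.ne']
  have h := hweak ρ hρmeas hρnn hρbd hρsupp hρ1 φ
  -- the limit is 1
  have hlim : ∫ x, φ (Tinf x) * ρ x ∂μ = 1 := by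
    have heq : ∀ x, φ (Tinf x) * ρ x = ρ x := by
      intro x
      by_cases hx : x ∈ S
      · rw [hφeq1 _ (hS x hx)]; ring
      · simp [ρ, Set.indicator_of_notMem hx]
    simp only [heq]
    exact hρ1
  rw [hlim] at h
  -- rewrite the integrals as restricted integrals
  have hint : ∀ g : X → Y, ∫ x, φ (g x) * ρ x ∂μ = (∫ x in S, φ (g x) ∂μ) * m⁻¹ := by
    intro g
    have heq : ∀ x, φ (g x) * ρ x = S.indicator (fun x => φ (g x) * m⁻¹) x := by
      intro x
      by_cases hx : x ∈ S <;> simp [ρ, Set.indicator, hx]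
    simp only [heq]
    rw [MeasureTheory.integral_indicator hSm, MeasureTheory.integral_mul_const]
  have hconv : Tendsto (fun n => ∫ x in S, φ (T n x) ∂μ) atTop (𝓝 m) := by
    have h3 : Tendsto (fun n => (∫ x in S, φ (T n x) ∂μ) * m⁻¹ * m) atTop (𝓝 (1 * m)) :=
      (h.congr fun n => hint (T n)).mul_const m
    simpa [mul_assoc, inv_mul_cancel₀ hm0.ne'] using h3
  -- integrability over the restricted measure
  have hInt : ∀ n, Integrable (fun x => φ (T n x)) (μ.restrict S) := by
    intro n
    refine Integrable.mono' (integrable_const 1)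
      ((φ.continuous.measurable.comp (hTmeas n)).aestronglyMeasurable) (ae_of_all _ fun x => ?_)
    rw [Real.norm_eq_abs, abs_le]
    exact ⟨by linarith [hφ0 (T n x)], hφle1 (T n x)⟩
  -- the key inequality
  have hb : ∀ n, (μ {x ∈ S | ε ≤ dist (T n x) (Tinf x)}).toReal
      ≤ m - ∫ x in S, φ (T n x) ∂μ := by
    intro n
    set A := {x ∈ S | ε ≤ dist (T n x) (Tinf x)} with hA
    have hAm : MeasurableSet A := hSn n
    have hAS : A ⊆ S := hSnS n
    have h1 : (μ A).toReal = ∫ x in S, A.indicator (fun _ => (1:ℝ)) x ∂μ := by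
      rw [MeasureTheory.integral_indicator_const (1:ℝ) hAm, measureReal_def, Measure.restrict_apply hAm,
        Set.inter_eq_left.mpr hAS, smul_eq_mul, mul_one]
    have h2 : ∫ x in S, A.indicator (fun _ => (1:ℝ)) x ∂μ
        ≤ ∫ x in S, (1 - φ (T n x)) ∂μ := by
      refine integral_mono ((integrable_const (1:ℝ)).indicator hAm)
        ((integrable_const 1).sub (hInt n)) ?_
      intro x
      by_cases hx : x ∈ A
      · have hdist : 3 * ε / 4 ≤ dist (T n x) c := by
          have ht := dist_triangle (T n x) c (Tinf x)
          have h1' := hS x hx.1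
          have h2' := hx.2
          have hc := dist_comm c (Tinf x)
          linarith
        have hz : φ (T n x) = 0 := hφeq0 _ hdist
        simp [Set.indicator_of_mem hx, hz]
      · simp only [Set.indicator_of_notMem hx]
        linarith [hφle1 (T n x)]
    have h3 : ∫ x in S, (1 - φ (T n x)) ∂μ = m - ∫ x in S, φ (T n x) ∂μ := by
      rw [integral_sub (integrable_const 1) (hInt n), MeasureTheory.integral_const,
        measureReal_def, Measure.restrict_apply_univ, smul_eq_mul, mul_one]
    rw [← h3]
    exact h1.le.trans h2
  have hto : Tendsto (fun n => (μ {x ∈ S | ε ≤ dist (T n x) (Tinf x)}).toReal) atTop (𝓝 0) := by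
    refine squeeze_zero (fun n => ENNReal.toReal_nonneg) hb ?_
    have h4 : Tendsto (fun n => m - ∫ x in S, φ (T n x) ∂μ) atTop (𝓝 (m - m)) :=
      tendsto_const_nhds.sub hconv
    simpa using h4
  have hne : ∀ n, μ {x ∈ S | ε ≤ dist (T n x) (Tinf x)} ≠ ⊤ := fun n =>
    ((measure_mono (hSnS n)).trans_lt hSfin.lt_top).ne
  have := ENNReal.tendsto_ofReal hto
  rw [ENNReal.ofReal_zero] at this
  exact this.congr fun n => ENNReal.ofReal_toReal (hne n)

/-- **Weak convergence of pushforwards implies local convergence in measure.**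
If `(T_n)_* (ρ m) → (T_∞)_* (ρ m)` in duality with `C_b(Y)` for every bounded
probability density `ρ` with bounded support, then `T_n → T_∞` locally in measure. -/
theorem local_convergence_in_measure_of_pushforward
    {X : Type*} [MetricSpace X] [MeasurableSpace X] [BorelSpace X]
    {Y : Type*} [MetricSpace Y] [MeasurableSpace Y] [BorelSpace Y] [CompleteSpace Y] [TopologicalSpace.SeparableSpace Y]
    (μ : Measure X) (hbdd : ∀ s : Set X, Bornology.IsBounded s → μ s < ⊤)
    (T : ℕ → X → Y) (Tinf : X → Y)
    (hTmeas : ∀ n, Measurable (T n)) (hTinfmeas : Measurable Tinf)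
    (hweak : ∀ ρ : X → ℝ, Measurable ρ → (∀ x, 0 ≤ ρ x) →
      (∃ C : ℝ, ∀ x, ρ x ≤ C) → Bornology.IsBounded (Function.support ρ) →
      (∫ x, ρ x ∂μ) = 1 →
      ∀ φ : BoundedContinuousFunction Y ℝ,
        Tendsto (fun n => ∫ x, φ (T n x) * ρ x ∂μ) atTop
          (𝓝 (∫ x, φ (Tinf x) * ρ x ∂μ))) :
    ∀ E : Set X, Bornology.IsBounded E → MeasurableSet E → ∀ ε : ℝ, 0 < ε →
      Tendsto (fun n => μ {x ∈ E | ε ≤ dist (T n x) (Tinf x)}) atTop (𝓝 0) := by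
  intro E hEb hEm ε hε
  by_cases hY : Nonempty Y
  · obtain ⟨u, hu⟩ := TopologicalSpace.exists_dense_seq Y
    have hEfin : μ E < ⊤ := hbdd E hEb
    set W : ℕ → Set Y := fun i => Metric.ball (u i) (ε / 4) with hW
    set F : ℕ → Set X := fun N => E ∩ (Tinf ⁻¹' (⋃ i < N, W i))ᶜ with hF
    have hFm : ∀ N, MeasurableSet (F N) := by
      intro N
      exact hEm.inter ((hTinfmeas (MeasurableSet.biUnion (Set.to_countable _)
        (fun i _ => measurableSet_ball))).compl)
    have hFanti : Antitone F := by
      intro N M hNM x hx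
      refine ⟨hx.1, fun hmem => hx.2 ?_⟩
      obtain ⟨i, hiN, hiW⟩ := Set.mem_iUnion₂.mp hmem
      exact Set.mem_iUnion₂.mpr ⟨i, lt_of_lt_of_le hiN hNM, hiW⟩
    have hFempty : ⋂ N, F N = ∅ := by
      ext x
      simp only [Set.mem_iInter, Set.mem_empty_iff_false, iff_false]
      intro h
      obtain ⟨i, hi⟩ := hu.exists_dist_lt (Tinf x) (by positivity : (0:ℝ) < ε / 4)
      exact (h (i + 1)).2 (Set.mem_iUnion₂.mpr ⟨i, Nat.lt_succ_self i,
        Metric.mem_ball.mpr hi⟩)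
    have hFtend : Tendsto (fun N => μ (F N)) atTop (𝓝 0) := by
      have := tendsto_measure_iInter_atTop (fun N => (hFm N).nullMeasurableSet) hFanti
        ⟨0, ((measure_mono Set.inter_subset_left).trans_lt hEfin).ne⟩
      rw [hFempty] at this
      simp only [measure_empty] at this
      exact this
    rw [ENNReal.tendsto_nhds_zero]
    intro δ hδ
    have hhalf : (0 : ℝ≥0∞) < δ / 2 := ENNReal.half_pos hδ.ne'
    obtain ⟨N, hN⟩ : ∃ N, μ (F N) < δ / 2 := (hFtend.eventually_lt_const hhalf).exists
    -- the per-ball tendsto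
    have haux : ∀ i : ℕ,
        Tendsto (fun n => μ {x ∈ E ∩ Tinf ⁻¹' (W i) | ε ≤ dist (T n x) (Tinf x)})
          atTop (𝓝 0) := by
      intro i
      haveI : SecondCountableTopology Y := UniformSpace.secondCountable_of_separable Y
      refine aux_tendsto μ T Tinf hTmeas hTinfmeas hweak _
        (hEb.subset Set.inter_subset_left)
        (hEm.inter (hTinfmeas measurableSet_ball))
        (((measure_mono Set.inter_subset_left).trans_lt hEfin).ne)
        (u i) ε hε fun x hx => ?_
      exact Metric.mem_ball.mp hx.2
    have hsum : Tendsto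
        (fun n => ∑ i ∈ Finset.range N,
          μ {x ∈ E ∩ Tinf ⁻¹' (W i) | ε ≤ dist (T n x) (Tinf x)}) atTop (𝓝 0) := by
      have := tendsto_finset_sum (Finset.range N) fun i _ => haux i
      simpa using this
    filter_upwards [ENNReal.tendsto_nhds_zero.mp hsum (δ / 2) hhalf] with n hn
    have hincl : {x ∈ E | ε ≤ dist (T n x) (Tinf x)} ⊆
        F N ∪ ⋃ i ∈ Finset.range N, {x ∈ E ∩ Tinf ⁻¹' (W i) | ε ≤ dist (T n x) (Tinf x)} := by
      intro x hx
      by_cases hx' : Tinf x ∈ ⋃ i < N, W i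
      · obtain ⟨i, hiN, hiW⟩ := Set.mem_iUnion₂.mp hx'
        exact Or.inr (Set.mem_biUnion (Finset.mem_range.mpr hiN) ⟨⟨hx.1, hiW⟩, hx.2⟩)
      · exact Or.inl ⟨hx.1, hx'⟩
    calc μ {x ∈ E | ε ≤ dist (T n x) (Tinf x)}
        ≤ μ (F N ∪ ⋃ i ∈ Finset.range N,
            {x ∈ E ∩ Tinf ⁻¹' (W i) | ε ≤ dist (T n x) (Tinf x)}) := measure_mono hincl
      _ ≤ μ (F N) + μ (⋃ i ∈ Finset.range N,
            {x ∈ E ∩ Tinf ⁻¹' (W i) | ε ≤ dist (T n x) (Tinf x)}) := measure_union_le _ _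
      _ ≤ δ / 2 + δ / 2 := add_le_add hN.le
            ((measure_biUnion_finset_le _ _).trans hn)
      _ = δ := ENNReal.add_halves δ
  · have hXempty : IsEmpty X := ⟨fun x => hY ⟨Tinf x⟩⟩
    have hz : ∀ n : ℕ, {x ∈ E | ε ≤ dist (T n x) (Tinf x)} = ∅ := fun n =>
      Set.eq_empty_of_isEmpty _
    simpa [hz] using (tendsto_const_nhds : Tendsto (fun _ : ℕ => (0 : ℝ≥0∞)) atTop (𝓝 0))
end

section
/- Let Z¹, Z² ∈ L¹(TX) be two vector fields (or, in the Euclidean model case, Z¹, Z² ∈ L¹(ℝ^d, ℝ^d)), and for each n define the time-dependent vector field Z_n by Z_{n,t} := 2Z^{i(j)} for t ∈ [j/2ⁿ, (j+1)/2ⁿ), where i(j) = 1 if j is even and i(j) = 2 if j is odd. Then (Z_n) converges weakly in time and strongly in space to the time-independent vector field Z¹ + Z², i.e. for every φ ∈ C_c(ℝ) the convolutions Z_{n,·}^φ := ∫_ℝ φ(·−s) Z_{n,s} ds converge strongly in L¹([0,1], L¹) to (Z¹+Z²)^φ (with Z_{n,s} := 0 for s ∉ [0,1]). -/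
open MeasureTheory Filter Set Topology
open scoped Classical ENNReal

/-- The union of the even dyadic intervals `[2i/2ⁿ, (2i+1)/2ⁿ)` inside `[0,1)`. -/
def evenDyadic (n : ℕ) : Set ℝ :=
  {t | ∃ i : ℕ, 2 * i < 2 ^ n ∧ (2 * i : ℝ) / 2 ^ n ≤ t ∧ t < (2 * i + 1 : ℝ) / 2 ^ n}

/-- The alternating dyadic vector field `Z_{n,t} = 2 Z¹` on even dyadic intervals and
`2 Z²` on odd ones (and `0` outside `[0,1)`). -/
noncomputable def dyadicField {d : ℕ} (Z1 Z2 : EuclideanSpace ℝ (Fin d) → EuclideanSpace ℝ (Fin d))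
    (n : ℕ) (t : ℝ) (x : EuclideanSpace ℝ (Fin d)) : EuclideanSpace ℝ (Fin d) :=
  if t ∈ Set.Ico (0:ℝ) 1 then
    (if t ∈ evenDyadic n then (2:ℝ) • Z1 x else (2:ℝ) • Z2 x)
  else 0

lemma measurableSet_evenDyadic (n : ℕ) : MeasurableSet (evenDyadic n) := by
  have he : evenDyadic n = ⋃ i : ℕ,
      {t : ℝ | 2 * i < 2 ^ n ∧ (2 * i : ℝ) / 2 ^ n ≤ t ∧ t < (2 * i + 1 : ℝ) / 2 ^ n} := by
    ext t; simp [evenDyadic, Set.mem_iUnion]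
  rw [he]
  refine MeasurableSet.iUnion fun i => ?_
  by_cases h : 2 * i < 2 ^ n
  · have : {t : ℝ | 2 * i < 2 ^ n ∧ (2 * i : ℝ) / 2 ^ n ≤ t ∧ t < (2 * i + 1 : ℝ) / 2 ^ n}
        = Ico ((2 * i : ℝ) / 2 ^ n) ((2 * i + 1 : ℝ) / 2 ^ n) := by
      ext t; simp [h, Set.mem_Ico]
    rw [this]; exact measurableSet_Ico
  · have : {t : ℝ | 2 * i < 2 ^ n ∧ (2 * i : ℝ) / 2 ^ n ≤ t ∧ t < (2 * i + 1 : ℝ) / 2 ^ n}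
        = (∅ : Set ℝ) := by
      ext t; simp [h]
    rw [this]; exact MeasurableSet.empty

lemma evenDyadic_shift {n : ℕ} (hn : 1 ≤ n) (s : ℝ) :
    s ∈ Ico (0:ℝ) 1 ∩ evenDyadic n ↔
      s + ((2:ℝ) ^ n)⁻¹ ∈ Ico (0:ℝ) 1 \ evenDyadic n := by
  have hP : (0:ℝ) < 2 ^ n := by positivity
  obtain ⟨m, hm⟩ : ∃ m : ℕ, 2 ^ n = 2 * m := ⟨2 ^ (n - 1), by
    conv_lhs => rw [← Nat.sub_add_cancel hn]
    rw [pow_succ]; ring⟩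
  simp only [evenDyadic, Set.mem_inter_iff, Set.mem_diff, Set.mem_Ico, Set.mem_setOf_eq]
  constructor
  · rintro ⟨⟨hs0, hs1⟩, i, hi, hil, hir⟩
    have hil' : (2 * (i:ℝ)) ≤ s * 2 ^ n := by rwa [div_le_iff₀ hP] at hil
    have hir' : s * 2 ^ n < 2 * i + 1 := by rwa [lt_div_iff₀ hP] at hir
    have hi2 : 2 * i + 2 ≤ 2 ^ n := by omega
    have hi2R : (2 * (i:ℝ) + 2) ≤ 2 ^ n := by
      have := (Nat.cast_le (α := ℝ)).2 hi2
      push_cast at this; linarith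
    have hiv : (0:ℝ) < ((2:ℝ) ^ n)⁻¹ := by positivity
    have he : (s + ((2:ℝ)^n)⁻¹) * 2 ^ n = s * 2 ^ n + 1 := by field_simp
    refine ⟨⟨by linarith, ?_⟩, ?_⟩
    · have h2 : (s + ((2:ℝ)^n)⁻¹) * 2 ^ n < 1 * 2 ^ n := by
        rw [he, one_mul]; linarith
      exact lt_of_mul_lt_mul_right h2 hP.le
    · rintro ⟨j, hj, hjl, hjr⟩
      have hjl' : (2 * (j:ℝ)) ≤ (s + ((2:ℝ)^n)⁻¹) * 2 ^ n := by rwa [div_le_iff₀ hP] at hjl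
      have hjr' : (s + ((2:ℝ)^n)⁻¹) * 2 ^ n < 2 * j + 1 := by rwa [lt_div_iff₀ hP] at hjr
      rw [he] at hjl' hjr'
      have c1 : (2 * (j:ℝ)) < 2 * i + 2 := by linarith
      have c2 : (2 * (i:ℝ)) < 2 * j := by linarith
      have c1' : 2 * j < 2 * i + 2 := by exact_mod_cast c1
      have c2' : 2 * i < 2 * j := by exact_mod_cast c2
      omega
  · rintro ⟨⟨hv0, hv1⟩, hvE⟩
    set v := s + ((2:ℝ)^n)⁻¹ with hv
    have hiv : (0:ℝ) < ((2:ℝ) ^ n)⁻¹ := by positivity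
    have hvinv : ((2:ℝ)^n)⁻¹ ≤ v := by
      by_contra hlt
      push_neg at hlt
      refine hvE ⟨0, by positivity, ?_, ?_⟩
      · push_cast; simpa using hv0
      · push_cast
        rw [lt_div_iff₀ hP]
        have := mul_lt_mul_of_pos_right hlt hP
        rw [inv_mul_cancel₀ hP.ne'] at this
        linarith
    have hs0 : 0 ≤ s := by rw [hv] at hvinv; linarith
    have hs1 : s < 1 := by rw [hv] at hv1; linarith
    set k := ⌊v * 2 ^ n⌋₊ with hk
    have hvP0 : 0 ≤ v * 2 ^ n := mul_nonneg hv0 hP.le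
    have hk1 : (k:ℝ) ≤ v * 2 ^ n := Nat.floor_le hvP0
    have hk2 : v * 2 ^ n < k + 1 := Nat.lt_floor_add_one _
    have hklt : k < 2 ^ n := by
      have h2 : v * 2 ^ n < (((2:ℕ) ^ n : ℕ) : ℝ) := by push_cast; nlinarith
      exact (Nat.floor_lt hvP0).2 h2
    obtain ⟨i, hi⟩ : ∃ i, k = 2 * i + 1 := by
      rcases Nat.even_or_odd k with hev | ho
      · exfalso
        obtain ⟨i0, hi0⟩ := hev
        have hk2i : k = 2 * i0 := by omega
        refine hvE ⟨i0, by omega, ?_, ?_⟩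
        · rw [div_le_iff₀ hP]
          have : ((2 * i0 : ℕ) : ℝ) ≤ v * 2 ^ n := by rw [← hk2i]; exact hk1
          push_cast at this; linarith
        · rw [lt_div_iff₀ hP]
          have : v * 2 ^ n < ((2 * i0 : ℕ) : ℝ) + 1 := by rw [← hk2i]; exact hk2
          push_cast at this; linarith
      · exact ho
    rw [hi] at hk1 hk2 hklt
    push_cast at hk1 hk2
    have hsP : s * 2 ^ n = v * 2 ^ n - 1 := by
      rw [hv, add_mul, inv_mul_cancel₀ hP.ne']; ring
    refine ⟨⟨hs0, hs1⟩, i, by omega, ?_, ?_⟩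
    · rw [div_le_iff₀ hP, hsP]; linarith
    · rw [lt_div_iff₀ hP, hsP]; linarith

lemma integrable_shift (φ : ℝ → ℝ) (hc : Continuous φ) (hs : HasCompactSupport φ) (τ : ℝ) :
    Integrable (fun s => φ (τ - s)) := by
  have hcs : HasCompactSupport fun s : ℝ => φ (τ - s) := by
    have h := hs.comp_homeomorph (Homeomorph.subLeft τ)
    simpa [Function.comp_def] using h
  exact (hc.comp (continuous_const.sub continuous_id)).integrable_of_hasCompactSupport hcs

lemma setIntegral_odd_eq {n : ℕ} (hn : 1 ≤ n) (f : ℝ → ℝ) :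
    ∫ s in Ico (0:ℝ) 1 \ evenDyadic n, f s =
      ∫ s in Ico (0:ℝ) 1 ∩ evenDyadic n, f (s + ((2:ℝ)^n)⁻¹) := by
  have hmE : MeasurableSet (Ico (0:ℝ) 1 ∩ evenDyadic n) :=
    measurableSet_Ico.inter (measurableSet_evenDyadic n)
  have hmO : MeasurableSet (Ico (0:ℝ) 1 \ evenDyadic n) :=
    measurableSet_Ico.diff (measurableSet_evenDyadic n)
  rw [← integral_indicator hmO, ← integral_indicator hmE]
  rw [← integral_add_right_eq_self
      (fun s => (Ico (0:ℝ) 1 \ evenDyadic n).indicator f s) (((2:ℝ)^n)⁻¹)]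
  congr 1
  funext s
  by_cases h : s ∈ Ico (0:ℝ) 1 ∩ evenDyadic n
  · rw [Set.indicator_of_mem ((evenDyadic_shift hn s).1 h), Set.indicator_of_mem h]
  · rw [Set.indicator_of_notMem (fun hmem => h ((evenDyadic_shift hn s).2 hmem)),
      Set.indicator_of_notMem h]

lemma key_bound (φ : ℝ → ℝ) (hφc : Continuous φ) (hφs : HasCompactSupport φ)
    {ε : ℝ} (hε : 0 < ε) :
    ∃ N : ℕ, ∀ n ≥ N, ∀ t : ℝ,
      |(∫ s in Ico (0:ℝ) 1 ∩ evenDyadic n, φ (t - s)) -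
        ∫ s in Ico (0:ℝ) 1 \ evenDyadic n, φ (t - s)| ≤ ε := by
  have huc : UniformContinuous φ :=
    hφc.uniformContinuous_of_tendsto_cocompact hφs.is_zero_at_infty
  rw [Metric.uniformContinuous_iff] at huc
  obtain ⟨δ, hδ, hmod⟩ := huc ε hε
  obtain ⟨N0, hN0⟩ := pow_unbounded_of_one_lt (δ⁻¹) (one_lt_two (α := ℝ))
  refine ⟨max N0 1, fun n hn t => ?_⟩
  have hn1 : 1 ≤ n := le_trans (le_max_right _ _) hn
  have hP : (0:ℝ) < 2 ^ n := by positivity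
  have hPδ : ((2:ℝ) ^ n)⁻¹ < δ := by
    have h2 : (2:ℝ) ^ N0 ≤ 2 ^ n :=
      pow_le_pow_right₀ one_le_two (le_trans (le_max_left _ _) hn)
    have h3 : δ⁻¹ < 2 ^ n := lt_of_lt_of_le hN0 h2
    rwa [inv_lt_comm₀ hP hδ]
  have hmE : MeasurableSet (Ico (0:ℝ) 1 ∩ evenDyadic n) :=
    measurableSet_Ico.inter (measurableSet_evenDyadic n)
  have hIntE : IntegrableOn (fun s => φ (t - s)) (Ico (0:ℝ) 1 ∩ evenDyadic n) :=
    (integrable_shift φ hφc hφs t).integrableOn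
  have hshift : (fun s : ℝ => φ (t - (s + ((2:ℝ)^n)⁻¹)))
      = fun s => φ ((t - ((2:ℝ)^n)⁻¹) - s) := by
    funext s; ring_nf
  have hIntE' : IntegrableOn (fun s => φ (t - (s + ((2:ℝ)^n)⁻¹)))
      (Ico (0:ℝ) 1 ∩ evenDyadic n) := by
    rw [hshift]; exact (integrable_shift φ hφc hφs _).integrableOn
  have hodd : (∫ s in Ico (0:ℝ) 1 \ evenDyadic n, φ (t - s))
      = ∫ s in Ico (0:ℝ) 1 ∩ evenDyadic n, φ (t - (s + ((2:ℝ)^n)⁻¹)) :=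
    setIntegral_odd_eq hn1 (fun s => φ (t - s))
  rw [hodd, ← integral_sub hIntE hIntE']
  have hle1 : volume (Ico (0:ℝ) 1 ∩ evenDyadic n) ≤ 1 := by
    calc volume (Ico (0:ℝ) 1 ∩ evenDyadic n) ≤ volume (Ico (0:ℝ) 1) :=
          measure_mono inter_subset_left
      _ = 1 := by simp [Real.volume_Ico]
  have hfin : volume (Ico (0:ℝ) 1 ∩ evenDyadic n) < ∞ :=
    lt_of_le_of_lt hle1 (by simp)
  have hbound : |∫ s in Ico (0:ℝ) 1 ∩ evenDyadic n,
      (φ (t - s) - φ (t - (s + ((2:ℝ)^n)⁻¹)))|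
      ≤ ε * (volume (Ico (0:ℝ) 1 ∩ evenDyadic n)).toReal := by
    rw [← Real.norm_eq_abs]
    refine norm_setIntegral_le_of_norm_le_const hfin fun s _ => ?_
    have hd : dist (t - s) (t - (s + ((2:ℝ)^n)⁻¹)) = ((2:ℝ)^n)⁻¹ := by
      rw [Real.dist_eq]
      have e : (t - s) - (t - (s + ((2:ℝ)^n)⁻¹)) = ((2:ℝ)^n)⁻¹ := by ring
      rw [e, abs_of_nonneg (by positivity)]
    have := hmod (a := t - s) (b := t - (s + ((2:ℝ)^n)⁻¹)) (by rw [hd]; exact hPδ)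
    rw [Real.dist_eq] at this
    rw [Real.norm_eq_abs]
    exact this.le
  have htr : (volume (Ico (0:ℝ) 1 ∩ evenDyadic n)).toReal ≤ 1 := by
    have := ENNReal.toReal_mono (by simp) hle1
    simpa using this
  calc |∫ s in Ico (0:ℝ) 1 ∩ evenDyadic n,
        (φ (t - s) - φ (t - (s + ((2:ℝ)^n)⁻¹)))|
      ≤ ε * (volume (Ico (0:ℝ) 1 ∩ evenDyadic n)).toReal := hbound
    _ ≤ ε * 1 := by
        exact mul_le_mul_of_nonneg_left htr hε.le
    _ = ε := mul_one ε

/-- **Trotter–Kato type convergence of alternating fields.** The fields `Z_n`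
alternating between `2Z¹` and `2Z²` on dyadic intervals converge weakly in time and
strongly in space to the constant-in-time field `Z¹ + Z²`: for every `φ ∈ C_c(ℝ)` the
time-mollifications converge strongly in `L¹([0,1], L¹)`. -/
theorem dyadic_field_weak_time_strong_space {d : ℕ}
    (Z1 Z2 : EuclideanSpace ℝ (Fin d) → EuclideanSpace ℝ (Fin d))
    (hZ1 : Integrable Z1) (hZ2 : Integrable Z2) :
    ∀ φ : ℝ → ℝ, Continuous φ → HasCompactSupport φ →
      Tendsto (fun n : ℕ =>
          ∫ t in Set.Icc (0:ℝ) 1, ∫ x : EuclideanSpace ℝ (Fin d),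
            ‖(∫ s : ℝ, φ (t - s) • dyadicField Z1 Z2 n s x) -
              (∫ s in Set.Ico (0:ℝ) 1, φ (t - s) • (Z1 x + Z2 x))‖)
        atTop (𝓝 0) := by
  intro φ hφc hφs
  have hmE : ∀ n, MeasurableSet (Ico (0:ℝ) 1 ∩ evenDyadic n) := fun n =>
    measurableSet_Ico.inter (measurableSet_evenDyadic n)
  have hmO : ∀ n, MeasurableSet (Ico (0:ℝ) 1 \ evenDyadic n) := fun n =>
    measurableSet_Ico.diff (measurableSet_evenDyadic n)
  have hg : ∀ τ : ℝ, Integrable (fun s => φ (τ - s)) := integrable_shift φ hφc hφs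
  set M := ∫ x : EuclideanSpace ℝ (Fin d), ‖Z1 x - Z2 x‖ with hMdef
  have hM0 : 0 ≤ M := integral_nonneg fun x => norm_nonneg _
  -- inner identity
  have inner_eq : ∀ n t,
      (∫ x : EuclideanSpace ℝ (Fin d),
        ‖(∫ s : ℝ, φ (t - s) • dyadicField Z1 Z2 n s x) -
          (∫ s in Set.Ico (0:ℝ) 1, φ (t - s) • (Z1 x + Z2 x))‖)
      = |(∫ s in Ico (0:ℝ) 1 ∩ evenDyadic n, φ (t - s)) -
          ∫ s in Ico (0:ℝ) 1 \ evenDyadic n, φ (t - s)| * M := by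
    intro n t
    set A := ∫ s in Ico (0:ℝ) 1 ∩ evenDyadic n, φ (t - s) with hA
    set B := ∫ s in Ico (0:ℝ) 1 \ evenDyadic n, φ (t - s) with hB
    have hdisj : Disjoint (Ico (0:ℝ) 1 ∩ evenDyadic n) (Ico (0:ℝ) 1 \ evenDyadic n) :=
      Set.disjoint_left.2 fun x hxE hxO => hxO.2 hxE.2
    have hsplit : (∫ s in Ico (0:ℝ) 1, φ (t - s)) = A + B := by
      conv_lhs => rw [← Set.inter_union_diff (Ico (0:ℝ) 1) (evenDyadic n)]
      exact setIntegral_union hdisj (hmO n) (hg t).integrableOn (hg t).integrableOn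
    have hpt : ∀ x : EuclideanSpace ℝ (Fin d),
        ‖(∫ s : ℝ, φ (t - s) • dyadicField Z1 Z2 n s x) -
          (∫ s in Set.Ico (0:ℝ) 1, φ (t - s) • (Z1 x + Z2 x))‖
        = |A - B| * ‖Z1 x - Z2 x‖ := by
      intro x
      have hfield : (fun s : ℝ => φ (t - s) • dyadicField Z1 Z2 n s x)
          = fun s =>
            ((Ico (0:ℝ) 1 ∩ evenDyadic n).indicator (fun s => 2 * φ (t - s)) s) • Z1 x
            + ((Ico (0:ℝ) 1 \ evenDyadic n).indicator (fun s => 2 * φ (t - s)) s) • Z2 x := by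
        funext s
        by_cases h1 : s ∈ Ico (0:ℝ) 1
        · by_cases h2 : s ∈ evenDyadic n
          · simp [dyadicField, h1, h2, Set.indicator_of_mem, Set.indicator_of_notMem,
              smul_smul, mul_comm]
          · simp [dyadicField, h1, h2, Set.indicator_of_mem, Set.indicator_of_notMem,
              smul_smul, mul_comm]
        · have hE : s ∉ Ico (0:ℝ) 1 ∩ evenDyadic n := fun h => h1 h.1
          have hO : s ∉ Ico (0:ℝ) 1 \ evenDyadic n := fun h => h1 h.1
          simp [dyadicField, h1, Set.indicator_of_notMem hE, Set.indicator_of_notMem hO]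
      have h1 : Integrable (fun s : ℝ =>
          ((Ico (0:ℝ) 1 ∩ evenDyadic n).indicator (fun s => 2 * φ (t - s)) s) • Z1 x) :=
        (((hg t).const_mul 2).indicator (hmE n)).smul_const _
      have h2 : Integrable (fun s : ℝ =>
          ((Ico (0:ℝ) 1 \ evenDyadic n).indicator (fun s => 2 * φ (t - s)) s) • Z2 x) :=
        (((hg t).const_mul 2).indicator (hmO n)).smul_const _
      have lhs_eq : (∫ s : ℝ, φ (t - s) • dyadicField Z1 Z2 n s x)
          = (2 * A) • Z1 x + (2 * B) • Z2 x := by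
        rw [hfield, integral_add h1 h2, integral_smul_const, integral_smul_const,
          integral_indicator (hmE n), integral_indicator (hmO n),
          integral_const_mul, integral_const_mul]
      have rhs_eq : (∫ s in Set.Ico (0:ℝ) 1, φ (t - s) • (Z1 x + Z2 x))
          = (A + B) • (Z1 x + Z2 x) := by
        rw [integral_smul_const, hsplit]
      rw [lhs_eq, rhs_eq]
      have halg : (2 * A) • Z1 x + (2 * B) • Z2 x - (A + B) • (Z1 x + Z2 x)
          = (A - B) • (Z1 x - Z2 x) := by
        module
      rw [halg, norm_smul, Real.norm_eq_abs]
    calc (∫ x : EuclideanSpace ℝ (Fin d),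
          ‖(∫ s : ℝ, φ (t - s) • dyadicField Z1 Z2 n s x) -
            (∫ s in Set.Ico (0:ℝ) 1, φ (t - s) • (Z1 x + Z2 x))‖)
        = ∫ x : EuclideanSpace ℝ (Fin d), |A - B| * ‖Z1 x - Z2 x‖ := by
          simp only [hpt]
      _ = |A - B| * M := integral_const_mul _ _
  -- conclusion
  rw [Metric.tendsto_atTop]
  intro ε hε
  have hε' : 0 < ε / (2 * (M + 1)) := by positivity
  obtain ⟨N, hN⟩ := key_bound φ hφc hφs hε'
  refine ⟨N, fun n hn => ?_⟩
  rw [Real.dist_eq, sub_zero]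
  have hvol : (volume (Icc (0:ℝ) 1)).toReal = 1 := by simp
  have hfin : volume (Icc (0:ℝ) 1) < ∞ := by simp
  have hval : |∫ t in Set.Icc (0:ℝ) 1, ∫ x : EuclideanSpace ℝ (Fin d),
      ‖(∫ s : ℝ, φ (t - s) • dyadicField Z1 Z2 n s x) -
        (∫ s in Set.Ico (0:ℝ) 1, φ (t - s) • (Z1 x + Z2 x))‖|
      ≤ (ε / (2 * (M + 1)) * M) * (volume (Icc (0:ℝ) 1)).toReal := by
    rw [← Real.norm_eq_abs]
    refine norm_setIntegral_le_of_norm_le_const hfin fun t _ => ?_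
    rw [Real.norm_eq_abs, inner_eq n t, abs_of_nonneg (by positivity)]
    exact mul_le_mul_of_nonneg_right (hN n hn t) hM0
  rw [hvol, mul_one] at hval
  have hlast : ε / (2 * (M + 1)) * M < ε := by
    have h1 : ε / (2 * (M + 1)) * M ≤ ε / (2 * (M + 1)) * (M + 1) :=
      mul_le_mul_of_nonneg_left (by linarith) hε'.le
    have h2 : ε / (2 * (M + 1)) * (M + 1) = ε / 2 := by
      field_simp
    linarith
  calc |∫ t in Set.Icc (0:ℝ) 1, ∫ x : EuclideanSpace ℝ (Fin d),
        ‖(∫ s : ℝ, φ (t - s) • dyadicField Z1 Z2 n s x) -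
          (∫ s in Set.Ico (0:ℝ) 1, φ (t - s) • (Z1 x + Z2 x))‖|
      ≤ ε / (2 * (M + 1)) * M := hval
    _ < ε := hlast
end

section
/- Let X be a complete separable metric space with a Radon measure m finite on bounded sets, (Y,d_Y) a complete metric space, and T_n : X → X Borel for n ∈ ℕ ∪ {∞} with T_n → T_∞ locally in measure. Assume the pushforwards (T_n)_*m are locally equi-absolutely continuous with respect to m: for every ε > 0 and every bounded B ⊂ X there is δ > 0 such that m(E) < δ with E ⊂ B Borel implies (T_n)_*m(E) ≤ ε for every n. Then for every Borel essentially separably valued map u : X → Y, the maps u∘T_n converge locally in measure to u∘T_∞. -/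
open MeasureTheory Filter Set Topology
open scoped ENNReal NNReal

/-- **Lusin-type lemma**: a Borel map which is essentially separably valued is, off a set of
arbitrarily small measure inside a finite-measure set `B`, "uniformly continuous at one scale". -/
lemma exists_good_set
    {X : Type*} [MetricSpace X] [MeasurableSpace X] [BorelSpace X]
    {Y : Type*} [MetricSpace Y] [MeasurableSpace Y] [OpensMeasurableSpace Y]
    (μ : Measure X) {B : Set X} (hBmeas : MeasurableSet B) (hBfin : μ B ≠ ⊤)
    (u : X → Y) (humeas : Measurable u)
    {s : Set Y} (hs : TopologicalSpace.IsSeparable s) (hus : ∀ᵐ x ∂μ, u x ∈ s)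
    {ε₀ δ' : ℝ} (hε₀ : 0 < ε₀) (hδ' : 0 < δ') :
    ∃ W : Set X, MeasurableSet W ∧ W ⊆ B ∧ μ (B \ W) < ENNReal.ofReal δ' ∧
      ∃ r : ℝ, 0 < r ∧ ∀ x ∈ W, ∀ y ∈ W, dist x y < r → dist (u x) (u y) < ε₀ := by
  have hq : (0 : ℝ≥0∞) < ENNReal.ofReal (δ' / 4) := ENNReal.ofReal_pos.2 (by linarith)
  obtain ⟨c, hc_count, hc_sub⟩ := hs
  rcases c.eq_empty_or_nonempty with hc | hc
  · -- if the dense set is empty, then `s = ∅` and `μ B = 0`.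
    have hsempty : s = ∅ := by
      rw [hc, closure_empty] at hc_sub
      exact subset_empty_iff.1 hc_sub
    have hB0 : μ B = 0 := by
      have h1 : μ {x | u x ∉ s} = 0 := by simpa [ae_iff] using hus
      refine measure_mono_null (fun x _ => ?_) h1
      simp [hsempty]
    refine ⟨∅, MeasurableSet.empty, empty_subset _, ?_, 1, one_pos, by simp⟩
    rw [diff_empty, hB0]
    exact ENNReal.ofReal_pos.2 hδ'
  obtain ⟨f, hf⟩ := hc_count.exists_eq_range hc
  set ν := μ.restrict B with hνdef
  haveI : IsFiniteMeasure ν := by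
    constructor
    rw [hνdef, Measure.restrict_apply_univ]
    exact hBfin.lt_top
  set UB : ℕ → Set X := fun i => B ∩ u ⁻¹' Metric.ball (f i) (ε₀ / 2) with hUB
  set A : ℕ → Set X := disjointed UB with hA
  have hUBmeas : ∀ i, MeasurableSet (UB i) := fun i =>
    hBmeas.inter (humeas measurableSet_ball)
  have hAmeas : ∀ i, MeasurableSet (A i) := MeasurableSet.disjointed hUBmeas
  have hAdisj : Pairwise (Function.onFun Disjoint A) := disjoint_disjointed UB
  have hAsub : ∀ i, A i ⊆ UB i := disjointed_subset UB
  have hAB : ∀ i, A i ⊆ B := fun i => (hAsub i).trans inter_subset_left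
  have hAU : (⋃ i, A i) = ⋃ i, UB i := iUnion_disjointed
  -- the part of `B` not covered by the `A i` is null
  have hnull : ν (B \ ⋃ i, A i) = 0 := by
    have h1 : μ {x | u x ∉ s} = 0 := by simpa [ae_iff] using hus
    have h2 : B \ (⋃ i, A i) ⊆ {x | u x ∉ s} := by
      intro x hx hxs
      apply hx.2
      have hcl : u x ∈ closure (Set.range f) := by rw [← hf]; exact hc_sub hxs
      obtain ⟨y, ⟨i, rfl⟩, hy⟩ := Metric.mem_closure_iff.1 hcl (ε₀ / 2) (by linarith)
      rw [hAU]
      exact mem_iUnion.2 ⟨i, hx.1, Metric.mem_ball.2 hy⟩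
    rw [hνdef, Measure.restrict_apply' hBmeas]
    exact measure_mono_null (fun x hx => h2 hx.1) h1
  -- choose `N` so that the first `N` pieces almost fill `B`
  set V : ℕ → Set X := fun N => ⋃ i ∈ Finset.range N, A i with hV
  have hVmeas : ∀ N, MeasurableSet (V N) := fun N =>
    (Finset.range N).measurableSet_biUnion fun i _ => hAmeas i
  have hVU : (⋃ N, V N) = ⋃ i, A i := by
    apply subset_antisymm
    · exact iUnion_subset fun N => iUnion₂_subset fun i _ => subset_iUnion A i
    · refine iUnion_subset fun i => ?_
      refine subset_trans ?_ (subset_iUnion V (i + 1))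
      exact subset_biUnion_of_mem (Finset.self_mem_range_succ i)
  obtain ⟨N, hN⟩ : ∃ N, ν (B \ V N) < ENNReal.ofReal (δ' / 4) := by
    have ht := tendsto_measure_iInter_atTop (μ := ν) (s := fun N => B \ V N)
      (fun N => ((hBmeas.diff (hVmeas N))).nullMeasurableSet)
      (fun a b hab => diff_subset_diff_right
        (biUnion_subset_biUnion_left (Finset.range_subset_range.2 hab)))
      ⟨0, measure_ne_top ν _⟩
    have hint : ⋂ N, (B \ V N) = B \ ⋃ i, A i := by
      rw [← diff_iUnion, hVU]
    rw [hint, hnull] at ht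
    exact (ht.eventually_lt_const hq).exists
  -- approximate the pieces from inside by closed sets
  set εC : ℝ≥0∞ := ENNReal.ofReal (δ' / 4) / ((N : ℝ≥0∞) + 1) with hεC
  have hεC0 : εC ≠ 0 := by
    refine ENNReal.div_ne_zero.2 ⟨hq.ne', ?_⟩
    exact ENNReal.add_ne_top.2 ⟨ENNReal.natCast_ne_top N, ENNReal.one_ne_top⟩
  choose C hCsub hCclosed hCsmall using fun i : ℕ =>
    (hAmeas i).exists_isClosed_diff_lt (μ := ν) (measure_ne_top ν _) hεC0
  have hCmeas : ∀ i, MeasurableSet (C i) := fun i => (hCclosed i).measurableSet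
  have hCdisj : ∀ i j, i ≠ j → ∀ x ∈ C i, x ∉ C j := fun i j hij x hxi hxj =>
    Set.disjoint_left.1 (hAdisj hij) (hCsub i hxi) (hCsub j hxj)
  -- separated cores
  set th : ℕ → ℝ≥0∞ := fun m => ENNReal.ofReal (1 / ((m : ℝ) + 1)) with hth
  have hthanti : Antitone th := fun a b hab => ENNReal.ofReal_le_ofReal
    (one_div_le_one_div_of_le (by positivity) (add_le_add_left (Nat.cast_le.2 hab) 1))
  set D : ℕ → ℕ → Set X := fun m i =>
    C i ∩ ⋂ j, ⋂ (_ : j < N ∧ j ≠ i), {x | th m ≤ EMetric.infEdist x (C j)} with hD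
  set W : ℕ → Set X := fun m => ⋃ i, ⋃ (_ : i < N), D m i with hW
  have hDmono : ∀ i, Monotone fun m => D m i := fun i a b hab =>
    inter_subset_inter_right _ (iInter_mono fun j => iInter_mono fun _ => fun x hx =>
      le_trans (hthanti hab) hx)
  have hWmono : Monotone W := fun a b hab => iUnion₂_mono fun i _ => hDmono i hab
  have hDsubC : ∀ m i, D m i ⊆ C i := fun m i => inter_subset_left
  have hWsub : ∀ m, W m ⊆ ⋃ i, ⋃ (_ : i < N), C i := fun m =>
    iUnion₂_mono fun i _ => hDsubC m i
  have hWB : ∀ m, W m ⊆ B := fun m =>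
    (hWsub m).trans (iUnion₂_subset fun i _ => (hCsub i).trans (hAB i))
  have hWmeas : ∀ m, MeasurableSet (W m) := by
    intro m
    refine MeasurableSet.iUnion fun i => MeasurableSet.iUnion fun _ => ?_
    refine (hCmeas i).inter (MeasurableSet.iInter fun j => MeasurableSet.iInter fun _ => ?_)
    exact measurableSet_le measurable_const EMetric.continuous_infEdist.measurable
  have hth0 : Tendsto th atTop (𝓝 0) := by
    have h2 := ENNReal.tendsto_ofReal (tendsto_one_div_add_atTop_nhds_zero_nat)
    rw [ENNReal.ofReal_zero] at h2
    rw [hth]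
    exact h2
  have hWunion : (⋃ m, W m) = ⋃ i, ⋃ (_ : i < N), C i := by
    refine subset_antisymm (iUnion_subset hWsub) ?_
    refine iUnion₂_subset fun i hi x hx => ?_
    have key : ∀ᶠ m in atTop, ∀ j ∈ Finset.range N, j ≠ i →
        th m ≤ EMetric.infEdist x (C j) := by
      rw [eventually_all_finset]
      intro j hj
      rcases eq_or_ne j i with rfl | hne
      · exact Eventually.of_forall fun m h => absurd rfl h
      · have hpos : 0 < EMetric.infEdist x (C j) := by
          rw [EMetric.infEdist, EMetric.infEdist_pos_iff_notMem_closure, (hCclosed j).closure_eq]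
          exact fun hxj => hCdisj i j hne.symm x hx hxj
        exact (hth0.eventually_lt_const hpos).mono fun m hm _ => hm.le
    obtain ⟨m, hm⟩ := key.exists
    refine mem_iUnion.2 ⟨m, mem_iUnion.2 ⟨i, mem_iUnion.2 ⟨hi, ⟨hx, ?_⟩⟩⟩⟩
    exact mem_iInter.2 fun j => mem_iInter.2 fun hj =>
      hm j (Finset.mem_range.2 hj.1) hj.2
  set CU : Set X := ⋃ i, ⋃ (_ : i < N), C i with hCU
  have hCUmeas : MeasurableSet CU :=
    MeasurableSet.iUnion fun i => MeasurableSet.iUnion fun _ => hCmeas i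
  obtain ⟨m, hm⟩ : ∃ m, ν (CU \ W m) < ENNReal.ofReal (δ' / 4) := by
    have ht := tendsto_measure_iInter_atTop (μ := ν) (s := fun m => CU \ W m)
      (fun m => (hCUmeas.diff (hWmeas m)).nullMeasurableSet)
      (fun a b hab => diff_subset_diff_right (hWmono hab)) ⟨0, measure_ne_top ν _⟩
    have hint : ⋂ m, (CU \ W m) = ∅ := by
      rw [← diff_iUnion, hWunion, hCU, diff_self]
    rw [hint, measure_empty] at ht
    exact (ht.eventually_lt_const hq).exists
  refine ⟨W m, hWmeas m, hWB m, ?_, 1 / ((m : ℝ) + 1), by positivity, ?_⟩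
  · -- the measure bound
    have hsplit : B \ W m ⊆ (B \ V N) ∪ ((V N \ CU) ∪ (CU \ W m)) := by
      intro x hx
      by_cases h1 : x ∈ V N
      · by_cases h2 : x ∈ CU
        · exact Or.inr (Or.inr ⟨h2, hx.2⟩)
        · exact Or.inr (Or.inl ⟨h1, h2⟩)
      · exact Or.inl ⟨hx.1, h1⟩
    have hmid : ν (V N \ CU) ≤ ENNReal.ofReal (δ' / 4) := by
      have hsub2 : V N \ CU ⊆ ⋃ i ∈ Finset.range N, (A i \ C i) := by
        intro x hx
        obtain ⟨i, hiN, hiA⟩ := mem_iUnion₂.1 hx.1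
        refine mem_biUnion hiN ⟨hiA, fun hcx => hx.2 ?_⟩
        exact mem_iUnion.2 ⟨i, mem_iUnion.2 ⟨Finset.mem_range.1 hiN, hcx⟩⟩
      calc ν (V N \ CU) ≤ ∑ i ∈ Finset.range N, ν (A i \ C i) :=
            (measure_mono hsub2).trans (measure_biUnion_finset_le _ _)
        _ ≤ ∑ _i ∈ Finset.range N, εC := Finset.sum_le_sum fun i _ => (hCsmall i).le
        _ = (N : ℝ≥0∞) * εC := by
            rw [Finset.sum_const, Finset.card_range, nsmul_eq_mul]
        _ ≤ ((N : ℝ≥0∞) + 1) * εC := by gcongr; exact le_self_add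
        _ = ENNReal.ofReal (δ' / 4) := ENNReal.mul_div_cancel
            (by exact_mod_cast Nat.succ_ne_zero N)
            (ENNReal.add_ne_top.2 ⟨ENNReal.natCast_ne_top N, ENNReal.one_ne_top⟩)
    have hb : ν (B \ W m) ≤ ENNReal.ofReal (δ' / 4) +
        (ENNReal.ofReal (δ' / 4) + ENNReal.ofReal (δ' / 4)) := by
      refine (measure_mono hsplit).trans ?_
      refine (measure_union_le _ _).trans ?_
      refine add_le_add hN.le ?_
      exact (measure_union_le _ _).trans (add_le_add hmid hm.le)
    have hb2 : ν (B \ W m) < ENNReal.ofReal δ' := by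
      refine hb.trans_lt ?_
      rw [← ENNReal.ofReal_add (by linarith) (by linarith),
        ← ENNReal.ofReal_add (by linarith) (by linarith)]
      exact (ENNReal.ofReal_lt_ofReal_iff hδ').2 (by linarith)
    rwa [hνdef, Measure.restrict_apply' hBmeas,
      inter_eq_self_of_subset_left diff_subset] at hb2
  · -- the one-scale uniform continuity
    intro x hx y hy hxy
    obtain ⟨i, hiN, hxD⟩ := mem_iUnion₂.1 hx
    obtain ⟨j, hjN, hyD⟩ := mem_iUnion₂.1 hy
    rcases eq_or_ne i j with rfl | hij
    · have hxA : x ∈ UB i := hAsub i (hCsub i (hDsubC m i hxD))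
      have hyA : y ∈ UB i := hAsub i (hCsub i (hDsubC m i hyD))
      calc dist (u x) (u y) ≤ dist (u x) (f i) + dist (u y) (f i) := dist_triangle_right _ _ _
        _ < ε₀ / 2 + ε₀ / 2 := add_lt_add (Metric.mem_ball.1 hxA.2) (Metric.mem_ball.1 hyA.2)
        _ = ε₀ := by ring
    · exfalso
      have h1 : th m ≤ EMetric.infEdist x (C j) :=
        mem_iInter.1 (mem_iInter.1 hxD.2 j) ⟨hjN, hij.symm⟩
      have h2 : EMetric.infEdist x (C j) ≤ edist x y :=
        EMetric.infEdist_le_edist_of_mem (hDsubC m j hyD)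
      have h3 : th m ≤ ENNReal.ofReal (dist x y) :=
        le_trans h1 (h2.trans_eq (edist_dist x y))
      have h4 : 1 / ((m : ℝ) + 1) ≤ dist x y :=
        (ENNReal.ofReal_le_ofReal_iff dist_nonneg).1 h3
      linarith

/-- The limit map `Tinf` inherits a local absolute-continuity property from the
equi-absolute continuity of the `T n` and the local convergence in measure. -/
lemma preimage_tinf_small
    {X : Type*} [MetricSpace X] [MeasurableSpace X] [BorelSpace X]
    [TopologicalSpace.SeparableSpace X]
    (μ : Measure X) (hbdd : ∀ s : Set X, Bornology.IsBounded s → μ s < ⊤)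
    (T : ℕ → X → X) (Tinf : X → X)
    (hconv : ∀ E : Set X, Bornology.IsBounded E → MeasurableSet E → ∀ ε : ℝ, 0 < ε →
      Tendsto (fun n => μ {x ∈ E | ε ≤ dist (T n x) (Tinf x)}) atTop (𝓝 0))
    (hequi : ∀ ε : ℝ, 0 < ε → ∀ B : Set X, Bornology.IsBounded B →
      ∃ δ : ℝ, 0 < δ ∧ ∀ E : Set X, E ⊆ B → MeasurableSet E →
        μ E < ENNReal.ofReal δ → ∀ n, μ (T n ⁻¹' E) ≤ ENNReal.ofReal ε)
    {A : Set X} (hA : Bornology.IsBounded A) (hAmeas : MeasurableSet A)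
    {B : Set X} (hB : Bornology.IsBounded B) {η : ℝ} (hη : 0 < η) :
    ∃ δ : ℝ, 0 < δ ∧ ∀ S : Set X, S ⊆ B → MeasurableSet S → μ S < ENNReal.ofReal δ →
      μ (A ∩ Tinf ⁻¹' S) ≤ ENNReal.ofReal η := by
  haveI : SecondCountableTopology X := UniformSpace.secondCountable_of_separable X
  haveI : IsLocallyFiniteMeasure μ :=
    ⟨fun x => ⟨Metric.ball x 1, Metric.ball_mem_nhds x one_pos, hbdd _ Metric.isBounded_ball⟩⟩
  obtain ⟨δ, hδpos, hδ⟩ := hequi (η / 2) (half_pos hη) (Metric.thickening 1 B) hB.thickening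
  refine ⟨δ, hδpos, fun S hSB hSmeas hSδ => ?_⟩
  obtain ⟨U, hSU, hUopen, hUlt⟩ := S.exists_isOpen_lt_of_lt _ hSδ
  set U' : Set X := U ∩ Metric.thickening 1 B with hU'
  have hSU' : S ⊆ U' := fun x hx =>
    ⟨hSU hx, Metric.self_subset_thickening one_pos B (hSB hx)⟩
  have hU'open : IsOpen U' := hUopen.inter Metric.isOpen_thickening
  have hTn : ∀ n, μ (T n ⁻¹' U') ≤ ENNReal.ofReal (η / 2) :=
    hδ U' inter_subset_right hU'open.measurableSet
      (lt_of_le_of_lt (measure_mono inter_subset_left) hUlt)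
  set G : ℕ → Set X := fun k => (A ∩ Tinf ⁻¹' S) ∩
    {x | ENNReal.ofReal (1 / ((k : ℝ) + 1)) ≤ EMetric.infEdist (Tinf x) U'ᶜ} with hG
  have hGmono : Monotone G := by
    intro a b hab
    apply inter_subset_inter_right
    intro x hx
    simp only [mem_setOf_eq] at hx ⊢
    exact le_trans (ENNReal.ofReal_le_ofReal
      (one_div_le_one_div_of_le (by positivity) (add_le_add_left (Nat.cast_le.2 hab) 1))) hx
  have hGU : (⋃ k, G k) = A ∩ Tinf ⁻¹' S := by
    refine subset_antisymm (iUnion_subset fun k => inter_subset_left) fun x hx => ?_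
    have hpos : 0 < EMetric.infEdist (Tinf x) U'ᶜ := by
      rw [EMetric.infEdist, EMetric.infEdist_pos_iff_notMem_closure, hU'open.isClosed_compl.closure_eq]
      simpa using hSU' hx.2
    have htend : Tendsto (fun k : ℕ => ENNReal.ofReal (1 / ((k : ℝ) + 1))) atTop (𝓝 0) := by
      have h1 : Tendsto (fun k : ℕ => 1 / ((k : ℝ) + 1)) atTop (𝓝 0) :=
        tendsto_one_div_add_atTop_nhds_zero_nat
      simpa using ENNReal.tendsto_ofReal h1
    obtain ⟨k, hk⟩ := (htend.eventually_lt_const hpos).exists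
    exact mem_iUnion.2 ⟨k, hx, hk.le⟩
  have hbound : ∀ k, μ (G k) ≤ ENNReal.ofReal (η / 2) := by
    intro k
    have hsub : ∀ n, G k ⊆
        {x ∈ A | 1 / ((k : ℝ) + 1) ≤ dist (T n x) (Tinf x)} ∪ T n ⁻¹' U' := by
      intro n x hx
      by_cases hd : 1 / ((k : ℝ) + 1) ≤ dist (T n x) (Tinf x)
      · exact Or.inl ⟨hx.1.1, hd⟩
      · refine Or.inr ?_
        push_neg at hd
        by_contra hTU
        have h1 : EMetric.infEdist (Tinf x) U'ᶜ ≤ edist (Tinf x) (T n x) :=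
          EMetric.infEdist_le_edist_of_mem hTU
        have h2 : edist (Tinf x) (T n x) < ENNReal.ofReal (1 / ((k : ℝ) + 1)) := by
          rw [edist_dist]
          exact (ENNReal.ofReal_lt_ofReal_iff (by positivity)).2 (by rw [dist_comm]; exact hd)
        exact absurd (lt_of_le_of_lt (le_trans hx.2 h1) h2) (lt_irrefl _)
    have hlim : Tendsto (fun n => μ {x ∈ A | 1 / ((k : ℝ) + 1) ≤ dist (T n x) (Tinf x)} +
        ENNReal.ofReal (η / 2)) atTop (𝓝 (0 + ENNReal.ofReal (η / 2))) :=
      (hconv A hA hAmeas _ (by positivity)).add tendsto_const_nhds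
    have hle := ge_of_tendsto hlim (Eventually.of_forall fun n =>
      (measure_mono (hsub n)).trans ((measure_union_le _ _).trans
        (add_le_add_right (hTn n) _)))
    simpa using hle
  calc μ (A ∩ Tinf ⁻¹' S) = μ (⋃ k, G k) := by rw [hGU]
    _ ≤ ENNReal.ofReal (η / 2) :=
        le_of_tendsto (tendsto_measure_iUnion_atTop hGmono) (Eventually.of_forall hbound)
    _ ≤ ENNReal.ofReal η := ENNReal.ofReal_le_ofReal (by linarith)

/-- **Stability of local convergence in measure under left composition.**
If `T_n → T_∞` locally in measure, the pushforwards `(T_n)_* m` are locally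
equi-absolutely continuous w.r.t. `m`, and `u : X → Y` is Borel and essentially
separably valued, then `u ∘ T_n → u ∘ T_∞` locally in measure. -/
theorem comp_tendsto_locally_in_measure
    {X : Type*} [MetricSpace X] [MeasurableSpace X] [BorelSpace X]
    [CompleteSpace X] [TopologicalSpace.SeparableSpace X]
    {Y : Type*} [MetricSpace Y] [MeasurableSpace Y] [BorelSpace Y] [CompleteSpace Y]
    (μ : Measure X) (hbdd : ∀ s : Set X, Bornology.IsBounded s → μ s < ⊤)
    (T : ℕ → X → X) (Tinf : X → X)
    (hTmeas : ∀ n, Measurable (T n)) (hTinfmeas : Measurable Tinf)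
    (hconv : ∀ E : Set X, Bornology.IsBounded E → MeasurableSet E → ∀ ε : ℝ, 0 < ε →
      Tendsto (fun n => μ {x ∈ E | ε ≤ dist (T n x) (Tinf x)}) atTop (𝓝 0))
    (hequi : ∀ ε : ℝ, 0 < ε → ∀ B : Set X, Bornology.IsBounded B →
      ∃ δ : ℝ, 0 < δ ∧ ∀ E : Set X, E ⊆ B → MeasurableSet E →
        μ E < ENNReal.ofReal δ → ∀ n, μ (T n ⁻¹' E) ≤ ENNReal.ofReal ε)
    (u : X → Y) (humeas : Measurable u)
    (husep : ∃ s : Set Y, TopologicalSpace.IsSeparable s ∧ ∀ᵐ x ∂μ, u x ∈ s) :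
    ∀ E : Set X, Bornology.IsBounded E → MeasurableSet E → ∀ ε : ℝ, 0 < ε →
      Tendsto (fun n => μ {x ∈ E | ε ≤ dist (u (T n x)) (u (Tinf x))}) atTop (𝓝 0) := by
  intro E hE hEmeas ε hε
  rw [ENNReal.tendsto_atTop_zero]
  intro η hη
  obtain ⟨s, hssep, hsae⟩ := husep
  rcases Set.eq_empty_or_nonempty E with rfl | ⟨x0, hx0⟩
  · refine ⟨0, fun n _ => ?_⟩
    have hem : {x ∈ (∅ : Set X) | ε ≤ dist (u (T n x)) (u (Tinf x))} = ∅ := by simp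
    simp [hem]
  set ηr : ℝ := (min 1 η).toReal with hηr
  have hηmin : (min 1 η) ≠ ⊤ := ((min_le_left _ _).trans_lt ENNReal.one_lt_top).ne
  have hηr0 : 0 < ηr := ENNReal.toReal_pos (ne_of_gt (lt_min one_pos hη)) hηmin
  have hηrle : ENNReal.ofReal ηr ≤ η := by
    rw [hηr, ENNReal.ofReal_toReal hηmin]
    exact min_le_right _ _
  have h5 : (0 : ℝ≥0∞) < ENNReal.ofReal (ηr / 5) := ENNReal.ofReal_pos.2 (by linarith)
  -- cut off the part of `E` where `Tinf` escapes to infinity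
  obtain ⟨R, hR⟩ : ∃ R : ℕ,
      μ (E \ Tinf ⁻¹' Metric.closedBall x0 R) < ENNReal.ofReal (ηr / 5) := by
    have ht := tendsto_measure_iInter_atTop (μ := μ)
      (s := fun k : ℕ => E \ Tinf ⁻¹' Metric.closedBall x0 k)
      (fun k => (hEmeas.diff (hTinfmeas measurableSet_closedBall)).nullMeasurableSet)
      (fun a b hab => diff_subset_diff_right
        (preimage_mono (Metric.closedBall_subset_closedBall (by exact_mod_cast hab))))
      ⟨0, ((measure_mono diff_subset).trans_lt (hbdd E hE)).ne⟩
    have hempty : ⋂ k : ℕ, (E \ Tinf ⁻¹' Metric.closedBall x0 k) = ∅ := by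
      rw [eq_empty_iff_forall_notMem]
      intro x hx
      rw [mem_iInter] at hx
      obtain ⟨k, hk⟩ := exists_nat_ge (dist (Tinf x) x0)
      exact (hx k).2 (Metric.mem_closedBall.2 hk)
    rw [hempty, measure_empty] at ht
    exact (ht.eventually_lt_const h5).exists
  set F : Set X := E ∩ Tinf ⁻¹' Metric.closedBall x0 R with hF
  have hFmeas : MeasurableSet F := hEmeas.inter (hTinfmeas measurableSet_closedBall)
  have hFbdd : Bornology.IsBounded F := hE.subset inter_subset_left
  set B : Set X := Metric.closedBall x0 ((R : ℝ) + 1) with hB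
  have hBbdd : Bornology.IsBounded B := Metric.isBounded_closedBall
  have hBmeas : MeasurableSet B := measurableSet_closedBall
  obtain ⟨δ₁, hδ₁pos, hδ₁⟩ := hequi (ηr / 5) (by linarith) B hBbdd
  obtain ⟨δ₂, hδ₂pos, hδ₂⟩ := preimage_tinf_small μ hbdd T Tinf hconv hequi hFbdd hFmeas
    hBbdd (by linarith : (0 : ℝ) < ηr / 5)
  obtain ⟨W, hWmeas, hWB, hWsmall, r, hrpos, hunif⟩ :=
    exists_good_set μ hBmeas (hbdd B hBbdd).ne u humeas hssep hsae hε (lt_min hδ₁pos hδ₂pos)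
  obtain ⟨n₀, hn₀⟩ := ENNReal.tendsto_atTop_zero.1
    (hconv E hE hEmeas (min r 1) (lt_min hrpos one_pos)) (ENNReal.ofReal (ηr / 5)) h5
  refine ⟨n₀, fun n hn => ?_⟩
  have hWδ₁ : μ (B \ W) < ENNReal.ofReal δ₁ :=
    hWsmall.trans_le (ENNReal.ofReal_le_ofReal (min_le_left _ _))
  have hWδ₂ : μ (B \ W) < ENNReal.ofReal δ₂ :=
    hWsmall.trans_le (ENNReal.ofReal_le_ofReal (min_le_right _ _))
  have hincl : {x ∈ E | ε ≤ dist (u (T n x)) (u (Tinf x))} ⊆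
      (E \ F) ∪ ({x ∈ E | min r 1 ≤ dist (T n x) (Tinf x)} ∪
        (T n ⁻¹' (B \ W) ∪ (F ∩ Tinf ⁻¹' (B \ W)))) := by
    intro x hx
    by_cases h1 : x ∈ F
    swap
    · exact Or.inl ⟨hx.1, h1⟩
    by_cases h2 : min r 1 ≤ dist (T n x) (Tinf x)
    · exact Or.inr (Or.inl ⟨hx.1, h2⟩)
    push_neg at h2
    by_cases h3 : T n x ∈ B \ W
    · exact Or.inr (Or.inr (Or.inl h3))
    by_cases h4 : Tinf x ∈ B \ W
    · exact Or.inr (Or.inr (Or.inr ⟨h1, h4⟩))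
    exfalso
    have hTinfR : dist (Tinf x) x0 ≤ (R : ℝ) := Metric.mem_closedBall.1 h1.2
    have hTinfB : Tinf x ∈ B := Metric.mem_closedBall.2 (by linarith)
    have hTinfW : Tinf x ∈ W := by
      by_contra h
      exact h4 ⟨hTinfB, h⟩
    have hTnB : T n x ∈ B := by
      have hd : dist (T n x) (Tinf x) < 1 := lt_of_lt_of_le h2 (min_le_right _ _)
      have htri : dist (T n x) x0 ≤ dist (T n x) (Tinf x) + dist (Tinf x) x0 :=
        dist_triangle _ _ _
      exact Metric.mem_closedBall.2 (by linarith)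
    have hTnW : T n x ∈ W := by
      by_contra h
      exact h3 ⟨hTnB, h⟩
    have hlt := hunif _ hTnW _ hTinfW (lt_of_lt_of_le h2 (min_le_left _ _))
    have hge := hx.2
    linarith
  calc μ {x ∈ E | ε ≤ dist (u (T n x)) (u (Tinf x))}
      ≤ μ (E \ F) + (μ {x ∈ E | min r 1 ≤ dist (T n x) (Tinf x)} +
        (μ (T n ⁻¹' (B \ W)) + μ (F ∩ Tinf ⁻¹' (B \ W)))) := by
        refine (measure_mono hincl).trans ?_
        refine (measure_union_le _ _).trans (add_le_add_right ?_ _)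
        refine (measure_union_le _ _).trans (add_le_add_right ?_ _)
        exact measure_union_le _ _
    _ ≤ ENNReal.ofReal (ηr / 5) + (ENNReal.ofReal (ηr / 5) +
        (ENNReal.ofReal (ηr / 5) + ENNReal.ofReal (ηr / 5))) := by
        gcongr
        · have hEF : E \ F = E \ Tinf ⁻¹' Metric.closedBall x0 R := by
            rw [hF, diff_self_inter]
          rw [hEF]
          exact hR.le
        · exact hn₀ n hn
        · exact hδ₁ _ diff_subset (hBmeas.diff hWmeas) hWδ₁ n
        · exact hδ₂ _ diff_subset (hBmeas.diff hWmeas) hWδ₂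
    _ = ENNReal.ofReal (ηr / 5 + (ηr / 5 + (ηr / 5 + ηr / 5))) := by
        rw [ENNReal.ofReal_add (by linarith) (by linarith),
          ENNReal.ofReal_add (by linarith) (by linarith),
          ENNReal.ofReal_add (by linarith) (by linarith)]
    _ ≤ ENNReal.ofReal ηr := ENNReal.ofReal_le_ofReal (by linarith)
    _ ≤ η := hηrle
end
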